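/- arXiv:1712.07867 — 2 statements merged into one kernel-verified Lean document; each statement's English description precedes it below -/
import Mathlib

section
/- Let G be a cyclically 4-edge-connected cubic graph with a cycle-separating 4-edge-cut whose removal leaves components G_1 and G_2. Then for each i ∈ {1,2} there exists a cyclically 4-edge-connected cubic graph H and two adjacent vertices x_1, x_2 of H such that the graph obtained from H by deleting x_1 and x_2 is isomorphic to G_i. -/
open SimpleGraph

/-- Two edges (as unordered pairs) are adjacent: distinct and sharing a vertex. -/
def Sym2Adj {V : Type} (e f : Sym2 V) : Prop := e ≠ f ∧ ∃ v, v ∈ e ∧ v ∈ f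

/-- A graph is cubic if every vertex has exactly 3 neighbours. -/
def IsCubic {V : Type} (G : SimpleGraph V) : Prop := ∀ v, Nat.card (G.neighborSet v) = 3

/-- `G` admits a proper 3-edge-colouring. -/
def Colourable3 {V : Type} (G : SimpleGraph V) : Prop :=
  ∃ c : G.edgeSet → Fin 3, ∀ e f : G.edgeSet, Sym2Adj (e : Sym2 V) (f : Sym2 V) → c e ≠ c f

/-- A snark: a connected cubic graph with no proper 3-edge-colouring. -/
def IsSnark {V : Type} (G : SimpleGraph V) : Prop := G.Connected ∧ IsCubic G ∧ ¬ Colourable3 G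

/-- `S` is a cycle-separating set of edges of `G`: at least two components of `G - S`
contain a cycle. -/
def CycleSeparating {V : Type} (G : SimpleGraph V) (S : Set (Sym2 V)) : Prop :=
  S ⊆ G.edgeSet ∧ ∃ (u v : V) (p : (G.deleteEdges S).Walk u u) (q : (G.deleteEdges S).Walk v v),
    p.IsCycle ∧ q.IsCycle ∧ ¬ (G.deleteEdges S).Reachable u v

/-- `G` is cyclically `k`-edge-connected: no set of fewer than `k` edges is cycle-separating. -/
def CyclicallyEdgeConnected {V : Type} (G : SimpleGraph V) (k : ℕ) : Prop :=
  ∀ S : Set (Sym2 V), Nat.card S < k → ¬ CycleSeparating G S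

/-- The cycle rank `β(G) = |E(G)| - |V(G)| + 1`. -/
noncomputable def cycleRank {V : Type} (G : SimpleGraph V) : ℕ :=
  Nat.card G.edgeSet + 1 - Nat.card V

/-- The cyclic connectivity: the largest `k ≤ β(G)` such that `G` is cyclically
`k`-edge-connected. -/
noncomputable def cyclicConnectivity {V : Type} (G : SimpleGraph V) : ℕ :=
  sSup {k : ℕ | k ≤ cycleRank G ∧ CyclicallyEdgeConnected G k}

/-- `H` is a 2-factor of `G`: a spanning 2-regular subgraph. -/
def IsTwoFactor {V : Type} (G H : SimpleGraph V) : Prop :=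
  H ≤ G ∧ ∀ v, Nat.card (H.neighborSet v) = 2

/-- The number of connected components of `H` with an odd number of vertices. -/
noncomputable def oddComponents {V : Type} (H : SimpleGraph V) : ℕ :=
  Nat.card {c : H.ConnectedComponent // Odd (Nat.card c.supp)}

/-- The oddness of `G`: the minimum number of odd components over all 2-factors of `G`. -/
noncomputable def oddness {V : Type} (G : SimpleGraph V) : ℕ :=
  sInf {m : ℕ | ∃ H, IsTwoFactor G H ∧ _root_.oddComponents H = m}

/-- The set of edges of `G` with exactly one endpoint in `A`. -/
def edgeBoundary {V : Type} (G : SimpleGraph V) (A : Set V) : Set (Sym2 V) :=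
  {e | e ∈ G.edgeSet ∧ ∃ u v, e = s(u, v) ∧ u ∈ A ∧ v ∉ A}

/-- A graph is bridgeless if no edge is a bridge. -/
def Bridgeless {V : Type} (G : SimpleGraph V) : Prop := ∀ e, ¬ G.IsBridge e

/-- The resistance of `G`: the minimum number of edges to delete to obtain a
3-edge-colourable graph. -/
noncomputable def resistance {V : Type} (G : SimpleGraph V) : ℕ :=
  sInf {n : ℕ | ∃ F : Set (Sym2 V), F ⊆ G.edgeSet ∧ Nat.card F = n ∧
    Colourable3 (G.deleteEdges F)}

namespace Stmt15

variable {V : Type}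

lemma reach_support {Γ : SimpleGraph V} {x y : V} (W : Γ.Walk x y) :
    ∀ z ∈ W.support, Γ.Reachable x z := by
  induction W with
  | nil =>
    intro z hz
    rw [SimpleGraph.Walk.support_nil] at hz
    simp only [List.mem_singleton] at hz
    subst hz; rfl
  | cons h p ih =>
    intro z hz
    rw [SimpleGraph.Walk.support_cons] at hz
    rcases List.mem_cons.mp hz with h1 | h2
    · subst h1; rfl
    · exact (h.reachable).trans (ih z h2)

lemma parity_lemma {Γ : SimpleGraph V} (χ : V → Prop) (m : Sym2 V)
    (hm : ∀ z w : V, s(z, w) = m → ¬ (χ z ↔ χ w)) :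
    ∀ {x y : V} (W : Γ.Walk x y), W.edges.Nodup →
      (∀ d ∈ W.darts, (χ d.toProd.1 ↔ χ d.toProd.2) ∨ d.edge = m) →
      (m ∈ W.edges ↔ ¬ (χ x ↔ χ y)) := by
  intro x y W
  induction W with
  | nil =>
    intro _ _
    simp
  | @cons x y' y h p ih =>
    intro hnd hch
    rw [SimpleGraph.Walk.edges_cons] at hnd ⊢
    have hd : (⟨(x, y'), h⟩ : Γ.Dart) ∈ (SimpleGraph.Walk.cons h p).darts := by
      rw [SimpleGraph.Walk.darts_cons]; exact List.mem_cons_self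
    have hhead := hch _ hd
    have hnd' : p.edges.Nodup := (List.nodup_cons.mp hnd).2
    have hch' : ∀ d ∈ p.darts, (χ d.toProd.1 ↔ χ d.toProd.2) ∨ d.edge = m := by
      intro d hd'
      exact hch d (by rw [SimpleGraph.Walk.darts_cons]; exact List.mem_cons_of_mem _ hd')
    have IH := ih hnd' hch'
    by_cases hcase : s(x, y') = m
    · have hxy' := hm x y' hcase
      have hmnot : m ∉ p.edges := by
        intro hmem
        rw [hcase] at hnd
        exact (List.nodup_cons.mp hnd).1 hmem
      have hyy : χ y' ↔ χ y := by
        by_contra hc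
        exact hmnot (IH.mpr hc)
      constructor
      · intro _ hc
        exact hxy' (hc.trans hyy.symm)
      · intro _
        rw [hcase]
        exact List.mem_cons_self
    · have hx : χ x ↔ χ y' := by
        rcases hhead with h1 | h2
        · exact h1
        · exact absurd h2.symm (fun hh => hcase hh.symm)
      constructor
      · intro hmem
        rcases List.mem_cons.mp hmem with h1 | h2
        · exact absurd h1.symm hcase
        · intro hc
          exact (IH.mp h2) (hx.symm.trans hc)
      · intro hc
        have : ¬ (χ y' ↔ χ y) := fun hyy => hc (hx.trans hyy)
        exact List.mem_cons_of_mem _ (IH.mpr this)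

end Stmt15






namespace Stmt15

variable {V : Type}

lemma cycle_split_at_start {Γ : SimpleGraph V} {x : V} (c : Γ.Walk x x) (hc : c.IsCycle) :
    ∃ (y z : V) (w : Γ.Walk y z), y ≠ z ∧ Γ.Adj x y ∧ Γ.Adj x z ∧ x ∉ w.support ∧
      ∀ a ∈ w.support, a ∈ c.support := by
  cases c with
  | nil => exact absurd rfl hc.ne_nil
  | @cons _ y' _ h p =>
    have hlen : 3 ≤ p.length + 1 := by
      have := hc.three_le_length
      rwa [SimpleGraph.Walk.length_cons] at this
    have hrevnotnil : ¬ p.reverse.Nil := by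
      rw [SimpleGraph.Walk.nil_iff_length_eq, SimpleGraph.Walk.length_reverse]
      omega
    obtain ⟨z, h2, w2, hw2⟩ := SimpleGraph.Walk.not_nil_iff.mp hrevnotnil
    have hpsupnd : p.support.Nodup := by
      have := hc.support_nodup
      rwa [SimpleGraph.Walk.support_cons] at this
    have hrevsup : p.support.reverse = x :: w2.support := by
      rw [← SimpleGraph.Walk.support_reverse, hw2, SimpleGraph.Walk.support_cons]
    have hxw2 : x ∉ w2.support := by
      have : (x :: w2.support).Nodup := by
        rw [← hrevsup]; exact (List.nodup_reverse.mpr hpsupnd)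
      exact (List.nodup_cons.mp this).1
    have hsub : ∀ a ∈ w2.support, a ∈ (SimpleGraph.Walk.cons h p).support := by
      intro a ha
      rw [SimpleGraph.Walk.support_cons]
      have : a ∈ p.support.reverse := by rw [hrevsup]; exact List.mem_cons_of_mem _ ha
      exact List.mem_cons_of_mem _ (List.mem_reverse.mp this)
    have hxz : s(x, z) ∈ p.edges := by
      have : p.reverse.edges = s(x, z) :: w2.edges := by
        rw [hw2, SimpleGraph.Walk.edges_cons]
      have hmem : s(x, z) ∈ p.reverse.edges := by rw [this]; exact List.mem_cons_self
      rw [SimpleGraph.Walk.edges_reverse] at hmem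
      exact List.mem_reverse.mp hmem
    have hyz : y' ≠ z := by
      intro heq
      subst heq
      have hnd := hc.isCircuit.isTrail.edges_nodup
      rw [SimpleGraph.Walk.edges_cons] at hnd
      exact (List.nodup_cons.mp hnd).1 hxz
    refine ⟨y', z, w2.reverse, hyz, h, h2, ?_, ?_⟩
    · rw [SimpleGraph.Walk.support_reverse]
      intro hx'
      exact hxw2 (List.mem_reverse.mp hx')
    · intro a ha
      rw [SimpleGraph.Walk.support_reverse] at ha
      exact hsub a (List.mem_reverse.mp ha)

lemma cycle_split {Γ : SimpleGraph V} [DecidableEq V] {x₀ x : V} (r : Γ.Walk x₀ x₀)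
    (hr : r.IsCycle) (hx : x ∈ r.support) :
    ∃ (y z : V) (w : Γ.Walk y z), y ≠ z ∧ Γ.Adj x y ∧ Γ.Adj x z ∧ x ∉ w.support ∧
      ∀ a ∈ w.support, a ∈ r.support := by
  obtain ⟨y, z, w, hyz, hxy, hxz, hxw, hsub⟩ := cycle_split_at_start (r.rotate x hx) (hr.rotate hx)
  refine ⟨y, z, w, hyz, hxy, hxz, hxw, ?_⟩
  intro a ha
  have hmem := hsub a ha
  rw [SimpleGraph.Walk.support_eq_cons (r.rotate x hx)] at hmem
  rcases List.mem_cons.mp hmem with h1 | h2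
  · subst h1; exact hx
  · have hrot := SimpleGraph.Walk.support_rotate r x hx
    have : a ∈ r.support.tail := hrot.mem_iff.mp h2
    rw [SimpleGraph.Walk.support_eq_cons r]
    exact List.mem_cons_of_mem _ this

lemma mem_eb_of_adj {G : SimpleGraph V} {C : Set V} {x y : V} (h : G.Adj x y)
    (hx : x ∈ C) (hy : y ∉ C) : s(x, y) ∈ edgeBoundary G C :=
  ⟨(SimpleGraph.mem_edgeSet G).mpr h, x, y, rfl, hx, hy⟩

lemma not_mem_eb_of_both {G : SimpleGraph V} {C : Set V} {x y : V}
    (hx : x ∈ C) (hy : y ∈ C) : s(x, y) ∉ edgeBoundary G C := by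
  rintro ⟨-, u, v, huv, hu, hv⟩
  rcases Sym2.eq_iff.mp huv with ⟨rfl, rfl⟩ | ⟨rfl, rfl⟩
  · exact hv hy
  · exact hv hx

lemma not_mem_eb_of_both_out {G : SimpleGraph V} {C : Set V} {x y : V}
    (hx : x ∉ C) (hy : y ∉ C) : s(x, y) ∉ edgeBoundary G C := by
  rintro ⟨-, u, v, huv, hu, hv⟩
  rcases Sym2.eq_iff.mp huv with ⟨rfl, rfl⟩ | ⟨rfl, rfl⟩
  · exact hx hu
  · exact hy hu

lemma boundary_ge_four [Fintype V] {G : SimpleGraph V} (h4 : CyclicallyEdgeConnected G 4)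
    {Γ₁ Γ₂ : SimpleGraph V} (h1 : Γ₁ ≤ G) (h2 : Γ₂ ≤ G) {C : Set V}
    {z v : V} (r : Γ₁.Walk z z) (hr : r.IsCycle) (hrC : ∀ a ∈ r.support, a ∈ C)
    (q : Γ₂.Walk v v) (hq : q.IsCycle) (hqC : ∀ a ∈ q.support, a ∉ C) :
    4 ≤ (edgeBoundary G C).ncard := by
  by_contra hlt
  push_neg at hlt
  refine h4 (edgeBoundary G C) ?_ ?_
  · rwa [Nat.card_coe_set_eq]
  · have hr' : ∀ e ∈ r.edges, e ∈ (G.deleteEdges (edgeBoundary G C)).edgeSet := by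
      intro e he
      induction e using Sym2.ind with
      | _ a b =>
        rw [SimpleGraph.edgeSet_deleteEdges]
        constructor
        · exact (SimpleGraph.edgeSet_mono h1) (r.edges_subset_edgeSet he)
        · exact not_mem_eb_of_both (hrC a (r.fst_mem_support_of_mem_edges he))
            (hrC b (r.snd_mem_support_of_mem_edges he))
    have hq' : ∀ e ∈ q.edges, e ∈ (G.deleteEdges (edgeBoundary G C)).edgeSet := by
      intro e he
      induction e using Sym2.ind with
      | _ a b =>
        rw [SimpleGraph.edgeSet_deleteEdges]
        constructor
        · exact (SimpleGraph.edgeSet_mono h2) (q.edges_subset_edgeSet he)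
        · exact not_mem_eb_of_both_out (hqC a (q.fst_mem_support_of_mem_edges he))
            (hqC b (q.snd_mem_support_of_mem_edges he))
    refine ⟨fun e he => he.1, z, v, r.transfer _ hr', q.transfer _ hq',
      hr.transfer hr', hq.transfer hq', ?_⟩
    rintro ⟨Wzv⟩
    obtain ⟨d, hd, hd1, hd2⟩ := Wzv.exists_boundary_dart C
      (hrC z r.start_mem_support) (hqC v q.start_mem_support)
    have hadj := d.adj
    rw [SimpleGraph.deleteEdges_adj] at hadj
    exact hadj.2 (mem_eb_of_adj hadj.1 hd1 hd2)

end Stmt15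



namespace Stmt15

variable {V : Type}

/-- add two adjacent vertices `x₁ = inr true`, `x₂ = inr false` joined to `p,q` resp `r,s`. -/
def buildH (G' : SimpleGraph V) (A : Set V) (p q r s : V) :
    SimpleGraph ({z : V // z ∈ A} ⊕ Bool) where
  Adj w₁ w₂ := match w₁, w₂ with
    | Sum.inl a, Sum.inl b => G'.Adj a.val b.val
    | Sum.inl a, Sum.inr t => if t then a.val = p ∨ a.val = q else a.val = r ∨ a.val = s
    | Sum.inr t, Sum.inl a => if t then a.val = p ∨ a.val = q else a.val = r ∨ a.val = s
    | Sum.inr t, Sum.inr t' => t ≠ t'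
  symm := ⟨by
    rintro (a | t) (b | t') h
    · exact h.symm
    · exact h
    · exact h
    · exact Ne.symm h⟩
  loopless := ⟨by
    rintro (a | t) h
    · exact G'.loopless.irrefl _ h
    · exact h rfl⟩

lemma buildH_adj_inl_inl {G' : SimpleGraph V} {A : Set V} {p q r s : V}
    {a b : {z : V // z ∈ A}} :
    (buildH G' A p q r s).Adj (Sum.inl a) (Sum.inl b) ↔ G'.Adj a.val b.val := Iff.rfl

lemma buildH_adj_inl_inr {G' : SimpleGraph V} {A : Set V} {p q r s : V}
    {a : {z : V // z ∈ A}} {t : Bool} :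
    (buildH G' A p q r s).Adj (Sum.inl a) (Sum.inr t) ↔
      (if t then a.val = p ∨ a.val = q else a.val = r ∨ a.val = s) := Iff.rfl

lemma buildH_adj_inr_inl {G' : SimpleGraph V} {A : Set V} {p q r s : V}
    {a : {z : V // z ∈ A}} {t : Bool} :
    (buildH G' A p q r s).Adj (Sum.inr t) (Sum.inl a) ↔
      (if t then a.val = p ∨ a.val = q else a.val = r ∨ a.val = s) := Iff.rfl

lemma buildH_adj_inr_inr {G' : SimpleGraph V} {A : Set V} {p q r s : V} {t t' : Bool} :
    (buildH G' A p q r s).Adj (Sum.inr t) (Sum.inr t') ↔ t ≠ t' := Iff.rfl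

section proj

variable {G' : SimpleGraph V} {A : Set V} {p q r s : V} (v₀ : V)

/-- total projection map -/
def ρ (v₀ : V) : ({z : V // z ∈ A} ⊕ Bool) → V := Sum.elim Subtype.val (fun _ => v₀)

lemma proj_walk {w₁ w₂ : {z : V // z ∈ A} ⊕ Bool}
    (W : (buildH G' A p q r s).Walk w₁ w₂)
    (hfree : ∀ z ∈ W.support, z.isLeft) :
    ∀ {x y : {z : V // z ∈ A}}, w₁ = Sum.inl x → w₂ = Sum.inl y →
    ∃ W' : G'.Walk x.val y.val,
      W'.support = W.support.map (ρ (A := A) v₀) ∧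
      W'.edges = W.edges.map (Sym2.map (ρ (A := A) v₀)) := by
  induction W with
  | nil =>
    intro x y h₁ h₂
    have hxy : x = y := by
      rw [h₁] at h₂; exact Sum.inl.inj h₂
    subst hxy
    subst h₁
    exact ⟨SimpleGraph.Walk.nil, by simp [ρ], by simp⟩
  | @cons u v w h W₂ ih =>
    intro x y h₁ h₂
    subst h₁
    have hv : v.isLeft := by
      apply hfree
      rw [SimpleGraph.Walk.support_cons]
      exact List.mem_cons_of_mem _ W₂.start_mem_support
    obtain ⟨xv, hxv⟩ := Sum.isLeft_iff.mp hv
    subst hxv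
    have hfree' : ∀ z ∈ W₂.support, z.isLeft := by
      intro z hz
      apply hfree
      rw [SimpleGraph.Walk.support_cons]
      exact List.mem_cons_of_mem _ hz
    obtain ⟨W₂', hsup, hedg⟩ := ih hfree' rfl h₂
    have hadj : G'.Adj x.val xv.val := buildH_adj_inl_inl.mp h
    refine ⟨SimpleGraph.Walk.cons hadj W₂', ?_, ?_⟩
    · rw [SimpleGraph.Walk.support_cons, SimpleGraph.Walk.support_cons]
      simp [ρ, hsup]
    · rw [SimpleGraph.Walk.edges_cons, SimpleGraph.Walk.edges_cons]
      simp [ρ, hedg]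

lemma proj_cycle {x : {z : V // z ∈ A}}
    (W : (buildH G' A p q r s).Walk (Sum.inl x) (Sum.inl x)) (hW : W.IsCycle)
    (hfree : ∀ z ∈ W.support, z.isLeft) :
    ∃ W' : G'.Walk x.val x.val, W'.IsCycle ∧
      W'.support = W.support.map (ρ (A := A) v₀) ∧
      W'.edges = W.edges.map (Sym2.map (ρ (A := A) v₀)) := by
  obtain ⟨W', hsup, hedg⟩ := proj_walk v₀ W hfree rfl rfl
  have hinj : ∀ z ∈ W.support, ∀ w ∈ W.support, ρ (A := A) v₀ z = ρ (A := A) v₀ w → z = w := by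
    intro z hz w hw hzw
    obtain ⟨z', hz'⟩ := Sum.isLeft_iff.mp (hfree z hz)
    obtain ⟨w', hw'⟩ := Sum.isLeft_iff.mp (hfree w hw)
    subst hz'; subst hw'
    simp only [ρ, Sum.elim_inl] at hzw
    exact congrArg Sum.inl (Subtype.ext hzw)
  refine ⟨W', ?_, hsup, hedg⟩
  have hsupnd : W'.support.tail.Nodup := by
    rw [hsup, ← List.map_tail]
    apply List.Nodup.map_on _ hW.support_nodup
    intro z hz w hw hzw
    exact hinj z (List.mem_of_mem_tail hz) w (List.mem_of_mem_tail hw) hzw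
  have hednd : W'.edges.Nodup := by
    rw [hedg]
    apply List.Nodup.map_on _ hW.isCircuit.isTrail.edges_nodup
    intro e₁ he₁ e₂ he₂ heq
    induction e₁ using Sym2.ind with
    | _ a₁ b₁ =>
      induction e₂ using Sym2.ind with
      | _ a₂ b₂ =>
        rw [Sym2.map_pair_eq, Sym2.map_pair_eq] at heq
        have ha₁ := W.fst_mem_support_of_mem_edges he₁
        have hb₁ := W.snd_mem_support_of_mem_edges he₁
        have ha₂ := W.fst_mem_support_of_mem_edges he₂
        have hb₂ := W.snd_mem_support_of_mem_edges he₂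
        rcases Sym2.eq_iff.mp heq with ⟨e1, e2⟩ | ⟨e1, e2⟩
        · rw [hinj a₁ ha₁ a₂ ha₂ e1, hinj b₁ hb₁ b₂ hb₂ e2]
        · rw [hinj a₁ ha₁ b₂ hb₂ e1, hinj b₁ hb₁ a₂ ha₂ e2, Sym2.eq_swap]
  have hlen : W'.length = W.length := by
    have h1 := W'.length_support
    have h2 := W.length_support
    rw [hsup, List.length_map] at h1
    omega
  have hnenil : W' ≠ SimpleGraph.Walk.nil := by
    intro hn
    have : W'.length = 0 := by rw [hn]; rfl
    rw [hlen] at this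
    exact hW.ne_nil (SimpleGraph.Walk.nil_iff_eq_nil.mp (SimpleGraph.Walk.length_eq_zero_iff.mp this))
  exact ⟨⟨⟨hednd⟩, hnenil⟩, hsupnd⟩

end proj

section lift

variable {G' : SimpleGraph V} {A : Set V} {p q r s : V}

lemma lift_walk {x y : V} (W : G'.Walk x y) (hA : ∀ z ∈ W.support, z ∈ A) :
    ∀ (hx : x ∈ A) (hy : y ∈ A),
    ∃ W' : (buildH G' A p q r s).Walk (Sum.inl ⟨x, hx⟩) (Sum.inl ⟨y, hy⟩),
      ∀ E ∈ W'.edges, ∃ aa bb : {z : V // z ∈ A},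
        E = s(Sum.inl aa, Sum.inl bb) ∧ s(aa.val, bb.val) ∈ W.edges := by
  induction W with
  | nil =>
    intro hx hy
    exact ⟨SimpleGraph.Walk.nil, by simp⟩
  | @cons u v w h W₂ ih =>
    intro hx hy
    have hv : v ∈ A := by
      apply hA v
      rw [SimpleGraph.Walk.support_cons]
      exact List.mem_cons_of_mem _ W₂.start_mem_support
    have hA' : ∀ z ∈ W₂.support, z ∈ A := by
      intro z hz
      apply hA z
      rw [SimpleGraph.Walk.support_cons]
      exact List.mem_cons_of_mem _ hz
    obtain ⟨W₂', hspec⟩ := ih hA' hv hy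
    refine ⟨SimpleGraph.Walk.cons (buildH_adj_inl_inl.mpr h) W₂', ?_⟩
    intro E hE
    rw [SimpleGraph.Walk.edges_cons] at hE
    rcases List.mem_cons.mp hE with h1 | h2
    · refine ⟨⟨u, hx⟩, ⟨v, hv⟩, h1, ?_⟩
      rw [SimpleGraph.Walk.edges_cons]
      exact List.mem_cons_self
    · obtain ⟨aa, bb, hEab, hmem⟩ := hspec E h2
      refine ⟨aa, bb, hEab, ?_⟩
      rw [SimpleGraph.Walk.edges_cons]
      exact List.mem_cons_of_mem _ hmem

end lift

end Stmt15

namespace Stmt15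

structure Setup (V : Type) [Fintype V] where
  G : SimpleGraph V
  S : Set (Sym2 V)
  u : V
  v : V
  p : (G.deleteEdges S).Walk u u
  q : (G.deleteEdges S).Walk v v
  hconn : G.Connected
  hcubic : ∀ w, Nat.card (G.neighborSet w) = 3
  h4 : CyclicallyEdgeConnected G 4
  hSsub : S ⊆ G.edgeSet
  hp : p.IsCycle
  hq : q.IsCycle
  hnr : ¬ (G.deleteEdges S).Reachable u v
  hScard : S.ncard = 4

namespace Setup

variable {V : Type} [Fintype V] (D : Setup V)

def G' : SimpleGraph V := D.G.deleteEdges D.S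

def A : Set V := {z | D.G'.Reachable D.u z}

def B : Set V := {z | D.G'.Reachable D.v z}

def mirror : Setup V :=
  ⟨D.G, D.S, D.v, D.u, D.q, D.p, D.hconn, D.hcubic, D.h4, D.hSsub, D.hq, D.hp,
    fun h => D.hnr h.symm, D.hScard⟩

lemma mirror_G' : D.mirror.G' = D.G' := rfl
lemma mirror_A : D.mirror.A = D.B := rfl
lemma mirror_B : D.mirror.B = D.A := rfl

lemma G'_le : D.G' ≤ D.G := SimpleGraph.deleteEdges_le _

lemma uA : D.u ∈ D.A := SimpleGraph.Reachable.refl _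
lemma vB : D.v ∈ D.B := SimpleGraph.Reachable.refl _

lemma AB : ∀ z ∈ D.A, z ∉ D.B := by
  intro z hz hz'
  exact D.hnr (SimpleGraph.Reachable.trans hz (SimpleGraph.Reachable.symm hz'))

lemma BA : ∀ z ∈ D.B, z ∉ D.A := fun z hz hz' => D.AB z hz' hz

lemma Aclosed {z w : V} (h : D.G'.Adj z w) (hz : z ∈ D.A) : w ∈ D.A :=
  SimpleGraph.Reachable.trans hz h.reachable

lemma Bclosed {z w : V} (h : D.G'.Adj z w) (hz : z ∈ D.B) : w ∈ D.B :=
  SimpleGraph.Reachable.trans hz h.reachable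

lemma reach_mem_A {x z : V} (hx : x ∈ D.A) (h : D.G'.Reachable x z) : z ∈ D.A :=
  SimpleGraph.Reachable.trans hx h

lemma pA : ∀ z ∈ D.p.support, z ∈ D.A := reach_support D.p

lemma qB : ∀ z ∈ D.q.support, z ∈ D.B := reach_support D.q

lemma qnotA : ∀ z ∈ D.q.support, z ∉ D.A := fun z hz => D.BA z (D.qB z hz)

lemma ebA_sub : edgeBoundary D.G D.A ⊆ D.S := by
  rintro E ⟨hE, x, y, rfl, hx, hy⟩
  by_contra hES
  have : D.G'.Adj x y := by
    rw [Setup.G', SimpleGraph.deleteEdges_adj]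
    exact ⟨(SimpleGraph.mem_edgeSet D.G).mp hE, hES⟩
  exact hy (D.Aclosed this hx)

lemma ebA_eq : edgeBoundary D.G D.A = D.S := by
  apply Set.eq_of_subset_of_ncard_le (D.ebA_sub) _ (Set.toFinite _)
  have h4' : 4 ≤ (edgeBoundary D.G D.A).ncard := by
    apply boundary_ge_four D.h4 D.G'_le D.G'_le D.p D.hp D.pA D.q D.hq D.qnotA
  rw [D.hScard]
  exact h4'

lemma ebB_eq : edgeBoundary D.G D.B = D.S := D.mirror.ebA_eq

lemma mem_S_rep : ∀ E ∈ D.S, ∃ x y, E = s(x, y) ∧ x ∈ D.A ∧ y ∈ D.B := by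
  intro E hE
  have h1 : E ∈ edgeBoundary D.G D.A := by rw [D.ebA_eq]; exact hE
  have h2 : E ∈ edgeBoundary D.G D.B := by rw [D.ebB_eq]; exact hE
  obtain ⟨-, x, y, rfl, hx, hy⟩ := h1
  obtain ⟨-, x', y', heq, hx', hy'⟩ := h2
  rcases Sym2.eq_iff.mp heq with ⟨rfl, rfl⟩ | ⟨h1', h2'⟩
  · exact absurd hx' (D.AB x hx)
  · subst h1'; subst h2'
    exact ⟨x, y, rfl, hx, hx'⟩

lemma cover : ∀ z, z ∈ D.A ∨ z ∈ D.B := by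
  intro z
  by_contra hcon
  push_neg at hcon
  obtain ⟨hzA, hzB⟩ := hcon
  obtain ⟨Wzu⟩ := D.hconn.preconnected z D.u
  obtain ⟨d, hd, hd1, hd2⟩ := Wzu.exists_boundary_dart {w | w ∉ D.A ∧ w ∉ D.B}
    ⟨hzA, hzB⟩ (by simp only [Set.mem_setOf_eq, not_and, not_not]; intro h; exact absurd D.uA h)
  have hadj := d.adj
  set x := d.toProd.1
  set y := d.toProd.2
  by_cases hES : s(x, y) ∈ D.S
  · obtain ⟨x', y', heq, hx', hy'⟩ := D.mem_S_rep _ hES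
    rcases Sym2.eq_iff.mp heq with ⟨rfl, rfl⟩ | ⟨rfl, rfl⟩
    · exact hd1.1 hx'
    · exact hd1.2 hy'
  · have hadj' : D.G'.Adj x y := by
      rw [Setup.G', SimpleGraph.deleteEdges_adj]
      exact ⟨hadj, hES⟩
    simp only [Set.mem_setOf_eq, not_and, not_not] at hd2
    by_cases hy2 : y ∈ D.A
    · exact hd1.1 (D.Aclosed hadj'.symm hy2)
    · exact hd1.2 (D.Bclosed hadj'.symm (hd2 hy2))

lemma endpoints_distinct : ∀ E₁ ∈ D.S, ∀ E₂ ∈ D.S, E₁ ≠ E₂ →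
    ∀ x₁ y₁ x₂ y₂ : V, E₁ = s(x₁, y₁) → E₂ = s(x₂, y₂) →
    x₁ ∈ D.A → x₂ ∈ D.A → y₁ ∉ D.A → y₂ ∉ D.A → x₁ ≠ x₂ := by
  classical
  intro E₁ hE₁ E₂ hE₂ hne x₁ y₁ x₂ y₂ hr₁ hr₂ hx₁ hx₂ hy₁ hy₂
  intro heq
  subst heq
  set w := x₁
  have hyy : y₁ ≠ y₂ := by
    intro h; subst h; rw [hr₁, ← hr₂] at hne; exact hne rfl
  have hy₁adj : y₁ ∈ D.G.neighborSet w := by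
    have := D.hSsub hE₁
    rw [hr₁, SimpleGraph.mem_edgeSet] at this
    exact this
  have hy₂adj : y₂ ∈ D.G.neighborSet w := by
    have := D.hSsub hE₂
    rw [hr₂, SimpleGraph.mem_edgeSet] at this
    exact this
  have hnbrsub : D.G'.neighborSet w ⊆ D.G.neighborSet w \ {y₁, y₂} := by
    intro z hz
    have hz' : D.G'.Adj w z := hz
    rw [Setup.G', SimpleGraph.deleteEdges_adj] at hz'
    refine ⟨hz'.1, ?_⟩
    intro hzin
    rcases hzin with rfl | rfl
    · rw [← hr₁] at hz'; exact hz'.2 hE₁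
    · rw [← hr₂] at hz'; exact hz'.2 hE₂
  have hnbr1 : (D.G'.neighborSet w).ncard ≤ 1 := by
    have h1 : ({y₁, y₂} : Set V) ⊆ D.G.neighborSet w := by
      rintro z (rfl | rfl) <;> assumption
    have h2 : (D.G.neighborSet w \ {y₁, y₂}).ncard = 1 := by
      rw [Set.ncard_diff h1 (Set.toFinite _), Set.ncard_pair hyy]
      have := D.hcubic w
      rw [Nat.card_coe_set_eq] at this
      rw [this]
    calc (D.G'.neighborSet w).ncard ≤ _ := Set.ncard_le_ncard hnbrsub (Set.toFinite _)
    _ = 1 := h2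
  have hwp : w ∉ D.p.support := by
    intro hwp
    obtain ⟨y, z, _, hyz, hwy, hwz, _, _⟩ := cycle_split D.p D.hp hwp
    have : ({y, z} : Set V) ⊆ D.G'.neighborSet w := by
      rintro a (rfl | rfl) <;> assumption
    have h2 := Set.ncard_le_ncard this (Set.toFinite _)
    rw [Set.ncard_pair hyz] at h2
    omega
  have hge := boundary_ge_four D.h4 D.G'_le D.G'_le D.p D.hp
    (C := D.A \ {w}) (fun a ha => ⟨D.pA a ha, fun h => hwp (h ▸ ha)⟩)
    D.q D.hq (fun a ha h => D.qnotA a ha h.1)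
  have hsub : edgeBoundary D.G (D.A \ {w}) ⊆
      (D.S \ {E₁, E₂}) ∪ ((fun z => s(z, w)) '' (D.G'.neighborSet w)) := by
    rintro E ⟨hEg, x, y, rfl, hx, hy⟩
    by_cases hES : s(x, y) ∈ D.S
    · left
      refine ⟨hES, ?_⟩
      rintro (rfl | rfl)
      · rcases Sym2.eq_iff.mp hr₁ with ⟨h1, h2⟩ | ⟨h1, h2⟩
        · exact hx.2 (Set.mem_singleton_iff.mpr h1)
        · exact hy₁ (h1 ▸ hx.1)
      · rcases Sym2.eq_iff.mp hr₂ with ⟨h1, h2⟩ | ⟨h1, h2⟩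
        · exact hx.2 (Set.mem_singleton_iff.mpr h1)
        · exact hy₂ (h1 ▸ hx.1)
    · right
      have hadj' : D.G'.Adj x y := by
        rw [Setup.G', SimpleGraph.deleteEdges_adj]
        exact ⟨(SimpleGraph.mem_edgeSet D.G).mp hEg, hES⟩
      have hyA : y ∈ D.A := D.Aclosed hadj' hx.1
      have hyw : y = w := by
        by_contra hyw
        exact hy ⟨hyA, hyw⟩
      subst hyw
      exact ⟨x, hadj'.symm, rfl⟩
  have hle : (edgeBoundary D.G (D.A \ {w})).ncard ≤ 3 := by
    calc (edgeBoundary D.G (D.A \ {w})).ncard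
        ≤ _ := Set.ncard_le_ncard hsub (Set.toFinite _)
      _ ≤ (D.S \ {E₁, E₂}).ncard + (((fun z => s(z, w)) '' (D.G'.neighborSet w))).ncard :=
          Set.ncard_union_le _ _
      _ ≤ 3 := by
        have h1 : (D.S \ {E₁, E₂}).ncard = 2 := by
          rw [Set.ncard_diff (by rintro z (rfl | rfl) <;> assumption) (Set.toFinite _),
            Set.ncard_pair hne, D.hScard]
        have h2 := Set.ncard_image_le (s := D.G'.neighborSet w)
          (f := fun z => s(z, w)) (Set.toFinite _)
        omega
  omega

end Setup

end Stmt15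

namespace Stmt15

def vec4 {α : Type _} (x y z w : α) : Fin 4 → α
  | ⟨0, _⟩ => x
  | ⟨1, _⟩ => y
  | ⟨2, _⟩ => z
  | ⟨3, _⟩ => w

structure Enum {V : Type} [Fintype V] (D : Setup V) where
  e : Fin 4 → Sym2 V
  a : Fin 4 → V
  b : Fin 4 → V
  he : Function.Injective e
  hrange : D.S = Set.range e
  hedge : ∀ i, e i = s(a i, b i)
  ha : ∀ i, a i ∈ D.A
  hb : ∀ i, b i ∈ D.B
  hainj : Function.Injective a
  hbinj : Function.Injective b

variable {V : Type} [Fintype V] (D : Setup V)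

lemma exists_enum : Nonempty (Enum D) := by
  classical
  have h0 : D.S.ncard = 3 + 1 := D.hScard
  obtain ⟨E1, t1, hn1, heq1, hc1⟩ := (Set.ncard_eq_succ (Set.toFinite _)).mp h0
  have hc1' : t1.ncard = 2 + 1 := hc1
  obtain ⟨E2, t2, hn2, heq2, hc2⟩ := (Set.ncard_eq_succ (Set.toFinite _)).mp hc1'
  have hc2' : t2.ncard = 1 + 1 := hc2
  obtain ⟨E3, t3, hn3, heq3, hc3⟩ := (Set.ncard_eq_succ (Set.toFinite _)).mp hc2'
  obtain ⟨E4, hE4⟩ := Set.ncard_eq_one.mp hc3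
  subst hE4
  have hSfour : D.S = {E1, E2, E3, E4} := by
    rw [← heq1, ← heq2, ← heq3]
  have hd34 : E3 ≠ E4 := by
    intro h; subst h; exact hn3 rfl
  have hd23 : E2 ≠ E3 := by
    intro h; subst h; apply hn2; rw [← heq3]; exact Set.mem_insert _ _
  have hd24 : E2 ≠ E4 := by
    intro h; subst h; apply hn2; rw [← heq3]; exact Set.mem_insert_of_mem _ rfl
  have hd12 : E1 ≠ E2 := by
    intro h; subst h; apply hn1; rw [← heq2]; exact Set.mem_insert _ _
  have hd13 : E1 ≠ E3 := by
    intro h; subst h; apply hn1; rw [← heq2, ← heq3]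
    exact Set.mem_insert_of_mem _ (Set.mem_insert _ _)
  have hd14 : E1 ≠ E4 := by
    intro h; subst h; apply hn1; rw [← heq2, ← heq3]
    exact Set.mem_insert_of_mem _ (Set.mem_insert_of_mem _ rfl)
  have hmem : ∀ i : Fin 4, vec4 E1 E2 E3 E4 i ∈ D.S := by
    intro i
    rw [hSfour]
    fin_cases i
    · exact Set.mem_insert _ _
    · exact Set.mem_insert_of_mem _ (Set.mem_insert _ _)
    · exact Set.mem_insert_of_mem _ (Set.mem_insert_of_mem _ (Set.mem_insert _ _))
    · exact Set.mem_insert_of_mem _ (Set.mem_insert_of_mem _ (Set.mem_insert_of_mem _ rfl))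
  obtain ⟨a1, b1, he1, ha1, hb1⟩ := D.mem_S_rep E1 (hmem 0)
  obtain ⟨a2, b2, he2, ha2, hb2⟩ := D.mem_S_rep E2 (hmem 1)
  obtain ⟨a3, b3, he3, ha3, hb3⟩ := D.mem_S_rep E3 (hmem 2)
  obtain ⟨a4, b4, he4, ha4, hb4⟩ := D.mem_S_rep E4 (hmem 3)
  have heinj : Function.Injective (vec4 E1 E2 E3 E4) := by
    intro i j hij
    fin_cases i <;> fin_cases j <;>
      first
        | rfl
        | exact absurd hij (by assumption)
        | exact absurd hij.symm (by assumption)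
  have hedge : ∀ i : Fin 4, vec4 E1 E2 E3 E4 i =
      s(vec4 a1 a2 a3 a4 i, vec4 b1 b2 b3 b4 i) := by
    intro i
    fin_cases i
    exacts [he1, he2, he3, he4]
  have ha : ∀ i : Fin 4, vec4 a1 a2 a3 a4 i ∈ D.A := by
    intro i; fin_cases i
    exacts [ha1, ha2, ha3, ha4]
  have hb : ∀ i : Fin 4, vec4 b1 b2 b3 b4 i ∈ D.B := by
    intro i; fin_cases i
    exacts [hb1, hb2, hb3, hb4]
  have hrange : D.S = Set.range (vec4 E1 E2 E3 E4) := by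
    ext E
    constructor
    · intro hE
      rw [hSfour] at hE
      rcases hE with rfl | rfl | rfl | rfl
      exacts [⟨0, rfl⟩, ⟨1, rfl⟩, ⟨2, rfl⟩, ⟨3, rfl⟩]
    · rintro ⟨i, rfl⟩
      exact hmem i
  have hainj : Function.Injective (vec4 a1 a2 a3 a4) := by
    intro i j hij
    by_contra hne
    exact D.endpoints_distinct _ (hmem i) _ (hmem j) (fun h => hne (heinj h))
      _ _ _ _ (hedge i) (hedge j) (ha i) (ha j)
      (D.BA _ (hb i)) (D.BA _ (hb j)) hij
  have hbinj : Function.Injective (vec4 b1 b2 b3 b4) := by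
    intro i j hij
    by_contra hne
    have hedge' : ∀ k : Fin 4, vec4 E1 E2 E3 E4 k =
        s(vec4 b1 b2 b3 b4 k, vec4 a1 a2 a3 a4 k) := by
      intro k
      rw [hedge k]
      exact Sym2.eq_swap
    exact D.mirror.endpoints_distinct _ (hmem i) _ (hmem j) (fun h => hne (heinj h))
      _ _ _ _ (hedge' i) (hedge' j) (hb i) (hb j)
      (D.AB _ (ha i)) (D.AB _ (ha j)) hij
  exact ⟨⟨_, _, _, heinj, hrange, hedge, ha, hb, hainj, hbinj⟩⟩

end Stmt15

namespace Stmt15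

variable {V : Type}

lemma cross {Γ : SimpleGraph V} {T T' : Set (Sym2 V)} {a z w : V}
    (W : (Γ.deleteEdges T').Walk z w)
    (hz : (Γ.deleteEdges T).Reachable a z) (hw : ¬ (Γ.deleteEdges T).Reachable a w) :
    ∃ f₁ f₂ : V, Γ.Adj f₁ f₂ ∧ s(f₁, f₂) ∈ T ∧ s(f₁, f₂) ∉ T' ∧
      (Γ.deleteEdges T).Reachable a f₁ ∧ ¬ (Γ.deleteEdges T).Reachable a f₂ ∧
      f₁ ∈ W.support ∧ f₂ ∈ W.support := by
  obtain ⟨d, hd, hd1, hd2⟩ := W.exists_boundary_dart {x | (Γ.deleteEdges T).Reachable a x} hz hw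
  have hadj := d.adj
  rw [SimpleGraph.deleteEdges_adj] at hadj
  have hT : s(d.toProd.1, d.toProd.2) ∈ T := by
    by_contra hT
    exact hd2 (SimpleGraph.Reachable.trans hd1
      (SimpleGraph.Adj.reachable (by rw [SimpleGraph.deleteEdges_adj]; exact ⟨hadj.1, hT⟩)))
  exact ⟨d.toProd.1, d.toProd.2, hadj.1, hT, hadj.2, hd1, hd2,
    W.dart_fst_mem_support_of_mem_darts hd, W.dart_snd_mem_support_of_mem_darts hd⟩

lemma twoBad [Fintype V] {Γ : SimpleGraph V} {T₁ T₂ : Set (Sym2 V)} {a₁ a₂ a₃ a₄ : V}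
    (hc₁ : T₁.ncard ≤ 2)
    (R1a : (Γ.deleteEdges T₁).Reachable a₁ a₂)
    (R1b : (Γ.deleteEdges T₁).Reachable a₃ a₄)
    (R1c : ¬ (Γ.deleteEdges T₁).Reachable a₁ a₃)
    (R2a : (Γ.deleteEdges T₂).Reachable a₁ a₃)
    (R2b : (Γ.deleteEdges T₂).Reachable a₂ a₄)
    (R2c : ¬ (Γ.deleteEdges T₂).Reachable a₁ a₂) :
    ∃ f₁ f₂ g₁ g₂ : V,
      T₁ = {s(f₁, f₂), s(g₁, g₂)} ∧ s(f₁, f₂) ≠ s(g₁, g₂) ∧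
      Γ.Adj f₁ f₂ ∧ Γ.Adj g₁ g₂ ∧
      (Γ.deleteEdges T₁).Reachable a₁ f₁ ∧ (Γ.deleteEdges T₁).Reachable a₃ f₂ ∧
      (Γ.deleteEdges T₂).Reachable a₁ f₁ ∧ (Γ.deleteEdges T₂).Reachable a₁ f₂ ∧
      (Γ.deleteEdges T₁).Reachable a₁ g₁ ∧ (Γ.deleteEdges T₁).Reachable a₃ g₂ ∧
      (Γ.deleteEdges T₂).Reachable a₂ g₁ ∧ (Γ.deleteEdges T₂).Reachable a₂ g₂ := by
  obtain ⟨W13⟩ := R2a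
  obtain ⟨W24⟩ := R2b
  have hw14 : ¬ (Γ.deleteEdges T₁).Reachable a₁ a₄ :=
    fun h => R1c (h.trans R1b.symm)
  have hw23 : ¬ (Γ.deleteEdges T₁).Reachable a₃ a₂ :=
    fun h => R1c (R1a.trans h.symm)
  obtain ⟨f₁, f₂, hfadj, hfT, _, hf1, hf2, hf1s, hf2s⟩ :=
    cross W13 (SimpleGraph.Reachable.refl a₁) R1c
  obtain ⟨y₁, y₂, hyadj, hyT, _, hy1, hy2, hy1s, hy2s⟩ :=
    cross W13.reverse (SimpleGraph.Reachable.refl a₃) (fun h => R1c h.symm)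
  obtain ⟨g₁, g₂, hgadj, hgT, _, hg1, hg2, hg1s, hg2s⟩ :=
    cross W24 R1a hw14
  obtain ⟨w₁, w₂, hwadj, hwT, _, hww1, hww2, hw1s, hw2s⟩ :=
    cross W24.reverse R1b hw23
  -- supports give T₂-reachability
  have hsup13 : ∀ x ∈ W13.support, (Γ.deleteEdges T₂).Reachable a₁ x := reach_support W13
  have hsup24 : ∀ x ∈ W24.support, (Γ.deleteEdges T₂).Reachable a₂ x := reach_support W24
  rw [SimpleGraph.Walk.support_reverse, List.mem_reverse] at hy1s hy2s hw1s hw2s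
  have hf1r := hsup13 _ hf1s
  have hf2r := hsup13 _ hf2s
  have hy1r := hsup13 _ hy1s
  have hy2r := hsup13 _ hy2s
  have hg1r := hsup24 _ hg1s
  have hg2r := hsup24 _ hg2s
  have hw1r := hsup24 _ hw1s
  have hw2r := hsup24 _ hw2s
  -- f ≠ g as Sym2 (any X'-edge vs Y'-edge)
  have hfg_ne : ∀ x₁ x₂ z₁ z₂ : V,
      (Γ.deleteEdges T₂).Reachable a₁ x₁ → (Γ.deleteEdges T₂).Reachable a₁ x₂ →
      (Γ.deleteEdges T₂).Reachable a₂ z₁ → (Γ.deleteEdges T₂).Reachable a₂ z₂ →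
      s(x₁, x₂) ≠ s(z₁, z₂) := by
    intro x₁ x₂ z₁ z₂ hx₁ hx₂ hz₁ hz₂ heq
    rcases Sym2.eq_iff.mp heq with ⟨rfl, rfl⟩ | ⟨rfl, rfl⟩
    · exact R2c (hx₁.trans hz₁.symm)
    · exact R2c (hx₁.trans hz₂.symm)
  have hne_fg : s(f₁, f₂) ≠ s(g₁, g₂) := hfg_ne _ _ _ _ hf1r hf2r hg1r hg2r
  have hT₁eq : ({s(f₁, f₂), s(g₁, g₂)} : Set (Sym2 V)) = T₁ := by
    apply Set.eq_of_subset_of_ncard_le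
    · rintro E (rfl | rfl)
      · exact hfT
      · exact hgT
    · rw [Set.ncard_pair hne_fg]; exact hc₁
    · exact Set.toFinite _
  -- identify the reverse crossings with f and g
  have hy_mem : s(y₁, y₂) ∈ ({s(f₁, f₂), s(g₁, g₂)} : Set (Sym2 V)) := by rw [hT₁eq]; exact hyT
  have hw_mem : s(w₁, w₂) ∈ ({s(f₁, f₂), s(g₁, g₂)} : Set (Sym2 V)) := by rw [hT₁eq]; exact hwT
  have hy_f : s(y₁, y₂) = s(f₁, f₂) := by
    rcases hy_mem with h | h
    · exact h
    · exact absurd h (hfg_ne _ _ _ _ hy1r hy2r hg1r hg2r)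
  have hw_g : s(w₁, w₂) = s(g₁, g₂) := by
    rcases hw_mem with h | h
    · exact absurd h (by
        intro hh
        exact (hfg_ne _ _ _ _ hf1r hf2r hw1r hw2r) hh.symm)
    · exact h
  have hf2y : (Γ.deleteEdges T₁).Reachable a₃ f₂ := by
    rcases Sym2.eq_iff.mp hy_f with ⟨h1, h2⟩ | ⟨h1, h2⟩
    · exact absurd ((show (Γ.deleteEdges T₁).Reachable a₃ f₁ from h1 ▸ hy1).trans hf1.symm)
        (fun h => R1c h.symm)
    · exact h1 ▸ hy1
  have hg2w : (Γ.deleteEdges T₁).Reachable a₃ g₂ := by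
    rcases Sym2.eq_iff.mp hw_g with ⟨h1, h2⟩ | ⟨h1, h2⟩
    · exact absurd ((show (Γ.deleteEdges T₁).Reachable a₃ g₁ from h1 ▸ hww1).trans hg1.symm)
        (fun h => R1c h.symm)
    · exact h1 ▸ hww1
  exact ⟨f₁, f₂, g₁, g₂, hT₁eq.symm, hne_fg, hfadj, hgadj,
    hf1, hf2y, hf1r, hf2r, hg1, hg2w, hg1r, hg2r⟩

end Stmt15

namespace Stmt15

variable {V : Type}

lemma PLpair {Γ₃ : SimpleGraph V} {x y : V} (P : Γ₃.Walk x y) (hnd : P.edges.Nodup)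
    (χ₁ χ₂ : V → Prop) (m : Sym2 V)
    (hm1 : ∀ z w : V, s(z, w) = m → ¬ (χ₁ z ↔ χ₁ w))
    (hm2 : ∀ z w : V, s(z, w) = m → ¬ (χ₂ z ↔ χ₂ w))
    (hch1 : ∀ d ∈ P.darts, (χ₁ d.toProd.1 ↔ χ₁ d.toProd.2) ∨ d.edge = m)
    (hch2 : ∀ d ∈ P.darts, (χ₂ d.toProd.1 ↔ χ₂ d.toProd.2) ∨ d.edge = m)
    (hend1 : χ₁ x ↔ χ₁ y) (hend2 : ¬ (χ₂ x ↔ χ₂ y)) : False := by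
  have k1 := parity_lemma χ₁ m hm1 P hnd hch1
  have k2 := parity_lemma χ₂ m hm2 P hnd hch2
  exact (k1.mp (k2.mpr hend2)) hend1

lemma threeBad [Fintype V] {Γ : SimpleGraph V} {T₁ T₂ T₃ : Set (Sym2 V)}
    {a₁ a₂ a₃ a₄ : V}
    (hc₁ : T₁.ncard ≤ 2) (hc₂ : T₂.ncard ≤ 2)
    (R1a : (Γ.deleteEdges T₁).Reachable a₁ a₂) (R1b : (Γ.deleteEdges T₁).Reachable a₃ a₄) (R1c : ¬ (Γ.deleteEdges T₁).Reachable a₁ a₃)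
    (R2a : (Γ.deleteEdges T₂).Reachable a₁ a₃) (R2b : (Γ.deleteEdges T₂).Reachable a₂ a₄) (R2c : ¬ (Γ.deleteEdges T₂).Reachable a₁ a₂)
    (R3a : (Γ.deleteEdges T₃).Reachable a₁ a₄) (R3b : (Γ.deleteEdges T₃).Reachable a₂ a₃) (R3c : ¬ (Γ.deleteEdges T₃).Reachable a₁ a₂) : False := by
  classical
  -- derived non-reachabilities
  have hw14 : ¬ (Γ.deleteEdges T₁).Reachable a₁ a₄ := fun h => R1c (h.trans R1b.symm)
  have hw23 : ¬ (Γ.deleteEdges T₁).Reachable a₃ a₂ := fun h => R1c (R1a.trans h.symm)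
  have hw14' : ¬ (Γ.deleteEdges T₂).Reachable a₁ a₄ := fun h => R2c (h.trans R2b.symm)
  have hw23' : ¬ (Γ.deleteEdges T₂).Reachable a₂ a₃ := fun h => R2c (R2a.trans h.symm)
  have hXnY : ∀ z : V, (Γ.deleteEdges T₁).Reachable a₁ z → ¬ (Γ.deleteEdges T₁).Reachable a₃ z := fun z h h' => R1c (h.trans h'.symm)
  have hYnX : ∀ z : V, (Γ.deleteEdges T₁).Reachable a₃ z → ¬ (Γ.deleteEdges T₁).Reachable a₁ z := fun z h h' => R1c (h'.trans h.symm)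
  have hX'nY' : ∀ z : V, (Γ.deleteEdges T₂).Reachable a₁ z → ¬ (Γ.deleteEdges T₂).Reachable a₂ z := fun z h h' => R2c (h.trans h'.symm)
  have hY'nX' : ∀ z : V, (Γ.deleteEdges T₂).Reachable a₂ z → ¬ (Γ.deleteEdges T₂).Reachable a₁ z := fun z h h' => R2c (h'.trans h.symm)
  have hpres : ∀ (T : Set (Sym2 V)) (aa z w : V), Γ.Adj z w → s(z, w) ∉ T →
      ((Γ.deleteEdges T).Reachable aa z ↔ (Γ.deleteEdges T).Reachable aa w) := by
    intro T aa z w h hn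
    have hadj : (Γ.deleteEdges T).Adj z w := by
      rw [SimpleGraph.deleteEdges_adj]; exact ⟨h, hn⟩
    exact ⟨fun r => r.trans hadj.reachable, fun r => r.trans hadj.symm.reachable⟩
  obtain ⟨f₁, f₂, g₁, g₂, hT1, hFG, hfadj, hgadj,
    pf1X, pf2Y, pf1X', pf2X', pg1X, pg2Y, pg1Y', pg2Y'⟩ :=
    twoBad hc₁ R1a R1b R1c R2a R2b R2c
  obtain ⟨f'₁, f'₂, g'₁, g'₂, hT2, hFG', hf'adj, hg'adj,
    pf'1X', pf'2Y', pf'1X, pf'2X, pg'1X', pg'2Y', pg'1Y, pg'2Y⟩ :=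
    twoBad hc₂ R2a R2b R2c R1a R1b R1c
  -- paths for the third cut
  obtain ⟨W14⟩ := R3a
  obtain ⟨W23⟩ := R3b
  obtain ⟨P14, hP14path⟩ : ∃ P : (Γ.deleteEdges T₃).Walk a₁ a₄, P.IsPath :=
    ⟨W14.toPath, W14.toPath.isPath⟩
  obtain ⟨P23, hP23path⟩ : ∃ P : (Γ.deleteEdges T₃).Walk a₂ a₃, P.IsPath :=
    ⟨W23.toPath, W23.toPath.isPath⟩
  have hnd14 : P14.edges.Nodup :=
    SimpleGraph.Walk.edges_nodup_of_support_nodup ((SimpleGraph.Walk.isPath_def _).mp hP14path)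
  have hnd23 : P23.edges.Nodup :=
    SimpleGraph.Walk.edges_nodup_of_support_nodup ((SimpleGraph.Walk.isPath_def _).mp hP23path)
  have hsup14 : ∀ x ∈ P14.support, (Γ.deleteEdges T₃).Reachable a₁ x := reach_support P14
  have hsup23 : ∀ x ∈ P23.support, (Γ.deleteEdges T₃).Reachable a₂ x := reach_support P23
  have hd31 : ∀ z : V, (Γ.deleteEdges T₃).Reachable a₁ z → ¬ (Γ.deleteEdges T₃).Reachable a₂ z := fun z h h' => R3c (h.trans h'.symm)
  have hd32 : ∀ z : V, (Γ.deleteEdges T₃).Reachable a₂ z → ¬ (Γ.deleteEdges T₃).Reachable a₁ z := fun z h h' => R3c (h'.trans h.symm)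
  -- crossing of T₁ along P14
  have hX : ((Γ.deleteEdges T₃).Reachable a₁ f₁ ∧ (Γ.deleteEdges T₃).Reachable a₁ f₂) ∨ ((Γ.deleteEdges T₃).Reachable a₁ g₁ ∧ (Γ.deleteEdges T₃).Reachable a₁ g₂) := by
    obtain ⟨h₁, h₂, hadj, hT, hnT', hr, hnr, hs1, hs2⟩ :=
      cross P14 (SimpleGraph.Reachable.refl a₁) hw14
    have m1 := hsup14 _ hs1
    have m2 := hsup14 _ hs2
    rw [hT1] at hT
    simp only [Set.mem_insert_iff, Set.mem_singleton_iff] at hT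
    rcases hT with h | h
    · left
      rcases Sym2.eq_iff.mp h with ⟨e1, e2⟩ | ⟨e1, e2⟩
      · rw [e1] at m1; rw [e2] at m2; exact ⟨m1, m2⟩
      · rw [e1] at m1; rw [e2] at m2; exact ⟨m2, m1⟩
    · right
      rcases Sym2.eq_iff.mp h with ⟨e1, e2⟩ | ⟨e1, e2⟩
      · rw [e1] at m1; rw [e2] at m2; exact ⟨m1, m2⟩
      · rw [e1] at m1; rw [e2] at m2; exact ⟨m2, m1⟩
  have hY : ((Γ.deleteEdges T₃).Reachable a₂ f₁ ∧ (Γ.deleteEdges T₃).Reachable a₂ f₂) ∨ ((Γ.deleteEdges T₃).Reachable a₂ g₁ ∧ (Γ.deleteEdges T₃).Reachable a₂ g₂) := by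
    obtain ⟨h₁, h₂, hadj, hT, hnT', hr, hnr, hs1, hs2⟩ :=
      cross P23 R1a R1c
    have m1 := hsup23 _ hs1
    have m2 := hsup23 _ hs2
    rw [hT1] at hT
    simp only [Set.mem_insert_iff, Set.mem_singleton_iff] at hT
    rcases hT with h | h
    · left
      rcases Sym2.eq_iff.mp h with ⟨e1, e2⟩ | ⟨e1, e2⟩
      · rw [e1] at m1; rw [e2] at m2; exact ⟨m1, m2⟩
      · rw [e1] at m1; rw [e2] at m2; exact ⟨m2, m1⟩
    · right
      rcases Sym2.eq_iff.mp h with ⟨e1, e2⟩ | ⟨e1, e2⟩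
      · rw [e1] at m1; rw [e2] at m2; exact ⟨m1, m2⟩
      · rw [e1] at m1; rw [e2] at m2; exact ⟨m2, m1⟩
  have hX' : ((Γ.deleteEdges T₃).Reachable a₁ f'₁ ∧ (Γ.deleteEdges T₃).Reachable a₁ f'₂) ∨ ((Γ.deleteEdges T₃).Reachable a₁ g'₁ ∧ (Γ.deleteEdges T₃).Reachable a₁ g'₂) := by
    obtain ⟨h₁, h₂, hadj, hT, hnT', hr, hnr, hs1, hs2⟩ :=
      cross P14 (SimpleGraph.Reachable.refl a₁) hw14'
    have m1 := hsup14 _ hs1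
    have m2 := hsup14 _ hs2
    rw [hT2] at hT
    simp only [Set.mem_insert_iff, Set.mem_singleton_iff] at hT
    rcases hT with h | h
    · left
      rcases Sym2.eq_iff.mp h with ⟨e1, e2⟩ | ⟨e1, e2⟩
      · rw [e1] at m1; rw [e2] at m2; exact ⟨m1, m2⟩
      · rw [e1] at m1; rw [e2] at m2; exact ⟨m2, m1⟩
    · right
      rcases Sym2.eq_iff.mp h with ⟨e1, e2⟩ | ⟨e1, e2⟩
      · rw [e1] at m1; rw [e2] at m2; exact ⟨m1, m2⟩
      · rw [e1] at m1; rw [e2] at m2; exact ⟨m2, m1⟩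
  have hY' : ((Γ.deleteEdges T₃).Reachable a₂ f'₁ ∧ (Γ.deleteEdges T₃).Reachable a₂ f'₂) ∨ ((Γ.deleteEdges T₃).Reachable a₂ g'₁ ∧ (Γ.deleteEdges T₃).Reachable a₂ g'₂) := by
    obtain ⟨h₁, h₂, hadj, hT, hnT', hr, hnr, hs1, hs2⟩ :=
      cross P23 (SimpleGraph.Reachable.refl a₂) hw23'
    have m1 := hsup23 _ hs1
    have m2 := hsup23 _ hs2
    rw [hT2] at hT
    simp only [Set.mem_insert_iff, Set.mem_singleton_iff] at hT
    rcases hT with h | h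
    · left
      rcases Sym2.eq_iff.mp h with ⟨e1, e2⟩ | ⟨e1, e2⟩
      · rw [e1] at m1; rw [e2] at m2; exact ⟨m1, m2⟩
      · rw [e1] at m1; rw [e2] at m2; exact ⟨m2, m1⟩
    · right
      rcases Sym2.eq_iff.mp h with ⟨e1, e2⟩ | ⟨e1, e2⟩
      · rw [e1] at m1; rw [e2] at m2; exact ⟨m1, m2⟩
      · rw [e1] at m1; rw [e2] at m2; exact ⟨m2, m1⟩
  rcases hX with hXf | hXg <;> rcases hY with hYf | hYg
  · exact hd31 _ hXf.1 hYf.1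
  · rcases hX' with hX'f' | hX'g' <;> rcases hY' with hY'f' | hY'g'
    · exact hd31 _ hX'f'.1 hY'f'.1
    · have hch1 : ∀ d ∈ P14.darts, ((fun z => (Γ.deleteEdges T₁).Reachable a₁ z ∧ (Γ.deleteEdges T₂).Reachable a₂ z) d.toProd.1 ↔ (fun z => (Γ.deleteEdges T₁).Reachable a₁ z ∧ (Γ.deleteEdges T₂).Reachable a₂ z) d.toProd.2) ∨ d.edge = s(f'₁, f'₂) := by
        intro d hd
        have hadj' := d.adj
        rw [SimpleGraph.deleteEdges_adj] at hadj'
        have hdd1 : (Γ.deleteEdges T₃).Reachable a₁ d.toProd.1 := hsup14 _ (P14.dart_fst_mem_support_of_mem_darts hd)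
        have hdd2 : (Γ.deleteEdges T₃).Reachable a₁ d.toProd.2 := hsup14 _ (P14.dart_snd_mem_support_of_mem_darts hd)
        by_cases h1 : s(d.toProd.1, d.toProd.2) ∈ T₁
        · rw [hT1] at h1
          simp only [Set.mem_insert_iff, Set.mem_singleton_iff] at h1
          rcases h1 with h | h
          · left
            rcases Sym2.eq_iff.mp h with ⟨e1, e2⟩ | ⟨e1, e2⟩
            · rw [e1, e2]; exact iff_of_false (fun hc => (hX'nY' f₁ pf1X') hc.2) (fun hc => (hYnX f₂ pf2Y) hc.1)
            · rw [e1, e2]; exact iff_of_false (fun hc => (hYnX f₂ pf2Y) hc.1) (fun hc => (hX'nY' f₁ pf1X') hc.2)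
          · exfalso
            rcases Sym2.eq_iff.mp h with ⟨e1, e2⟩ | ⟨e1, e2⟩
            · rw [e1] at hdd1; exact hd31 _ hdd1 (hYg.1)
            · rw [e1] at hdd1; exact hd31 _ hdd1 (hYg.2)
        · by_cases h2 : s(d.toProd.1, d.toProd.2) ∈ T₂
          · rw [hT2] at h2
            simp only [Set.mem_insert_iff, Set.mem_singleton_iff] at h2
            rcases h2 with h | h
            · right; exact h
            · left
              rcases Sym2.eq_iff.mp h with ⟨e1, e2⟩ | ⟨e1, e2⟩
              · rw [e1, e2]; exact iff_of_false (fun hc => (hYnX g'₁ pg'1Y) hc.1) (fun hc => (hYnX g'₂ pg'2Y) hc.1)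
              · rw [e1, e2]; exact iff_of_false (fun hc => (hYnX g'₂ pg'2Y) hc.1) (fun hc => (hYnX g'₁ pg'1Y) hc.1)
          · -- edge in neither cut: both colour components preserved
            left
            exact and_congr (hpres T₁ a₁ _ _ hadj'.1 h1) (hpres T₂ a₂ _ _ hadj'.1 h2)
      have hch2 : ∀ d ∈ P14.darts, ((fun z => (Γ.deleteEdges T₂).Reachable a₁ z) d.toProd.1 ↔ (fun z => (Γ.deleteEdges T₂).Reachable a₁ z) d.toProd.2) ∨ d.edge = s(f'₁, f'₂) := by
        intro d hd
        have hadj' := d.adj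
        rw [SimpleGraph.deleteEdges_adj] at hadj'
        have hdd1 : (Γ.deleteEdges T₃).Reachable a₁ d.toProd.1 := hsup14 _ (P14.dart_fst_mem_support_of_mem_darts hd)
        have hdd2 : (Γ.deleteEdges T₃).Reachable a₁ d.toProd.2 := hsup14 _ (P14.dart_snd_mem_support_of_mem_darts hd)
        by_cases h1 : s(d.toProd.1, d.toProd.2) ∈ T₁
        · rw [hT1] at h1
          simp only [Set.mem_insert_iff, Set.mem_singleton_iff] at h1
          rcases h1 with h | h
          · left
            rcases Sym2.eq_iff.mp h with ⟨e1, e2⟩ | ⟨e1, e2⟩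
            · rw [e1, e2]; exact iff_of_true (pf1X') (pf2X')
            · rw [e1, e2]; exact iff_of_true (pf2X') (pf1X')
          · left
            rcases Sym2.eq_iff.mp h with ⟨e1, e2⟩ | ⟨e1, e2⟩
            · rw [e1, e2]; exact iff_of_false (hY'nX' g₁ pg1Y') (hY'nX' g₂ pg2Y')
            · rw [e1, e2]; exact iff_of_false (hY'nX' g₂ pg2Y') (hY'nX' g₁ pg1Y')
        · by_cases h2 : s(d.toProd.1, d.toProd.2) ∈ T₂
          · rw [hT2] at h2
            simp only [Set.mem_insert_iff, Set.mem_singleton_iff] at h2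
            rcases h2 with h | h
            · right; exact h
            · exfalso
              rcases Sym2.eq_iff.mp h with ⟨e1, e2⟩ | ⟨e1, e2⟩
              · rw [e1] at hdd1; exact hd31 _ hdd1 (hY'g'.1)
              · rw [e1] at hdd1; exact hd31 _ hdd1 (hY'g'.2)
          · -- edge in neither cut: both colour components preserved
            left
            exact hpres T₂ a₁ _ _ hadj'.1 h2
      refine PLpair P14 hnd14 (fun z => (Γ.deleteEdges T₁).Reachable a₁ z ∧ (Γ.deleteEdges T₂).Reachable a₂ z) (fun z => (Γ.deleteEdges T₂).Reachable a₁ z) (s(f'₁, f'₂)) ?_ ?_ hch1 hch2 ?_ ?_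
      · intro z w hzw
        rcases Sym2.eq_iff.mp hzw with ⟨e1, e2⟩ | ⟨e1, e2⟩
        · rw [e1, e2]
          exact fun hiff => (hX'nY' f'₁ pf'1X') (hiff.mpr ⟨pf'2X, pf'2Y'⟩).2
        · rw [e1, e2]
          exact fun hiff => (hX'nY' f'₁ pf'1X') (hiff.mp ⟨pf'2X, pf'2Y'⟩).2
      · intro z w hzw
        rcases Sym2.eq_iff.mp hzw with ⟨e1, e2⟩ | ⟨e1, e2⟩
        · rw [e1, e2]
          exact fun hiff => (hY'nX' f'₂ pf'2Y') (hiff.mp pf'1X')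
        · rw [e1, e2]
          exact fun hiff => (hY'nX' f'₂ pf'2Y') (hiff.mpr pf'1X')
      · exact iff_of_false (fun hc => (hX'nY' a₁ (SimpleGraph.Reachable.refl a₁)) hc.2)
          (fun hc => hw14 hc.1)
      · exact fun hiff => hw14' (hiff.mp (SimpleGraph.Reachable.refl a₁))

    · have hch1 : ∀ d ∈ P23.darts, ((fun z => (Γ.deleteEdges T₁).Reachable a₁ z ∧ (Γ.deleteEdges T₂).Reachable a₁ z) d.toProd.1 ↔ (fun z => (Γ.deleteEdges T₁).Reachable a₁ z ∧ (Γ.deleteEdges T₂).Reachable a₁ z) d.toProd.2) ∨ d.edge = s(f'₁, f'₂) := by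
        intro d hd
        have hadj' := d.adj
        rw [SimpleGraph.deleteEdges_adj] at hadj'
        have hdd1 : (Γ.deleteEdges T₃).Reachable a₂ d.toProd.1 := hsup23 _ (P23.dart_fst_mem_support_of_mem_darts hd)
        have hdd2 : (Γ.deleteEdges T₃).Reachable a₂ d.toProd.2 := hsup23 _ (P23.dart_snd_mem_support_of_mem_darts hd)
        by_cases h1 : s(d.toProd.1, d.toProd.2) ∈ T₁
        · rw [hT1] at h1
          simp only [Set.mem_insert_iff, Set.mem_singleton_iff] at h1
          rcases h1 with h | h
          · exfalso
            rcases Sym2.eq_iff.mp h with ⟨e1, e2⟩ | ⟨e1, e2⟩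
            · rw [e1] at hdd1; exact hd32 _ hdd1 (hXf.1)
            · rw [e1] at hdd1; exact hd32 _ hdd1 (hXf.2)
          · left
            rcases Sym2.eq_iff.mp h with ⟨e1, e2⟩ | ⟨e1, e2⟩
            · rw [e1, e2]; exact iff_of_false (fun hc => (hY'nX' g₁ pg1Y') hc.2) (fun hc => (hYnX g₂ pg2Y) hc.1)
            · rw [e1, e2]; exact iff_of_false (fun hc => (hYnX g₂ pg2Y) hc.1) (fun hc => (hY'nX' g₁ pg1Y') hc.2)
        · by_cases h2 : s(d.toProd.1, d.toProd.2) ∈ T₂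
          · rw [hT2] at h2
            simp only [Set.mem_insert_iff, Set.mem_singleton_iff] at h2
            rcases h2 with h | h
            · right; exact h
            · left
              rcases Sym2.eq_iff.mp h with ⟨e1, e2⟩ | ⟨e1, e2⟩
              · rw [e1, e2]; exact iff_of_false (fun hc => (hYnX g'₁ pg'1Y) hc.1) (fun hc => (hYnX g'₂ pg'2Y) hc.1)
              · rw [e1, e2]; exact iff_of_false (fun hc => (hYnX g'₂ pg'2Y) hc.1) (fun hc => (hYnX g'₁ pg'1Y) hc.1)
          · -- edge in neither cut: both colour components preserved
            left
            exact and_congr (hpres T₁ a₁ _ _ hadj'.1 h1) (hpres T₂ a₁ _ _ hadj'.1 h2)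
      have hch2 : ∀ d ∈ P23.darts, ((fun z => (Γ.deleteEdges T₂).Reachable a₂ z) d.toProd.1 ↔ (fun z => (Γ.deleteEdges T₂).Reachable a₂ z) d.toProd.2) ∨ d.edge = s(f'₁, f'₂) := by
        intro d hd
        have hadj' := d.adj
        rw [SimpleGraph.deleteEdges_adj] at hadj'
        have hdd1 : (Γ.deleteEdges T₃).Reachable a₂ d.toProd.1 := hsup23 _ (P23.dart_fst_mem_support_of_mem_darts hd)
        have hdd2 : (Γ.deleteEdges T₃).Reachable a₂ d.toProd.2 := hsup23 _ (P23.dart_snd_mem_support_of_mem_darts hd)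
        by_cases h1 : s(d.toProd.1, d.toProd.2) ∈ T₁
        · rw [hT1] at h1
          simp only [Set.mem_insert_iff, Set.mem_singleton_iff] at h1
          rcases h1 with h | h
          · left
            rcases Sym2.eq_iff.mp h with ⟨e1, e2⟩ | ⟨e1, e2⟩
            · rw [e1, e2]; exact iff_of_false (hX'nY' f₁ pf1X') (hX'nY' f₂ pf2X')
            · rw [e1, e2]; exact iff_of_false (hX'nY' f₂ pf2X') (hX'nY' f₁ pf1X')
          · left
            rcases Sym2.eq_iff.mp h with ⟨e1, e2⟩ | ⟨e1, e2⟩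
            · rw [e1, e2]; exact iff_of_true (pg1Y') (pg2Y')
            · rw [e1, e2]; exact iff_of_true (pg2Y') (pg1Y')
        · by_cases h2 : s(d.toProd.1, d.toProd.2) ∈ T₂
          · rw [hT2] at h2
            simp only [Set.mem_insert_iff, Set.mem_singleton_iff] at h2
            rcases h2 with h | h
            · right; exact h
            · exfalso
              rcases Sym2.eq_iff.mp h with ⟨e1, e2⟩ | ⟨e1, e2⟩
              · rw [e1] at hdd1; exact hd32 _ hdd1 (hX'g'.1)
              · rw [e1] at hdd1; exact hd32 _ hdd1 (hX'g'.2)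
          · -- edge in neither cut: both colour components preserved
            left
            exact hpres T₂ a₂ _ _ hadj'.1 h2
      refine PLpair P23 hnd23 (fun z => (Γ.deleteEdges T₁).Reachable a₁ z ∧ (Γ.deleteEdges T₂).Reachable a₁ z) (fun z => (Γ.deleteEdges T₂).Reachable a₂ z) (s(f'₁, f'₂)) ?_ ?_ hch1 hch2 ?_ ?_
      · intro z w hzw
        rcases Sym2.eq_iff.mp hzw with ⟨e1, e2⟩ | ⟨e1, e2⟩
        · rw [e1, e2]
          exact fun hiff => (hY'nX' f'₂ pf'2Y') (hiff.mp ⟨pf'1X, pf'1X'⟩).2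
        · rw [e1, e2]
          exact fun hiff => (hY'nX' f'₂ pf'2Y') (hiff.mpr ⟨pf'1X, pf'1X'⟩).2
      · intro z w hzw
        rcases Sym2.eq_iff.mp hzw with ⟨e1, e2⟩ | ⟨e1, e2⟩
        · rw [e1, e2]
          exact fun hiff => (hX'nY' f'₁ pf'1X') (hiff.mpr pf'2Y')
        · rw [e1, e2]
          exact fun hiff => (hX'nY' f'₁ pf'1X') (hiff.mp pf'2Y')
      · exact iff_of_false (fun hc => (hY'nX' a₂ (SimpleGraph.Reachable.refl a₂)) hc.2)
          (fun hc => R1c hc.1)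
      · exact fun hiff => hw23' (hiff.mp (SimpleGraph.Reachable.refl a₂))

    · exact hd31 _ hX'g'.1 hY'g'.1
  · rcases hX' with hX'f' | hX'g' <;> rcases hY' with hY'f' | hY'g'
    · exact hd31 _ hX'f'.1 hY'f'.1
    · have hch1 : ∀ d ∈ P23.darts, ((fun z => (Γ.deleteEdges T₁).Reachable a₃ z ∧ (Γ.deleteEdges T₂).Reachable a₂ z) d.toProd.1 ↔ (fun z => (Γ.deleteEdges T₁).Reachable a₃ z ∧ (Γ.deleteEdges T₂).Reachable a₂ z) d.toProd.2) ∨ d.edge = s(g'₁, g'₂) := by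
        intro d hd
        have hadj' := d.adj
        rw [SimpleGraph.deleteEdges_adj] at hadj'
        have hdd1 : (Γ.deleteEdges T₃).Reachable a₂ d.toProd.1 := hsup23 _ (P23.dart_fst_mem_support_of_mem_darts hd)
        have hdd2 : (Γ.deleteEdges T₃).Reachable a₂ d.toProd.2 := hsup23 _ (P23.dart_snd_mem_support_of_mem_darts hd)
        by_cases h1 : s(d.toProd.1, d.toProd.2) ∈ T₁
        · rw [hT1] at h1
          simp only [Set.mem_insert_iff, Set.mem_singleton_iff] at h1
          rcases h1 with h | h
          · left
            rcases Sym2.eq_iff.mp h with ⟨e1, e2⟩ | ⟨e1, e2⟩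
            · rw [e1, e2]; exact iff_of_false (fun hc => (hXnY f₁ pf1X) hc.1) (fun hc => (hX'nY' f₂ pf2X') hc.2)
            · rw [e1, e2]; exact iff_of_false (fun hc => (hX'nY' f₂ pf2X') hc.2) (fun hc => (hXnY f₁ pf1X) hc.1)
          · exfalso
            rcases Sym2.eq_iff.mp h with ⟨e1, e2⟩ | ⟨e1, e2⟩
            · rw [e1] at hdd1; exact hd32 _ hdd1 (hXg.1)
            · rw [e1] at hdd1; exact hd32 _ hdd1 (hXg.2)
        · by_cases h2 : s(d.toProd.1, d.toProd.2) ∈ T₂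
          · rw [hT2] at h2
            simp only [Set.mem_insert_iff, Set.mem_singleton_iff] at h2
            rcases h2 with h | h
            · left
              rcases Sym2.eq_iff.mp h with ⟨e1, e2⟩ | ⟨e1, e2⟩
              · rw [e1, e2]; exact iff_of_false (fun hc => (hXnY f'₁ pf'1X) hc.1) (fun hc => (hXnY f'₂ pf'2X) hc.1)
              · rw [e1, e2]; exact iff_of_false (fun hc => (hXnY f'₂ pf'2X) hc.1) (fun hc => (hXnY f'₁ pf'1X) hc.1)
            · right; exact h
          · -- edge in neither cut: both colour components preserved
            left
            exact and_congr (hpres T₁ a₃ _ _ hadj'.1 h1) (hpres T₂ a₂ _ _ hadj'.1 h2)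
      have hch2 : ∀ d ∈ P23.darts, ((fun z => (Γ.deleteEdges T₂).Reachable a₂ z) d.toProd.1 ↔ (fun z => (Γ.deleteEdges T₂).Reachable a₂ z) d.toProd.2) ∨ d.edge = s(g'₁, g'₂) := by
        intro d hd
        have hadj' := d.adj
        rw [SimpleGraph.deleteEdges_adj] at hadj'
        have hdd1 : (Γ.deleteEdges T₃).Reachable a₂ d.toProd.1 := hsup23 _ (P23.dart_fst_mem_support_of_mem_darts hd)
        have hdd2 : (Γ.deleteEdges T₃).Reachable a₂ d.toProd.2 := hsup23 _ (P23.dart_snd_mem_support_of_mem_darts hd)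
        by_cases h1 : s(d.toProd.1, d.toProd.2) ∈ T₁
        · rw [hT1] at h1
          simp only [Set.mem_insert_iff, Set.mem_singleton_iff] at h1
          rcases h1 with h | h
          · left
            rcases Sym2.eq_iff.mp h with ⟨e1, e2⟩ | ⟨e1, e2⟩
            · rw [e1, e2]; exact iff_of_false (hX'nY' f₁ pf1X') (hX'nY' f₂ pf2X')
            · rw [e1, e2]; exact iff_of_false (hX'nY' f₂ pf2X') (hX'nY' f₁ pf1X')
          · left
            rcases Sym2.eq_iff.mp h with ⟨e1, e2⟩ | ⟨e1, e2⟩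
            · rw [e1, e2]; exact iff_of_true (pg1Y') (pg2Y')
            · rw [e1, e2]; exact iff_of_true (pg2Y') (pg1Y')
        · by_cases h2 : s(d.toProd.1, d.toProd.2) ∈ T₂
          · rw [hT2] at h2
            simp only [Set.mem_insert_iff, Set.mem_singleton_iff] at h2
            rcases h2 with h | h
            · exfalso
              rcases Sym2.eq_iff.mp h with ⟨e1, e2⟩ | ⟨e1, e2⟩
              · rw [e1] at hdd1; exact hd32 _ hdd1 (hX'f'.1)
              · rw [e1] at hdd1; exact hd32 _ hdd1 (hX'f'.2)
            · right; exact h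
          · -- edge in neither cut: both colour components preserved
            left
            exact hpres T₂ a₂ _ _ hadj'.1 h2
      refine PLpair P23 hnd23 (fun z => (Γ.deleteEdges T₁).Reachable a₃ z ∧ (Γ.deleteEdges T₂).Reachable a₂ z) (fun z => (Γ.deleteEdges T₂).Reachable a₂ z) (s(g'₁, g'₂)) ?_ ?_ hch1 hch2 ?_ ?_
      · intro z w hzw
        rcases Sym2.eq_iff.mp hzw with ⟨e1, e2⟩ | ⟨e1, e2⟩
        · rw [e1, e2]
          exact fun hiff => (hX'nY' g'₁ pg'1X') (hiff.mpr ⟨pg'2Y, pg'2Y'⟩).2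
        · rw [e1, e2]
          exact fun hiff => (hX'nY' g'₁ pg'1X') (hiff.mp ⟨pg'2Y, pg'2Y'⟩).2
      · intro z w hzw
        rcases Sym2.eq_iff.mp hzw with ⟨e1, e2⟩ | ⟨e1, e2⟩
        · rw [e1, e2]
          exact fun hiff => (hX'nY' g'₁ pg'1X') (hiff.mpr pg'2Y')
        · rw [e1, e2]
          exact fun hiff => (hX'nY' g'₁ pg'1X') (hiff.mp pg'2Y')
      · exact iff_of_false (fun hc => hw23 hc.1) (fun hc => hw23' hc.2)
      · exact fun hiff => hw23' (hiff.mp (SimpleGraph.Reachable.refl a₂))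

    · have hch1 : ∀ d ∈ P14.darts, ((fun z => (Γ.deleteEdges T₁).Reachable a₃ z ∧ (Γ.deleteEdges T₂).Reachable a₁ z) d.toProd.1 ↔ (fun z => (Γ.deleteEdges T₁).Reachable a₃ z ∧ (Γ.deleteEdges T₂).Reachable a₁ z) d.toProd.2) ∨ d.edge = s(g'₁, g'₂) := by
        intro d hd
        have hadj' := d.adj
        rw [SimpleGraph.deleteEdges_adj] at hadj'
        have hdd1 : (Γ.deleteEdges T₃).Reachable a₁ d.toProd.1 := hsup14 _ (P14.dart_fst_mem_support_of_mem_darts hd)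
        have hdd2 : (Γ.deleteEdges T₃).Reachable a₁ d.toProd.2 := hsup14 _ (P14.dart_snd_mem_support_of_mem_darts hd)
        by_cases h1 : s(d.toProd.1, d.toProd.2) ∈ T₁
        · rw [hT1] at h1
          simp only [Set.mem_insert_iff, Set.mem_singleton_iff] at h1
          rcases h1 with h | h
          · exfalso
            rcases Sym2.eq_iff.mp h with ⟨e1, e2⟩ | ⟨e1, e2⟩
            · rw [e1] at hdd1; exact hd31 _ hdd1 (hYf.1)
            · rw [e1] at hdd1; exact hd31 _ hdd1 (hYf.2)
          · left
            rcases Sym2.eq_iff.mp h with ⟨e1, e2⟩ | ⟨e1, e2⟩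
            · rw [e1, e2]; exact iff_of_false (fun hc => (hXnY g₁ pg1X) hc.1) (fun hc => (hY'nX' g₂ pg2Y') hc.2)
            · rw [e1, e2]; exact iff_of_false (fun hc => (hY'nX' g₂ pg2Y') hc.2) (fun hc => (hXnY g₁ pg1X) hc.1)
        · by_cases h2 : s(d.toProd.1, d.toProd.2) ∈ T₂
          · rw [hT2] at h2
            simp only [Set.mem_insert_iff, Set.mem_singleton_iff] at h2
            rcases h2 with h | h
            · left
              rcases Sym2.eq_iff.mp h with ⟨e1, e2⟩ | ⟨e1, e2⟩
              · rw [e1, e2]; exact iff_of_false (fun hc => (hXnY f'₁ pf'1X) hc.1) (fun hc => (hXnY f'₂ pf'2X) hc.1)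
              · rw [e1, e2]; exact iff_of_false (fun hc => (hXnY f'₂ pf'2X) hc.1) (fun hc => (hXnY f'₁ pf'1X) hc.1)
            · right; exact h
          · -- edge in neither cut: both colour components preserved
            left
            exact and_congr (hpres T₁ a₃ _ _ hadj'.1 h1) (hpres T₂ a₁ _ _ hadj'.1 h2)
      have hch2 : ∀ d ∈ P14.darts, ((fun z => (Γ.deleteEdges T₂).Reachable a₁ z) d.toProd.1 ↔ (fun z => (Γ.deleteEdges T₂).Reachable a₁ z) d.toProd.2) ∨ d.edge = s(g'₁, g'₂) := by
        intro d hd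
        have hadj' := d.adj
        rw [SimpleGraph.deleteEdges_adj] at hadj'
        have hdd1 : (Γ.deleteEdges T₃).Reachable a₁ d.toProd.1 := hsup14 _ (P14.dart_fst_mem_support_of_mem_darts hd)
        have hdd2 : (Γ.deleteEdges T₃).Reachable a₁ d.toProd.2 := hsup14 _ (P14.dart_snd_mem_support_of_mem_darts hd)
        by_cases h1 : s(d.toProd.1, d.toProd.2) ∈ T₁
        · rw [hT1] at h1
          simp only [Set.mem_insert_iff, Set.mem_singleton_iff] at h1
          rcases h1 with h | h
          · left
            rcases Sym2.eq_iff.mp h with ⟨e1, e2⟩ | ⟨e1, e2⟩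
            · rw [e1, e2]; exact iff_of_true (pf1X') (pf2X')
            · rw [e1, e2]; exact iff_of_true (pf2X') (pf1X')
          · left
            rcases Sym2.eq_iff.mp h with ⟨e1, e2⟩ | ⟨e1, e2⟩
            · rw [e1, e2]; exact iff_of_false (hY'nX' g₁ pg1Y') (hY'nX' g₂ pg2Y')
            · rw [e1, e2]; exact iff_of_false (hY'nX' g₂ pg2Y') (hY'nX' g₁ pg1Y')
        · by_cases h2 : s(d.toProd.1, d.toProd.2) ∈ T₂
          · rw [hT2] at h2
            simp only [Set.mem_insert_iff, Set.mem_singleton_iff] at h2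
            rcases h2 with h | h
            · exfalso
              rcases Sym2.eq_iff.mp h with ⟨e1, e2⟩ | ⟨e1, e2⟩
              · rw [e1] at hdd1; exact hd31 _ hdd1 (hY'f'.1)
              · rw [e1] at hdd1; exact hd31 _ hdd1 (hY'f'.2)
            · right; exact h
          · -- edge in neither cut: both colour components preserved
            left
            exact hpres T₂ a₁ _ _ hadj'.1 h2
      refine PLpair P14 hnd14 (fun z => (Γ.deleteEdges T₁).Reachable a₃ z ∧ (Γ.deleteEdges T₂).Reachable a₁ z) (fun z => (Γ.deleteEdges T₂).Reachable a₁ z) (s(g'₁, g'₂)) ?_ ?_ hch1 hch2 ?_ ?_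
      · intro z w hzw
        rcases Sym2.eq_iff.mp hzw with ⟨e1, e2⟩ | ⟨e1, e2⟩
        · rw [e1, e2]
          exact fun hiff => (hY'nX' g'₂ pg'2Y') (hiff.mp ⟨pg'1Y, pg'1X'⟩).2
        · rw [e1, e2]
          exact fun hiff => (hY'nX' g'₂ pg'2Y') (hiff.mpr ⟨pg'1Y, pg'1X'⟩).2
      · intro z w hzw
        rcases Sym2.eq_iff.mp hzw with ⟨e1, e2⟩ | ⟨e1, e2⟩
        · rw [e1, e2]
          exact fun hiff => (hY'nX' g'₂ pg'2Y') (hiff.mp pg'1X')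
        · rw [e1, e2]
          exact fun hiff => (hY'nX' g'₂ pg'2Y') (hiff.mpr pg'1X')
      · exact iff_of_false (fun hc => R1c hc.1.symm) (fun hc => hw14' hc.2)
      · exact fun hiff => hw14' (hiff.mp (SimpleGraph.Reachable.refl a₁))

    · exact hd31 _ hX'g'.1 hY'g'.1
  · exact hd31 _ hXg.1 hYg.1

end Stmt15

namespace Stmt15

lemma fin4_cover : ∀ i j k l m : Fin 4, i ≠ j → i ≠ k → i ≠ l → j ≠ k → j ≠ l → k ≠ l →
    (m = i ∨ m = j ∨ m = k ∨ m = l) := by decide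

variable {V : Type} [Fintype V]

/-- injectivity of `Sym2.map ψ` on sets of edges which are either inside `A` or cut edges -/
lemma cut_injOn (D : Setup V) (N : Enum D) (ψ : V → ({z : V // z ∈ D.A} ⊕ Bool))
    (hψA : ∀ z (h : z ∈ D.A), ψ z = Sum.inl ⟨z, h⟩)
    (hψB : ∀ z, z ∉ D.A → ∃ t, ψ z = Sum.inr t)
    (U : Set (Sym2 V)) (hU : ∀ E ∈ U, (∀ z ∈ E, z ∈ D.A) ∨ E ∈ D.S) :
    Set.InjOn (Sym2.map ψ) U := by
  -- first, a shape lemma for images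
  have hshape : ∀ E ∈ U, (∃ x y : V, (x ∈ D.A) ∧ (y ∈ D.A) ∧ E = s(x, y)) ∨
      (∃ m : Fin 4, E = N.e m) := by
    intro E hE
    rcases hU E hE with h | h
    · left
      induction E using Sym2.ind with
      | _ x y =>
        exact ⟨x, y, h x (Sym2.mem_mk_left _ _), h y (Sym2.mem_mk_right _ _), rfl⟩
    · right
      rw [N.hrange] at h
      obtain ⟨m, rfl⟩ := h
      exact ⟨m, rfl⟩
  intro E hE E' hE' heq
  rcases hshape E hE with ⟨x, y, hx, hy, rfl⟩ | ⟨m, rfl⟩ <;>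
    rcases hshape E' hE' with ⟨x', y', hx', hy', rfl⟩ | ⟨m', rfl⟩
  · -- both inside A
    rw [Sym2.map_pair_eq, Sym2.map_pair_eq, hψA x hx, hψA y hy, hψA x' hx', hψA y' hy'] at heq
    rcases Sym2.eq_iff.mp heq with ⟨e1, e2⟩ | ⟨e1, e2⟩
    · have hxx : x = x' := congrArg Subtype.val (Sum.inl.inj e1)
      have hyy : y = y' := congrArg Subtype.val (Sum.inl.inj e2)
      rw [hxx, hyy]
    · have hxx : x = y' := congrArg Subtype.val (Sum.inl.inj e1)
      have hyy : y = x' := congrArg Subtype.val (Sum.inl.inj e2)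
      rw [hxx, hyy]
      exact Sym2.eq_swap
  · -- inside-A vs cut edge : impossible
    exfalso
    obtain ⟨t, ht⟩ := hψB (N.b m') (D.AB _ (N.ha m') |> fun _ => D.BA _ (N.hb m'))
    rw [N.hedge m', Sym2.map_pair_eq, Sym2.map_pair_eq, hψA x hx, hψA y hy, ht] at heq
    rcases Sym2.eq_iff.mp heq with ⟨e1, e2⟩ | ⟨e1, e2⟩
    · exact absurd e2 (by simp)
    · exact absurd e1 (by simp)
  · exfalso
    obtain ⟨t, ht⟩ := hψB (N.b m) (D.BA _ (N.hb m))
    rw [N.hedge m, Sym2.map_pair_eq, Sym2.map_pair_eq, hψA x' hx', hψA y' hy', ht] at heq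
    rcases Sym2.eq_iff.mp heq with ⟨e1, e2⟩ | ⟨e1, e2⟩
    · exact absurd e2 (by simp)
    · exact absurd e2.symm (by simp)
  · -- both cut edges
    obtain ⟨t, ht⟩ := hψB (N.b m) (D.BA _ (N.hb m))
    obtain ⟨t', ht'⟩ := hψB (N.b m') (D.BA _ (N.hb m'))
    rw [N.hedge m, N.hedge m', Sym2.map_pair_eq, Sym2.map_pair_eq,
      hψA _ (N.ha m), hψA _ (N.ha m'), ht, ht'] at heq
    rcases Sym2.eq_iff.mp heq with ⟨e1, e2⟩ | ⟨e1, e2⟩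
    · have : N.a m = N.a m' := congrArg Subtype.val (Sum.inl.inj e1)
      rw [N.hainj this]
    · exact absurd e1 (by simp)
  done

end Stmt15

namespace Stmt15

variable {V : Type} [Fintype V]

lemma extraction (D : Setup V) (N : Enum D) (i j k l : Fin 4)
    (hij : i ≠ j) (hik : i ≠ k) (hil : i ≠ l) (hjk : j ≠ k) (hjl : j ≠ l) (hkl : k ≠ l)
    (T : Set (Sym2 ({z : V // z ∈ D.A} ⊕ Bool)))
    (hTc : Nat.card T < 4)
    (hsep : CycleSeparating (buildH D.G' D.A (N.a i) (N.a j) (N.a k) (N.a l)) T) :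
    ∃ T₀ : Set (Sym2 V), T₀.ncard ≤ 2 ∧
      (D.G'.deleteEdges T₀).Reachable (N.a i) (N.a j) ∧
      (D.G'.deleteEdges T₀).Reachable (N.a k) (N.a l) ∧
      ¬ (D.G'.deleteEdges T₀).Reachable (N.a i) (N.a k) := by
  classical
  set HH := buildH D.G' D.A (N.a i) (N.a j) (N.a k) (N.a l) with hHHdef
  set Δ := HH.deleteEdges T with hΔdef
  obtain ⟨hTsub, w₁, w₂, cyc₁, cyc₂, hcy₁, hcy₂, hnr'⟩ := hsep
  have hTn : T.ncard ≤ 3 := by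
    rw [← Nat.card_coe_set_eq]; omega
  -- basic adjacency facts
  have hadjSub : ∀ {z w : {z : V // z ∈ D.A} ⊕ Bool}, Δ.Adj z w →
      HH.Adj z w ∧ s(z, w) ∉ T := by
    intro z w h
    rwa [hΔdef, SimpleGraph.deleteEdges_adj] at h
  have hTofAdj : ∀ {z w : {z : V // z ∈ D.A} ⊕ Bool}, HH.Adj z w → ¬ Δ.Adj z w →
      s(z, w) ∈ T := by
    intro z w h hn
    by_contra hT
    exact hn (by rw [hΔdef, SimpleGraph.deleteEdges_adj]; exact ⟨h, hT⟩)
  -- the special projection map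
  set T₀ : Set (Sym2 V) :=
    (Sym2.map (ρ (A := D.A) (N.a i))) '' (T ∩ {E | ∀ z ∈ E, z.isLeft}) with hT₀def
  -- characterization of T₀
  have hchar : ∀ (x y : {z : V // z ∈ D.A}),
      s(x.val, y.val) ∈ T₀ ↔ s(Sum.inl x, Sum.inl y) ∈ T := by
    intro x y
    constructor
    · rintro ⟨E, ⟨hET, hIL⟩, hmap⟩
      revert hET hIL hmap
      induction E using Sym2.ind with
      | _ z₁ z₂ =>
        intro hmapeq hTmem hILmem
        have h₁ : z₁.isLeft := hILmem z₁ (Sym2.mem_mk_left _ _)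
        have h₂ : z₂.isLeft := hILmem z₂ (Sym2.mem_mk_right _ _)
        obtain ⟨x₁, rfl⟩ := Sum.isLeft_iff.mp h₁
        obtain ⟨x₂, rfl⟩ := Sum.isLeft_iff.mp h₂
        rw [Sym2.map_pair_eq] at hmapeq
        have hmap' : (s(x₁.val, x₂.val) : Sym2 V) = s(x.val, y.val) := hmapeq
        rcases Sym2.eq_iff.mp hmap' with ⟨e1, e2⟩ | ⟨e1, e2⟩
        · rw [show x₁ = x from Subtype.ext e1, show x₂ = y from Subtype.ext e2] at hTmem
          exact hTmem
        · rw [show x₁ = y from Subtype.ext e1, show x₂ = x from Subtype.ext e2] at hTmem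
          rw [Sym2.eq_swap]
          exact hTmem
    · intro h
      refine ⟨s(Sum.inl x, Sum.inl y), ⟨h, ?_⟩, ?_⟩
      · intro z hz
        rcases Sym2.mem_iff.mp hz with rfl | rfl <;> rfl
      · rw [Sym2.map_pair_eq]
        rfl
  -- KL machinery
  have KLC : ∀ (C : Set V) (x₀ : V) (r : D.G'.Walk x₀ x₀), r.IsCycle →
      (∀ z ∈ r.support, z ∈ C) → C ⊆ D.A → 4 ≤ (edgeBoundary D.G C).ncard := by
    intro C x₀ r hr hsub hCA
    exact boundary_ge_four D.h4 D.G'_le D.G'_le r hr hsub D.q D.hq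
      (fun a ha hmem => D.qnotA a ha (hCA hmem))
  -- every edge of the boundary of a subset of A is inside-A or a cut edge
  have hebAlt : ∀ (C : Set V), C ⊆ D.A → ∀ E ∈ edgeBoundary D.G C,
      (∀ z ∈ E, z ∈ D.A) ∨ E ∈ D.S := by
    intro C hCA E hE
    obtain ⟨hEg, x, y, rfl, hx, hy⟩ := hE
    by_cases hS : s(x, y) ∈ D.S
    · right; exact hS
    · left
      have hadj : D.G'.Adj x y := by
        rw [Setup.G', SimpleGraph.deleteEdges_adj]
        exact ⟨(SimpleGraph.mem_edgeSet D.G).mp hEg, hS⟩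
      have hyA : y ∈ D.A := D.Aclosed hadj (hCA hx)
      intro z hz
      rcases Sym2.mem_iff.mp hz with rfl | rfl
      · exact hCA hx
      · exact hyA
  -- cut edges in the boundary have their a-endpoint in C
  have hebS : ∀ (C : Set V), C ⊆ D.A → ∀ (m : Fin 4), N.e m ∈ edgeBoundary D.G C →
      N.a m ∈ C := by
    intro C hCA m hE
    obtain ⟨hEg, x, y, heq, hx, hy⟩ := hE
    have : s(N.a m, N.b m) = s(x, y) := by rw [← N.hedge m]; exact heq
    rcases Sym2.eq_iff.mp this with ⟨e1, e2⟩ | ⟨e1, e2⟩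
    · rw [e1]; exact hx
    · exfalso
      exact D.BA _ (N.hb m) (hCA (e2 ▸ hx))
  -- membership of cut edges in the boundary
  have hebSmem : ∀ (C : Set V), C ⊆ D.A → ∀ (m : Fin 4), N.a m ∈ C →
      N.e m ∈ edgeBoundary D.G C := by
    intro C hCA m ham
    refine ⟨?_, N.a m, N.b m, N.hedge m, ham, ?_⟩
    · apply D.hSsub
      rw [N.hrange]
      exact ⟨m, rfl⟩
    · intro hmem
      exact D.BA _ (N.hb m) (hCA hmem)
  -- inside-A boundary edges: their shape
  have hebIL : ∀ (C : Set V), C ⊆ D.A → ∀ E ∈ edgeBoundary D.G C, E ∉ D.S →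
      ∃ (x y : {z : V // z ∈ D.A}), E = s(x.val, y.val) ∧ x.val ∈ C ∧ ¬ y.val ∈ C ∧
        D.G'.Adj x.val y.val := by
    intro C hCA E hE hnS
    obtain ⟨hEg, x, y, rfl, hx, hy⟩ := hE
    have hadj : D.G'.Adj x y := by
      rw [Setup.G', SimpleGraph.deleteEdges_adj]
      exact ⟨(SimpleGraph.mem_edgeSet D.G).mp hEg, hnS⟩
    exact ⟨⟨x, hCA hx⟩, ⟨y, D.Aclosed hadj (hCA hx)⟩, rfl, hx, hy, hadj⟩
  -- Ω : a Δ-cycle whose component avoids both added vertices is impossible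
  have hcompx : ∀ (w : {z : V // z ∈ D.A} ⊕ Bool) (r : Δ.Walk w w), r.IsCycle →
      (Δ.Reachable w (Sum.inr true)) ∨ (Δ.Reachable w (Sum.inr false)) := by
    intro w r hr
    by_contra hcon
    push_neg at hcon
    obtain ⟨hnt, hnf⟩ := hcon
    -- w is a left vertex
    obtain ⟨z₀, rfl⟩ : ∃ z₀ : {z : V // z ∈ D.A}, w = Sum.inl z₀ := by
      rcases w with z₀ | t
      · exact ⟨z₀, rfl⟩
      · cases t
        · exact absurd (SimpleGraph.Reachable.refl _) hnf
        · exact absurd (SimpleGraph.Reachable.refl _) hnt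
    have hfree : ∀ z ∈ r.support, z.isLeft := by
      intro z hz
      rcases z with zz | tt
      · rfl
      · exfalso
        have := reach_support r _ hz
        cases tt
        · exact hnf this
        · exact hnt this
    have hWe : ∀ e ∈ r.edges, e ∈ HH.edgeSet := by
      intro e he
      exact SimpleGraph.edgeSet_mono (SimpleGraph.deleteEdges_le _) (r.edges_subset_edgeSet he)
    have hfree' : ∀ z ∈ (r.transfer HH hWe).support, z.isLeft := by
      intro z hz
      rw [SimpleGraph.Walk.support_transfer] at hz
      exact hfree z hz
    obtain ⟨r', hr', hsup', hedg'⟩ :=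
      proj_cycle (N.a i) (r.transfer HH hWe) (hr.transfer hWe) hfree'
    set C : Set V := {z : V | ∃ h : z ∈ D.A, Δ.Reachable (Sum.inl z₀) (Sum.inl ⟨z, h⟩)}
      with hCdef
    have hCA : C ⊆ D.A := fun z hz => hz.1
    have hsupC : ∀ z ∈ r'.support, z ∈ C := by
      intro z hz
      rw [hsup', SimpleGraph.Walk.support_transfer] at hz
      obtain ⟨zz, hzz, rfl⟩ := List.mem_map.mp hz
      obtain ⟨aa, rfl⟩ := Sum.isLeft_iff.mp (hfree zz hzz)
      exact ⟨aa.2, reach_support r _ hzz⟩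
    have h4le := KLC C _ r' hr' hsupC hCA
    -- the injection into T
    set ψx : V → ({z : V // z ∈ D.A} ⊕ Bool) := fun z =>
      if h : z ∈ D.A then Sum.inl ⟨z, h⟩
      else if z = N.b i ∨ z = N.b j then Sum.inr true else Sum.inr false with hψxdef
    have hψA : ∀ z (h : z ∈ D.A), ψx z = Sum.inl ⟨z, h⟩ := by
      intro z h; simp only [hψxdef, dif_pos h]
    have hψB : ∀ z, z ∉ D.A → ∃ t, ψx z = Sum.inr t := by
      intro z h
      simp only [hψxdef, dif_neg h]
      by_cases hc : z = N.b i ∨ z = N.b j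
      · exact ⟨true, if_pos hc⟩
      · exact ⟨false, if_neg hc⟩
    have hinj := cut_injOn D N ψx hψA hψB (edgeBoundary D.G C) (hebAlt C hCA)
    have hmapsto : ∀ E ∈ edgeBoundary D.G C, Sym2.map ψx E ∈ T := by
      intro E hE
      by_cases hS : E ∈ D.S
      · obtain ⟨m, rfl⟩ : ∃ m, E = N.e m := by
          rw [N.hrange] at hS; obtain ⟨m, rfl⟩ := hS; exact ⟨m, rfl⟩
        obtain ⟨hamA, hreach⟩ := hebS C hCA m hE
        have hbm : N.b m ∉ D.A := D.BA _ (N.hb m)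
        rw [N.hedge m, Sym2.map_pair_eq, hψA _ (N.ha m)]
        -- case on which side m is
        rcases fin4_cover i j k l m hij hik hil hjk hjl hkl with rfl | rfl | rfl | rfl
        · have ht : ψx (N.b m) = Sum.inr true := by
            simp [hψxdef, dif_neg hbm]
          rw [ht]
          apply hTofAdj
          · exact buildH_adj_inl_inr.mpr (by simp)
          · intro hadj
            exact hnt (SimpleGraph.Reachable.trans hreach hadj.reachable)
        · have ht : ψx (N.b m) = Sum.inr true := by
            simp [hψxdef, dif_neg hbm]
          rw [ht]
          apply hTofAdj
          · exact buildH_adj_inl_inr.mpr (by simp)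
          · intro hadj
            exact hnt (SimpleGraph.Reachable.trans hreach hadj.reachable)
        · have ht : ψx (N.b m) = Sum.inr false := by
            simp only [hψxdef, dif_neg hbm]
            refine if_neg ?_
            rintro (hc | hc)
            · exact hik (N.hbinj hc).symm
            · exact hjk (N.hbinj hc).symm
          rw [ht]
          apply hTofAdj
          · exact buildH_adj_inl_inr.mpr (by simp)
          · intro hadj
            exact hnf (SimpleGraph.Reachable.trans hreach hadj.reachable)
        · have ht : ψx (N.b m) = Sum.inr false := by
            simp only [hψxdef, dif_neg hbm]
            refine if_neg ?_
            rintro (hc | hc)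
            · exact hil (N.hbinj hc).symm
            · exact hjl (N.hbinj hc).symm
          rw [ht]
          apply hTofAdj
          · exact buildH_adj_inl_inr.mpr (by simp)
          · intro hadj
            exact hnf (SimpleGraph.Reachable.trans hreach hadj.reachable)
      · obtain ⟨xx, yy, rfl, hxC, hyC, hadj'⟩ := hebIL C hCA E hE hS
        rw [Sym2.map_pair_eq, hψA _ xx.2, hψA _ yy.2]
        apply hTofAdj
        · exact buildH_adj_inl_inl.mpr hadj'
        · intro hadj
          obtain ⟨hh, hreach⟩ := hxC
          exact hyC ⟨yy.2, SimpleGraph.Reachable.trans hreach hadj.reachable⟩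
    have hle := Set.ncard_le_ncard_of_injOn (Sym2.map ψx) hmapsto hinj (Set.toFinite _)
    omega
  -- split the two cycles into the true-side and the false-side
  obtain ⟨wT, wF, rT, rF, hcycT, hcycF, hreachT, hreachF, hnrTF⟩ :
      ∃ (wT wF : {z : V // z ∈ D.A} ⊕ Bool) (rT : Δ.Walk wT wT) (rF : Δ.Walk wF wF),
        rT.IsCycle ∧ rF.IsCycle ∧ Δ.Reachable wT (Sum.inr true) ∧
        Δ.Reachable wF (Sum.inr false) ∧ ¬ Δ.Reachable wT wF := by
    rcases hcompx w₁ cyc₁ hcy₁ with h1 | h1 <;> rcases hcompx w₂ cyc₂ hcy₂ with h2 | h2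
    · exact absurd (h1.trans h2.symm) hnr'
    · exact ⟨w₁, w₂, cyc₁, cyc₂, hcy₁, hcy₂, h1, h2, hnr'⟩
    · exact ⟨w₂, w₁, cyc₂, cyc₁, hcy₂, hcy₁, h2, h1, fun h => hnr' h.symm⟩
    · exact absurd (h1.trans h2.symm) hnr'
  -- the edge between the two added vertices is cut
  have hxxT : s((Sum.inr true : {z : V // z ∈ D.A} ⊕ Bool), Sum.inr false) ∈ T := by
    apply hTofAdj
    · exact buildH_adj_inr_inr.mpr (by simp)
    · intro hadj
      exact hnrTF ((hreachT.trans hadj.reachable).trans hreachF.symm)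
  have hT₀n : T₀.ncard ≤ 2 := by
    have h1 : (T ∩ {E | ∀ z ∈ E, z.isLeft}) ⊆
        T \ {s((Sum.inr true : {z : V // z ∈ D.A} ⊕ Bool), Sum.inr false)} := by
      rintro E ⟨hET, hIL⟩
      refine ⟨hET, ?_⟩
      intro hmem
      rw [Set.mem_singleton_iff] at hmem
      subst hmem
      have := hIL (Sum.inr true) (Sym2.mem_mk_left _ _)
      simp at this
    have h2 : T₀.ncard ≤ (T ∩ {E | ∀ z ∈ E, z.isLeft}).ncard := by
      rw [hT₀def]
      exact Set.ncard_image_le (Set.toFinite _)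
    have h3 := Set.ncard_le_ncard h1 (Set.toFinite _)
    have h4 : (T \ {s((Sum.inr true : {z : V // z ∈ D.A} ⊕ Bool), Sum.inr false)}).ncard
        = T.ncard - 1 := Set.ncard_diff_singleton_of_mem hxxT
    omega
  -- lifting and projecting reachability
  have hlift : ∀ (x y : {z : V // z ∈ D.A}),
      (D.G'.deleteEdges T₀).Reachable x.val y.val → Δ.Reachable (Sum.inl x) (Sum.inl y) := by
    intro x y h
    obtain ⟨Wk⟩ := h
    have hWe : ∀ e ∈ Wk.edges, e ∈ D.G'.edgeSet := by
      intro e he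
      exact SimpleGraph.edgeSet_mono (SimpleGraph.deleteEdges_le _) (Wk.edges_subset_edgeSet he)
    have hWe₀ : ∀ e ∈ Wk.edges, e ∉ T₀ := by
      intro e he
      have := Wk.edges_subset_edgeSet he
      rw [SimpleGraph.edgeSet_deleteEdges] at this
      exact this.2
    have hsupA : ∀ z ∈ (Wk.transfer D.G' hWe).support, z ∈ D.A := by
      intro z hz
      rw [SimpleGraph.Walk.support_transfer] at hz
      exact D.reach_mem_A x.2
        (SimpleGraph.Reachable.mono (SimpleGraph.deleteEdges_le _) (reach_support Wk z hz))
    obtain ⟨W', hspec⟩ := lift_walk (p := N.a i) (q := N.a j) (r := N.a k) (s := N.a l)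
      (Wk.transfer D.G' hWe) hsupA x.2 y.2
    have hcond : ∀ E ∈ W'.edges, E ∉ T := by
      intro E hE hET
      obtain ⟨aa, bb, rfl, hmem⟩ := hspec E hE
      rw [SimpleGraph.Walk.edges_transfer] at hmem
      exact hWe₀ _ hmem ((hchar aa bb).mpr hET)
    exact ⟨W'.toDeleteEdges T hcond⟩
  have hproj : ∀ (x y : {z : V // z ∈ D.A}) (Wk : Δ.Walk (Sum.inl x) (Sum.inl y)),
      (∀ z ∈ Wk.support, z.isLeft) → (D.G'.deleteEdges T₀).Reachable x.val y.val := by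
    intro x y Wk hfree
    have hWe : ∀ e ∈ Wk.edges, e ∈ HH.edgeSet := by
      intro e he
      exact SimpleGraph.edgeSet_mono (SimpleGraph.deleteEdges_le _) (Wk.edges_subset_edgeSet he)
    have hWeT : ∀ e ∈ Wk.edges, e ∉ T := by
      intro e he
      have := Wk.edges_subset_edgeSet he
      rw [hΔdef, SimpleGraph.edgeSet_deleteEdges] at this
      exact this.2
    have hfree' : ∀ z ∈ (Wk.transfer HH hWe).support, z.isLeft := by
      intro z hz
      rw [SimpleGraph.Walk.support_transfer] at hz
      exact hfree z hz
    obtain ⟨W', hsup, hedg⟩ := proj_walk (N.a i) (Wk.transfer HH hWe) hfree' rfl rfl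
    have hcond : ∀ e ∈ W'.edges, e ∉ T₀ := by
      intro e he
      rw [hedg, SimpleGraph.Walk.edges_transfer] at he
      obtain ⟨E, hEmem, rfl⟩ := List.mem_map.mp he
      revert hEmem
      induction E using Sym2.ind with
      | _ z₁ z₂ =>
        intro hEmem hT₀mem
        have h₁ : z₁.isLeft := hfree _ (Wk.fst_mem_support_of_mem_edges hEmem)
        have h₂ : z₂.isLeft := hfree _ (Wk.snd_mem_support_of_mem_edges hEmem)
        obtain ⟨aa, rfl⟩ := Sum.isLeft_iff.mp h₁
        obtain ⟨bb, rfl⟩ := Sum.isLeft_iff.mp h₂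
        have : (Sym2.map (ρ (A := D.A) (N.a i)) s(Sum.inl aa, Sum.inl bb)) = s(aa.val, bb.val) := by
          rw [Sym2.map_pair_eq]; rfl
        rw [this] at hT₀mem
        exact hWeT _ hEmem ((hchar aa bb).mp hT₀mem)
    exact ⟨W'.toDeleteEdges T₀ hcond⟩
  -- side processing
  have sideT : Δ.Reachable wT (Sum.inl ⟨N.a i, N.ha i⟩) ∧
      Δ.Reachable wT (Sum.inl ⟨N.a j, N.ha j⟩) ∧
      ((D.G'.deleteEdges T₀).Reachable (N.a i) (N.a j) ∨
        ∃ (z₀ : {z : V // z ∈ D.A}) (r'' : (D.G'.deleteEdges T₀).Walk z₀.val z₀.val),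
          r''.IsCycle ∧ Δ.Reachable wT (Sum.inl z₀)) := by
    have hxF_notin : ¬ Δ.Reachable wT (Sum.inr false) := fun h => hnrTF (h.trans hreachF.symm)
    rcases Classical.em ((Sum.inr true : {z : V // z ∈ D.A} ⊕ Bool) ∈ rT.support) with hxin | hxin
    · obtain ⟨y, z, wlk, hyz, hady, hadz, hxw, hsub⟩ := cycle_split rT hcycT hxin
      have hyform : ∀ (s' : {z : V // z ∈ D.A} ⊕ Bool), Δ.Adj (Sum.inr true) s' →
          ∃ (aa : {z : V // z ∈ D.A}), s' = Sum.inl aa ∧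
            (aa.val = N.a i ∨ aa.val = N.a j) := by
        intro s' had
        rcases s' with aa | t
        · refine ⟨aa, rfl, ?_⟩
          have h' := (hadjSub had).1
          have h'' := buildH_adj_inr_inl.mp h'
          simpa using h''
        · exfalso
          have h' := hadjSub had
          have ht : t = false := by
            have hne := buildH_adj_inr_inr.mp h'.1
            cases t
            · first
                | rfl
                | exact absurd rfl (Ne.symm hne)
                | exact absurd rfl hne
            · first
                | rfl
                | exact absurd rfl (Ne.symm hne)
                | exact absurd rfl hne
          subst ht
          apply h'.2
          first
            | exact hxxT
            | (rw [Sym2.eq_swap]; exact hxxT)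
      obtain ⟨ya, rfl, hyv⟩ := hyform y hady
      obtain ⟨za, rfl, hzv⟩ := hyform z hadz
      have hfreew : ∀ s' ∈ wlk.support, s'.isLeft := by
        intro s' hs
        rcases s' with aa | t
        · rfl
        · exfalso
          by_cases hht : t = true
          · subst hht; exact hxw hs
          · have hht' : t = false := by
              cases t
              · rfl
              · exact absurd rfl hht
            subst hht'
            exact hxF_notin (reach_support rT _ (hsub _ hs))
      have hRyz := hproj ya za wlk hfreew
      have hmy : Δ.Reachable wT (Sum.inl ya) := hreachT.trans hady.reachable
      have hmz : Δ.Reachable wT (Sum.inl za) := hreachT.trans hadz.reachable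
      have hne : ya.val ≠ za.val := fun h => hyz (congrArg Sum.inl (Subtype.ext h))
      rcases hyv with h1 | h1 <;> rcases hzv with h2 | h2
      · exact absurd (h1.trans h2.symm) hne
      · have e1 : ya = ⟨N.a i, N.ha i⟩ := Subtype.ext h1
        have e2 : za = ⟨N.a j, N.ha j⟩ := Subtype.ext h2
        rw [h1, h2] at hRyz
        exact ⟨e1 ▸ hmy, e2 ▸ hmz, Or.inl hRyz⟩
      · have e1 : ya = ⟨N.a j, N.ha j⟩ := Subtype.ext h1
        have e2 : za = ⟨N.a i, N.ha i⟩ := Subtype.ext h2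
        rw [h1, h2] at hRyz
        exact ⟨e2 ▸ hmz, e1 ▸ hmy, Or.inl hRyz.symm⟩
      · exact absurd (h1.trans h2.symm) hne
    · obtain ⟨z₀, rfl⟩ : ∃ z₀ : {z : V // z ∈ D.A}, wT = Sum.inl z₀ := by
        rcases hw : wT with z₀ | t
        · exact ⟨z₀, rfl⟩
        · exfalso
          by_cases hht : t = true
          · subst hht
            rw [← hw] at hxin
            exact hxin rT.start_mem_support
          · have hht' : t = false := by
              cases t
              · rfl
              · exact absurd rfl hht
            subst hht'
            rw [← hw] at hxF_notin
            exact hxF_notin (SimpleGraph.Reachable.refl _)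
      have hfree : ∀ s' ∈ rT.support, s'.isLeft := by
        intro s' hs
        rcases s' with aa | t
        · rfl
        · exfalso
          by_cases hht : t = true
          · subst hht; exact hxin hs
          · have hht' : t = false := by
              cases t
              · rfl
              · exact absurd rfl hht
            subst hht'
            exact hxF_notin (reach_support rT _ hs)
      have hWe : ∀ e ∈ rT.edges, e ∈ HH.edgeSet := fun e he =>
        SimpleGraph.edgeSet_mono (SimpleGraph.deleteEdges_le _) (rT.edges_subset_edgeSet he)
      have hfree' : ∀ s' ∈ (rT.transfer HH hWe).support, s'.isLeft := by
        intro s' hs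
        rw [SimpleGraph.Walk.support_transfer] at hs
        exact hfree s' hs
      obtain ⟨r', hr', hsup', hedg'⟩ :=
        proj_cycle (N.a i) (rT.transfer HH hWe) (hcycT.transfer hWe) hfree'
      set Cv : Set V := {z : V | ∃ h : z ∈ D.A, Δ.Reachable (Sum.inl z₀) (Sum.inl ⟨z, h⟩)}
        with hCvdef
      have hCvA : Cv ⊆ D.A := fun z hz => hz.1
      have hsupCv : ∀ z ∈ r'.support, z ∈ Cv := by
        intro z hz
        rw [hsup', SimpleGraph.Walk.support_transfer] at hz
        obtain ⟨zz, hzz, rfl⟩ := List.mem_map.mp hz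
        obtain ⟨aa, rfl⟩ := Sum.isLeft_iff.mp (hfree zz hzz)
        exact ⟨aa.2, reach_support rT _ hzz⟩
      have h4le := KLC Cv _ r' hr' hsupCv hCvA
      have hpairin : ∀ m : Fin 4, (m = i ∨ m = j) → N.a m ∈ Cv := by
        intro m hm
        by_contra hnotin
        set U1 : Set (Sym2 V) := {E | E ∈ edgeBoundary D.G Cv ∧ E ∉ D.S} ∪
          (N.e '' {m' : Fin 4 | ¬(m' = i ∨ m' = j) ∧ N.a m' ∈ Cv}) with hU1def
        set U2 : Set (Sym2 V) := N.e '' {m' : Fin 4 | (m' = i ∨ m' = j) ∧ N.a m' ∈ Cv}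
          with hU2def
        have hcover : edgeBoundary D.G Cv ⊆ U1 ∪ U2 := by
          intro E hE
          by_cases hS : E ∈ D.S
          · obtain ⟨m', rfl⟩ : ∃ m', E = N.e m' := by
              rw [N.hrange] at hS
              obtain ⟨m', rfl⟩ := hS
              exact ⟨m', rfl⟩
            have ham' := hebS Cv hCvA m' hE
            by_cases hm' : m' = i ∨ m' = j
            · exact Or.inr ⟨m', ⟨hm', ham'⟩, rfl⟩
            · exact Or.inl (Or.inr ⟨m', ⟨hm', ham'⟩, rfl⟩)
          · exact Or.inl (Or.inl ⟨hE, hS⟩)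
        have hU2le : U2.ncard ≤ 1 := by
          rcases hm with rfl | rfl
          · have hs2 : {m' : Fin 4 | (m' = m ∨ m' = j) ∧ N.a m' ∈ Cv} ⊆
                {(j : Fin 4)} := by
              rintro m' ⟨(rfl | rfl), hin⟩
              · exact absurd hin hnotin
              · rfl
            calc U2.ncard ≤ _ := Set.ncard_image_le (Set.toFinite _)
              _ ≤ ({(j : Fin 4)} : Set (Fin 4)).ncard :=
                  Set.ncard_le_ncard hs2 (Set.toFinite _)
              _ = 1 := Set.ncard_singleton _
          · have hs2 : {m' : Fin 4 | (m' = i ∨ m' = m) ∧ N.a m' ∈ Cv} ⊆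
                {(i : Fin 4)} := by
              rintro m' ⟨(rfl | rfl), hin⟩
              · rfl
              · exact absurd hin hnotin
            calc U2.ncard ≤ _ := Set.ncard_image_le (Set.toFinite _)
              _ ≤ ({(i : Fin 4)} : Set (Fin 4)).ncard :=
                  Set.ncard_le_ncard hs2 (Set.toFinite _)
              _ = 1 := Set.ncard_singleton _
        have hU1le : U1.ncard ≤ 2 := by
          set ψs : V → ({z : V // z ∈ D.A} ⊕ Bool) := fun zz =>
            if h : zz ∈ D.A then Sum.inl ⟨zz, h⟩ else Sum.inr false with hψsdef
          have hψA : ∀ zz (h : zz ∈ D.A), ψs zz = Sum.inl ⟨zz, h⟩ := by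
            intro zz h
            simp only [hψsdef, dif_pos h]
          have hψB : ∀ zz, zz ∉ D.A → ∃ t, ψs zz = Sum.inr t := by
            intro zz h
            exact ⟨false, by simp only [hψsdef, dif_neg h]⟩
          have hUgood : ∀ E ∈ U1, (∀ zz ∈ E, zz ∈ D.A) ∨ E ∈ D.S := by
            rintro E (⟨hE1, hE2⟩ | ⟨m', hm', rfl⟩)
            · rcases hebAlt Cv hCvA E hE1 with h | h
              · exact Or.inl h
              · exact absurd h hE2
            · right
              rw [N.hrange]
              exact ⟨m', rfl⟩
          have hinj := cut_injOn D N ψs hψA hψB U1 hUgood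
          have hmapsto : ∀ E ∈ U1, Sym2.map ψs E ∈
              T \ {s((Sum.inr true : {z : V // z ∈ D.A} ⊕ Bool), Sum.inr false)} := by
            rintro E (⟨hE1, hE2⟩ | ⟨m', ⟨hnotp, hin⟩, rfl⟩)
            · obtain ⟨xx, yy, rfl, hxC, hyC, hadj'⟩ := hebIL Cv hCvA E hE1 hE2
              rw [Sym2.map_pair_eq, hψA _ xx.2, hψA _ yy.2]
              refine ⟨?_, ?_⟩
              · apply hTofAdj
                · exact buildH_adj_inl_inl.mpr hadj'
                · intro hadj
                  obtain ⟨hh, hreach⟩ := hxC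
                  exact hyC ⟨yy.2, SimpleGraph.Reachable.trans hreach hadj.reachable⟩
              · intro hmem
                rw [Set.mem_singleton_iff] at hmem
                rcases Sym2.eq_iff.mp hmem with ⟨ee1, _⟩ | ⟨ee1, _⟩ <;> exact absurd ee1 (by simp)
            · have hbm' : N.b m' ∉ D.A := D.BA _ (N.hb m')
              rw [N.hedge m', Sym2.map_pair_eq, hψA _ (N.ha m')]
              have hψb : ψs (N.b m') = Sum.inr false := by
                simp only [hψsdef, dif_neg hbm']
              rw [hψb]
              obtain ⟨hh, hreach⟩ := hin
              rcases fin4_cover i j k l m' hij hik hil hjk hjl hkl with rfl | rfl | rfl | rfl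
              · exact absurd (Or.inl rfl) hnotp
              · exact absurd (Or.inr rfl) hnotp
              · refine ⟨?_, ?_⟩
                · apply hTofAdj
                  · exact buildH_adj_inl_inr.mpr (by simp)
                  · intro hadj
                    exact hxF_notin (SimpleGraph.Reachable.trans hreach hadj.reachable)
                · intro hmem
                  rw [Set.mem_singleton_iff] at hmem
                  rcases Sym2.eq_iff.mp hmem with ⟨ee1, _⟩ | ⟨ee1, _⟩ <;>
                    exact absurd ee1 (by simp)
              · refine ⟨?_, ?_⟩
                · apply hTofAdj
                  · exact buildH_adj_inl_inr.mpr (by simp)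
                  · intro hadj
                    exact hxF_notin (SimpleGraph.Reachable.trans hreach hadj.reachable)
                · intro hmem
                  rw [Set.mem_singleton_iff] at hmem
                  rcases Sym2.eq_iff.mp hmem with ⟨ee1, _⟩ | ⟨ee1, _⟩ <;>
                    exact absurd ee1 (by simp)
          have hle1 := Set.ncard_le_ncard_of_injOn (Sym2.map ψs) hmapsto hinj (Set.toFinite _)
          have hle2 : (T \ {s((Sum.inr true : {z : V // z ∈ D.A} ⊕ Bool),
              Sum.inr false)}).ncard = T.ncard - 1 :=
            Set.ncard_diff_singleton_of_mem hxxT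
          omega
        have hc1 := Set.ncard_le_ncard hcover (Set.toFinite _)
        have hc2 := Set.ncard_union_le U1 U2
        omega
      obtain ⟨hi1, hi2⟩ := hpairin i (Or.inl rfl)
      obtain ⟨hj1, hj2⟩ := hpairin j (Or.inr rfl)
      have hedgecond : ∀ e ∈ r'.edges, e ∈ (D.G'.deleteEdges T₀).edgeSet := by
        intro e he
        rw [SimpleGraph.edgeSet_deleteEdges]
        refine ⟨r'.edges_subset_edgeSet he, ?_⟩
        rw [hedg', SimpleGraph.Walk.edges_transfer] at he
        obtain ⟨E, hEmem, rfl⟩ := List.mem_map.mp he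
        revert hEmem
        induction E using Sym2.ind with
        | _ z₁ z₂ =>
          intro hEmem hT₀mem
          have h₁ := hfree _ (rT.fst_mem_support_of_mem_edges hEmem)
          have h₂ := hfree _ (rT.snd_mem_support_of_mem_edges hEmem)
          obtain ⟨aa, rfl⟩ := Sum.isLeft_iff.mp h₁
          obtain ⟨bb, rfl⟩ := Sum.isLeft_iff.mp h₂
          have heq : (Sym2.map (ρ (A := D.A) (N.a i)) s(Sum.inl aa, Sum.inl bb))
              = s(aa.val, bb.val) := by
            rw [Sym2.map_pair_eq]
            rfl
          rw [heq] at hT₀mem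
          have hTm : s(Sum.inl aa, Sum.inl bb) ∈ T := (hchar aa bb).mp hT₀mem
          have h3 := rT.edges_subset_edgeSet hEmem
          rw [hΔdef, SimpleGraph.edgeSet_deleteEdges] at h3
          exact h3.2 hTm
      exact ⟨hi2, hj2, Or.inr ⟨z₀, r'.transfer _ hedgecond, hr'.transfer _,
        SimpleGraph.Reachable.refl _⟩⟩
  have sideF : Δ.Reachable wF (Sum.inl ⟨N.a k, N.ha k⟩) ∧
      Δ.Reachable wF (Sum.inl ⟨N.a l, N.ha l⟩) ∧
      ((D.G'.deleteEdges T₀).Reachable (N.a k) (N.a l) ∨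
        ∃ (z₀ : {z : V // z ∈ D.A}) (r'' : (D.G'.deleteEdges T₀).Walk z₀.val z₀.val),
          r''.IsCycle ∧ Δ.Reachable wF (Sum.inl z₀)) := by
    have hxT_notin : ¬ Δ.Reachable wF (Sum.inr true) := fun h => hnrTF ((h.trans hreachT.symm)).symm
    rcases Classical.em ((Sum.inr false : {z : V // z ∈ D.A} ⊕ Bool) ∈ rF.support) with hxin | hxin
    · obtain ⟨y, z, wlk, hyz, hady, hadz, hxw, hsub⟩ := cycle_split rF hcycF hxin
      have hyform : ∀ (s' : {z : V // z ∈ D.A} ⊕ Bool), Δ.Adj (Sum.inr false) s' →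
          ∃ (aa : {z : V // z ∈ D.A}), s' = Sum.inl aa ∧
            (aa.val = N.a k ∨ aa.val = N.a l) := by
        intro s' had
        rcases s' with aa | t
        · refine ⟨aa, rfl, ?_⟩
          have h' := (hadjSub had).1
          have h'' := buildH_adj_inr_inl.mp h'
          simpa using h''
        · exfalso
          have h' := hadjSub had
          have ht : t = true := by
            have hne := buildH_adj_inr_inr.mp h'.1
            cases t
            · first
                | rfl
                | exact absurd rfl (Ne.symm hne)
                | exact absurd rfl hne
            · first
                | rfl
                | exact absurd rfl (Ne.symm hne)
                | exact absurd rfl hne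
          subst ht
          apply h'.2
          first
            | exact hxxT
            | (rw [Sym2.eq_swap]; exact hxxT)
      obtain ⟨ya, rfl, hyv⟩ := hyform y hady
      obtain ⟨za, rfl, hzv⟩ := hyform z hadz
      have hfreew : ∀ s' ∈ wlk.support, s'.isLeft := by
        intro s' hs
        rcases s' with aa | t
        · rfl
        · exfalso
          by_cases hht : t = false
          · subst hht; exact hxw hs
          · have hht' : t = true := by
              cases t
              · exact absurd rfl hht
              · rfl
            subst hht'
            exact hxT_notin (reach_support rF _ (hsub _ hs))
      have hRyz := hproj ya za wlk hfreew
      have hmy : Δ.Reachable wF (Sum.inl ya) := hreachF.trans hady.reachable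
      have hmz : Δ.Reachable wF (Sum.inl za) := hreachF.trans hadz.reachable
      have hne : ya.val ≠ za.val := fun h => hyz (congrArg Sum.inl (Subtype.ext h))
      rcases hyv with h1 | h1 <;> rcases hzv with h2 | h2
      · exact absurd (h1.trans h2.symm) hne
      · have e1 : ya = ⟨N.a k, N.ha k⟩ := Subtype.ext h1
        have e2 : za = ⟨N.a l, N.ha l⟩ := Subtype.ext h2
        rw [h1, h2] at hRyz
        exact ⟨e1 ▸ hmy, e2 ▸ hmz, Or.inl hRyz⟩
      · have e1 : ya = ⟨N.a l, N.ha l⟩ := Subtype.ext h1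
        have e2 : za = ⟨N.a k, N.ha k⟩ := Subtype.ext h2
        rw [h1, h2] at hRyz
        exact ⟨e2 ▸ hmz, e1 ▸ hmy, Or.inl hRyz.symm⟩
      · exact absurd (h1.trans h2.symm) hne
    · obtain ⟨z₀, rfl⟩ : ∃ z₀ : {z : V // z ∈ D.A}, wF = Sum.inl z₀ := by
        rcases hw : wF with z₀ | t
        · exact ⟨z₀, rfl⟩
        · exfalso
          by_cases hht : t = false
          · subst hht
            rw [← hw] at hxin
            exact hxin rF.start_mem_support
          · have hht' : t = true := by
              cases t
              · exact absurd rfl hht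
              · rfl
            subst hht'
            rw [← hw] at hxT_notin
            exact hxT_notin (SimpleGraph.Reachable.refl _)
      have hfree : ∀ s' ∈ rF.support, s'.isLeft := by
        intro s' hs
        rcases s' with aa | t
        · rfl
        · exfalso
          by_cases hht : t = false
          · subst hht; exact hxin hs
          · have hht' : t = true := by
              cases t
              · exact absurd rfl hht
              · rfl
            subst hht'
            exact hxT_notin (reach_support rF _ hs)
      have hWe : ∀ e ∈ rF.edges, e ∈ HH.edgeSet := fun e he =>
        SimpleGraph.edgeSet_mono (SimpleGraph.deleteEdges_le _) (rF.edges_subset_edgeSet he)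
      have hfree' : ∀ s' ∈ (rF.transfer HH hWe).support, s'.isLeft := by
        intro s' hs
        rw [SimpleGraph.Walk.support_transfer] at hs
        exact hfree s' hs
      obtain ⟨r', hr', hsup', hedg'⟩ :=
        proj_cycle (N.a i) (rF.transfer HH hWe) (hcycF.transfer hWe) hfree'
      set Cv : Set V := {z : V | ∃ h : z ∈ D.A, Δ.Reachable (Sum.inl z₀) (Sum.inl ⟨z, h⟩)}
        with hCvdef
      have hCvA : Cv ⊆ D.A := fun z hz => hz.1
      have hsupCv : ∀ z ∈ r'.support, z ∈ Cv := by
        intro z hz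
        rw [hsup', SimpleGraph.Walk.support_transfer] at hz
        obtain ⟨zz, hzz, rfl⟩ := List.mem_map.mp hz
        obtain ⟨aa, rfl⟩ := Sum.isLeft_iff.mp (hfree zz hzz)
        exact ⟨aa.2, reach_support rF _ hzz⟩
      have h4le := KLC Cv _ r' hr' hsupCv hCvA
      have hpairin : ∀ m : Fin 4, (m = k ∨ m = l) → N.a m ∈ Cv := by
        intro m hm
        by_contra hnotin
        set U1 : Set (Sym2 V) := {E | E ∈ edgeBoundary D.G Cv ∧ E ∉ D.S} ∪
          (N.e '' {m' : Fin 4 | ¬(m' = k ∨ m' = l) ∧ N.a m' ∈ Cv}) with hU1def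
        set U2 : Set (Sym2 V) := N.e '' {m' : Fin 4 | (m' = k ∨ m' = l) ∧ N.a m' ∈ Cv}
          with hU2def
        have hcover : edgeBoundary D.G Cv ⊆ U1 ∪ U2 := by
          intro E hE
          by_cases hS : E ∈ D.S
          · obtain ⟨m', rfl⟩ : ∃ m', E = N.e m' := by
              rw [N.hrange] at hS
              obtain ⟨m', rfl⟩ := hS
              exact ⟨m', rfl⟩
            have ham' := hebS Cv hCvA m' hE
            by_cases hm' : m' = k ∨ m' = l
            · exact Or.inr ⟨m', ⟨hm', ham'⟩, rfl⟩
            · exact Or.inl (Or.inr ⟨m', ⟨hm', ham'⟩, rfl⟩)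
          · exact Or.inl (Or.inl ⟨hE, hS⟩)
        have hU2le : U2.ncard ≤ 1 := by
          rcases hm with rfl | rfl
          · have hs2 : {m' : Fin 4 | (m' = m ∨ m' = l) ∧ N.a m' ∈ Cv} ⊆
                {(l : Fin 4)} := by
              rintro m' ⟨(rfl | rfl), hin⟩
              · exact absurd hin hnotin
              · rfl
            calc U2.ncard ≤ _ := Set.ncard_image_le (Set.toFinite _)
              _ ≤ ({(l : Fin 4)} : Set (Fin 4)).ncard :=
                  Set.ncard_le_ncard hs2 (Set.toFinite _)
              _ = 1 := Set.ncard_singleton _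
          · have hs2 : {m' : Fin 4 | (m' = k ∨ m' = m) ∧ N.a m' ∈ Cv} ⊆
                {(k : Fin 4)} := by
              rintro m' ⟨(rfl | rfl), hin⟩
              · rfl
              · exact absurd hin hnotin
            calc U2.ncard ≤ _ := Set.ncard_image_le (Set.toFinite _)
              _ ≤ ({(k : Fin 4)} : Set (Fin 4)).ncard :=
                  Set.ncard_le_ncard hs2 (Set.toFinite _)
              _ = 1 := Set.ncard_singleton _
        have hU1le : U1.ncard ≤ 2 := by
          set ψs : V → ({z : V // z ∈ D.A} ⊕ Bool) := fun zz =>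
            if h : zz ∈ D.A then Sum.inl ⟨zz, h⟩ else Sum.inr true with hψsdef
          have hψA : ∀ zz (h : zz ∈ D.A), ψs zz = Sum.inl ⟨zz, h⟩ := by
            intro zz h
            simp only [hψsdef, dif_pos h]
          have hψB : ∀ zz, zz ∉ D.A → ∃ t, ψs zz = Sum.inr t := by
            intro zz h
            exact ⟨true, by simp only [hψsdef, dif_neg h]⟩
          have hUgood : ∀ E ∈ U1, (∀ zz ∈ E, zz ∈ D.A) ∨ E ∈ D.S := by
            rintro E (⟨hE1, hE2⟩ | ⟨m', hm', rfl⟩)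
            · rcases hebAlt Cv hCvA E hE1 with h | h
              · exact Or.inl h
              · exact absurd h hE2
            · right
              rw [N.hrange]
              exact ⟨m', rfl⟩
          have hinj := cut_injOn D N ψs hψA hψB U1 hUgood
          have hmapsto : ∀ E ∈ U1, Sym2.map ψs E ∈
              T \ {s((Sum.inr true : {z : V // z ∈ D.A} ⊕ Bool), Sum.inr false)} := by
            rintro E (⟨hE1, hE2⟩ | ⟨m', ⟨hnotp, hin⟩, rfl⟩)
            · obtain ⟨xx, yy, rfl, hxC, hyC, hadj'⟩ := hebIL Cv hCvA E hE1 hE2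
              rw [Sym2.map_pair_eq, hψA _ xx.2, hψA _ yy.2]
              refine ⟨?_, ?_⟩
              · apply hTofAdj
                · exact buildH_adj_inl_inl.mpr hadj'
                · intro hadj
                  obtain ⟨hh, hreach⟩ := hxC
                  exact hyC ⟨yy.2, SimpleGraph.Reachable.trans hreach hadj.reachable⟩
              · intro hmem
                rw [Set.mem_singleton_iff] at hmem
                rcases Sym2.eq_iff.mp hmem with ⟨ee1, _⟩ | ⟨ee1, _⟩ <;> exact absurd ee1 (by simp)
            · have hbm' : N.b m' ∉ D.A := D.BA _ (N.hb m')
              rw [N.hedge m', Sym2.map_pair_eq, hψA _ (N.ha m')]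
              have hψb : ψs (N.b m') = Sum.inr true := by
                simp only [hψsdef, dif_neg hbm']
              rw [hψb]
              obtain ⟨hh, hreach⟩ := hin
              rcases fin4_cover i j k l m' hij hik hil hjk hjl hkl with rfl | rfl | rfl | rfl
              · refine ⟨?_, ?_⟩
                · apply hTofAdj
                  · exact buildH_adj_inl_inr.mpr (by simp)
                  · intro hadj
                    exact hxT_notin (SimpleGraph.Reachable.trans hreach hadj.reachable)
                · intro hmem
                  rw [Set.mem_singleton_iff] at hmem
                  rcases Sym2.eq_iff.mp hmem with ⟨ee1, _⟩ | ⟨ee1, _⟩ <;>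
                    exact absurd ee1 (by simp)
              · refine ⟨?_, ?_⟩
                · apply hTofAdj
                  · exact buildH_adj_inl_inr.mpr (by simp)
                  · intro hadj
                    exact hxT_notin (SimpleGraph.Reachable.trans hreach hadj.reachable)
                · intro hmem
                  rw [Set.mem_singleton_iff] at hmem
                  rcases Sym2.eq_iff.mp hmem with ⟨ee1, _⟩ | ⟨ee1, _⟩ <;>
                    exact absurd ee1 (by simp)
              · exact absurd (Or.inl rfl) hnotp
              · exact absurd (Or.inr rfl) hnotp
          have hle1 := Set.ncard_le_ncard_of_injOn (Sym2.map ψs) hmapsto hinj (Set.toFinite _)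
          have hle2 : (T \ {s((Sum.inr true : {z : V // z ∈ D.A} ⊕ Bool),
              Sum.inr false)}).ncard = T.ncard - 1 :=
            Set.ncard_diff_singleton_of_mem hxxT
          omega
        have hc1 := Set.ncard_le_ncard hcover (Set.toFinite _)
        have hc2 := Set.ncard_union_le U1 U2
        omega
      obtain ⟨hi1, hi2⟩ := hpairin k (Or.inl rfl)
      obtain ⟨hj1, hj2⟩ := hpairin l (Or.inr rfl)
      have hedgecond : ∀ e ∈ r'.edges, e ∈ (D.G'.deleteEdges T₀).edgeSet := by
        intro e he
        rw [SimpleGraph.edgeSet_deleteEdges]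
        refine ⟨r'.edges_subset_edgeSet he, ?_⟩
        rw [hedg', SimpleGraph.Walk.edges_transfer] at he
        obtain ⟨E, hEmem, rfl⟩ := List.mem_map.mp he
        revert hEmem
        induction E using Sym2.ind with
        | _ z₁ z₂ =>
          intro hEmem hT₀mem
          have h₁ := hfree _ (rF.fst_mem_support_of_mem_edges hEmem)
          have h₂ := hfree _ (rF.snd_mem_support_of_mem_edges hEmem)
          obtain ⟨aa, rfl⟩ := Sum.isLeft_iff.mp h₁
          obtain ⟨bb, rfl⟩ := Sum.isLeft_iff.mp h₂
          have heq : (Sym2.map (ρ (A := D.A) (N.a i)) s(Sum.inl aa, Sum.inl bb))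
              = s(aa.val, bb.val) := by
            rw [Sym2.map_pair_eq]
            rfl
          rw [heq] at hT₀mem
          have hTm : s(Sum.inl aa, Sum.inl bb) ∈ T := (hchar aa bb).mp hT₀mem
          have h3 := rF.edges_subset_edgeSet hEmem
          rw [hΔdef, SimpleGraph.edgeSet_deleteEdges] at h3
          exact h3.2 hTm
      exact ⟨hi2, hj2, Or.inr ⟨z₀, r'.transfer _ hedgecond, hr'.transfer _,
        SimpleGraph.Reachable.refl _⟩⟩
  obtain ⟨hmi, hmj, hTor⟩ := sideT
  obtain ⟨hmk, hml, hFor⟩ := sideF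
  -- non-reachability across the two sides
  have hRik : ¬ (D.G'.deleteEdges T₀).Reachable (N.a i) (N.a k) := by
    intro h
    exact hnrTF ((hmi.trans (hlift ⟨N.a i, N.ha i⟩ ⟨N.a k, N.ha k⟩ h)).trans hmk.symm)
  -- resolve the κ-cases
  have hRij : (D.G'.deleteEdges T₀).Reachable (N.a i) (N.a j) := by
    rcases hTor with h | ⟨z₀, r'', hr'', hwz⟩
    · exact h
    · set K : Set V := {z : V | (D.G'.deleteEdges T₀).Reachable z₀.val z} with hKdef
      have hKA : K ⊆ D.A := fun z hz =>
        D.reach_mem_A z₀.2 (SimpleGraph.Reachable.mono (SimpleGraph.deleteEdges_le _) hz)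
      have hWe'' : ∀ e ∈ r''.edges, e ∈ D.G'.edgeSet := fun e he =>
        SimpleGraph.edgeSet_mono (SimpleGraph.deleteEdges_le _) (r''.edges_subset_edgeSet he)
      have hsupK : ∀ z ∈ (r''.transfer D.G' hWe'').support, z ∈ K := by
        intro z hz
        rw [SimpleGraph.Walk.support_transfer] at hz
        exact reach_support r'' z hz
      have h4le := KLC K _ (r''.transfer D.G' hWe'') (hr''.transfer hWe'') hsupK hKA
      have hcover : edgeBoundary D.G K ⊆ T₀ ∪ (N.e '' {m : Fin 4 | N.a m ∈ K}) := by
        intro E hE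
        by_cases hS : E ∈ D.S
        · obtain ⟨m, rfl⟩ : ∃ m, E = N.e m := by
            rw [N.hrange] at hS
            obtain ⟨m, rfl⟩ := hS
            exact ⟨m, rfl⟩
          exact Or.inr ⟨m, hebS K hKA m hE, rfl⟩
        · obtain ⟨xx, yy, rfl, hxK, hyK, hadj'⟩ := hebIL K hKA E hE hS
          left
          by_contra hnT₀
          apply hyK
          have hadj'' : (D.G'.deleteEdges T₀).Adj xx.val yy.val := by
            rw [SimpleGraph.deleteEdges_adj]
            exact ⟨hadj', hnT₀⟩
          exact SimpleGraph.Reachable.trans hxK hadj''.reachable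
      have hMcard : 1 < ({m : Fin 4 | N.a m ∈ K}).ncard := by
        have hc1 := Set.ncard_le_ncard hcover (Set.toFinite _)
        have hc2 := Set.ncard_union_le T₀ (N.e '' {m : Fin 4 | N.a m ∈ K})
        have hc3 := Set.ncard_image_le (s := {m : Fin 4 | N.a m ∈ K}) (f := N.e)
          (Set.toFinite _)
        omega
      obtain ⟨m₁, hm₁, m₂, hm₂, hmne⟩ := (Set.one_lt_ncard (Set.toFinite _)).mp hMcard
      have hside : ∀ m : Fin 4, N.a m ∈ K → m = i ∨ m = j := by
        intro m hm
        have hreach : Δ.Reachable wT (Sum.inl ⟨N.a m, N.ha m⟩) :=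
          hwz.trans (hlift z₀ ⟨N.a m, N.ha m⟩ hm)
        rcases fin4_cover i j k l m hij hik hil hjk hjl hkl with rfl | rfl | rfl | rfl
        · exact Or.inl rfl
        · exact Or.inr rfl
        · exact absurd (hreach.trans hmk.symm) hnrTF
        · exact absurd (hreach.trans hml.symm) hnrTF
      have r1 : (D.G'.deleteEdges T₀).Reachable z₀.val (N.a m₁) := hm₁
      have r2 : (D.G'.deleteEdges T₀).Reachable z₀.val (N.a m₂) := hm₂
      rcases hside m₁ hm₁ with e1 | e1 <;> rcases hside m₂ hm₂ with e2 | e2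
      · exact absurd (e1.trans e2.symm) hmne
      · rw [e1] at r1
        rw [e2] at r2
        exact r1.symm.trans r2
      · rw [e1] at r1
        rw [e2] at r2
        exact r2.symm.trans r1
      · exact absurd (e1.trans e2.symm) hmne
  have hRkl : (D.G'.deleteEdges T₀).Reachable (N.a k) (N.a l) := by
    rcases hFor with h | ⟨z₀, r'', hr'', hwz⟩
    · exact h
    · set K : Set V := {z : V | (D.G'.deleteEdges T₀).Reachable z₀.val z} with hKdef
      have hKA : K ⊆ D.A := fun z hz =>
        D.reach_mem_A z₀.2 (SimpleGraph.Reachable.mono (SimpleGraph.deleteEdges_le _) hz)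
      have hWe'' : ∀ e ∈ r''.edges, e ∈ D.G'.edgeSet := fun e he =>
        SimpleGraph.edgeSet_mono (SimpleGraph.deleteEdges_le _) (r''.edges_subset_edgeSet he)
      have hsupK : ∀ z ∈ (r''.transfer D.G' hWe'').support, z ∈ K := by
        intro z hz
        rw [SimpleGraph.Walk.support_transfer] at hz
        exact reach_support r'' z hz
      have h4le := KLC K _ (r''.transfer D.G' hWe'') (hr''.transfer hWe'') hsupK hKA
      have hcover : edgeBoundary D.G K ⊆ T₀ ∪ (N.e '' {m : Fin 4 | N.a m ∈ K}) := by
        intro E hE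
        by_cases hS : E ∈ D.S
        · obtain ⟨m, rfl⟩ : ∃ m, E = N.e m := by
            rw [N.hrange] at hS
            obtain ⟨m, rfl⟩ := hS
            exact ⟨m, rfl⟩
          exact Or.inr ⟨m, hebS K hKA m hE, rfl⟩
        · obtain ⟨xx, yy, rfl, hxK, hyK, hadj'⟩ := hebIL K hKA E hE hS
          left
          by_contra hnT₀
          apply hyK
          have hadj'' : (D.G'.deleteEdges T₀).Adj xx.val yy.val := by
            rw [SimpleGraph.deleteEdges_adj]
            exact ⟨hadj', hnT₀⟩
          exact SimpleGraph.Reachable.trans hxK hadj''.reachable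
      have hMcard : 1 < ({m : Fin 4 | N.a m ∈ K}).ncard := by
        have hc1 := Set.ncard_le_ncard hcover (Set.toFinite _)
        have hc2 := Set.ncard_union_le T₀ (N.e '' {m : Fin 4 | N.a m ∈ K})
        have hc3 := Set.ncard_image_le (s := {m : Fin 4 | N.a m ∈ K}) (f := N.e)
          (Set.toFinite _)
        omega
      obtain ⟨m₁, hm₁, m₂, hm₂, hmne⟩ := (Set.one_lt_ncard (Set.toFinite _)).mp hMcard
      have hside : ∀ m : Fin 4, N.a m ∈ K → m = k ∨ m = l := by
        intro m hm
        have hreach : Δ.Reachable wF (Sum.inl ⟨N.a m, N.ha m⟩) :=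
          hwz.trans (hlift z₀ ⟨N.a m, N.ha m⟩ hm)
        rcases fin4_cover i j k l m hij hik hil hjk hjl hkl with rfl | rfl | rfl | rfl
        · exact absurd ((hreach.trans hmi.symm)).symm hnrTF
        · exact absurd ((hreach.trans hmj.symm)).symm hnrTF
        · exact Or.inl rfl
        · exact Or.inr rfl
      have r1 : (D.G'.deleteEdges T₀).Reachable z₀.val (N.a m₁) := hm₁
      have r2 : (D.G'.deleteEdges T₀).Reachable z₀.val (N.a m₂) := hm₂
      rcases hside m₁ hm₁ with e1 | e1 <;> rcases hside m₂ hm₂ with e2 | e2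
      · exact absurd (e1.trans e2.symm) hmne
      · rw [e1] at r1
        rw [e2] at r2
        exact r1.symm.trans r2
      · rw [e1] at r1
        rw [e2] at r2
        exact r2.symm.trans r1
      · exact absurd (e1.trans e2.symm) hmne
  exact ⟨T₀, hT₀n, hRij, hRkl, hRik⟩

end Stmt15

namespace Stmt15

variable {V : Type} [Fintype V]

lemma not_c4ec_elim {W : Type} {H : SimpleGraph W} (h : ¬ CyclicallyEdgeConnected H 4) :
    ∃ T : Set (Sym2 W), Nat.card T < 4 ∧ CycleSeparating H T := by
  unfold CyclicallyEdgeConnected at h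
  push_neg at h
  obtain ⟨T, h1, h2⟩ := h
  exact ⟨T, h1, h2⟩

lemma S_edge_at (D : Setup V) (N : Enum D) (z z' : V) (hz : z ∈ D.A) :
    s(z, z') ∈ D.S ↔ ∃ m : Fin 4, z = N.a m ∧ z' = N.b m := by
  constructor
  · intro h
    rw [N.hrange] at h
    obtain ⟨m, hm⟩ := h
    have : s(N.a m, N.b m) = s(z, z') := by rw [← N.hedge m]; exact hm
    rcases Sym2.eq_iff.mp this with ⟨e1, e2⟩ | ⟨e1, e2⟩
    · exact ⟨m, e1.symm, e2.symm⟩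
    · exfalso
      exact D.BA _ (N.hb m) (e2 ▸ hz)
  · rintro ⟨m, rfl, rfl⟩
    rw [N.hrange, ← N.hedge m]
    exact ⟨m, rfl⟩

lemma nbr_boundary (D : Setup V) (N : Enum D) (m : Fin 4) :
    (D.G'.neighborSet (N.a m)).ncard = 2 := by
  have hset : D.G'.neighborSet (N.a m) = D.G.neighborSet (N.a m) \ {N.b m} := by
    ext z'
    constructor
    · intro h
      have h' : D.G.Adj (N.a m) z' ∧ s(N.a m, z') ∉ D.S := by
        rw [← SimpleGraph.deleteEdges_adj]; exact h
      refine ⟨h'.1, ?_⟩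
      intro hmem
      rw [Set.mem_singleton_iff] at hmem
      subst hmem
      exact h'.2 ((S_edge_at D N _ _ (N.ha m)).mpr ⟨m, rfl, rfl⟩)
    · rintro ⟨hadj, hne⟩
      have : s(N.a m, z') ∉ D.S := by
        intro hmem
        obtain ⟨m', e1, e2⟩ := (S_edge_at D N _ _ (N.ha m)).mp hmem
        have : m = m' := N.hainj e1
        subst this
        exact hne (e2 ▸ rfl)
      exact (SimpleGraph.deleteEdges_adj).mpr ⟨hadj, this⟩
  rw [hset]
  have hb : N.b m ∈ D.G.neighborSet (N.a m) := by
    have : s(N.a m, N.b m) ∈ D.G.edgeSet := by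
      apply D.hSsub
      rw [N.hrange, ← N.hedge m]
      exact ⟨m, rfl⟩
    rwa [SimpleGraph.mem_edgeSet] at this
  rw [Set.ncard_diff_singleton_of_mem hb]
  have := D.hcubic (N.a m)
  rw [Nat.card_coe_set_eq] at this
  omega

lemma nbr_inner (D : Setup V) (N : Enum D) (z : V) (hz : z ∈ D.A)
    (hne : ∀ m : Fin 4, z ≠ N.a m) : (D.G'.neighborSet z).ncard = 3 := by
  have hset : D.G'.neighborSet z = D.G.neighborSet z := by
    ext z'
    constructor
    · intro h
      exact ((SimpleGraph.deleteEdges_adj).mp h).1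
    · intro h
      refine (SimpleGraph.deleteEdges_adj).mpr ⟨h, ?_⟩
      intro hmem
      obtain ⟨m, e1, e2⟩ := (S_edge_at D N _ _ hz).mp hmem
      exact hne m e1
  rw [hset]
  have := D.hcubic z
  rwa [Nat.card_coe_set_eq] at this

lemma nbr_subset_A (D : Setup V) (z : V) (hz : z ∈ D.A) :
    D.G'.neighborSet z ⊆ D.A := fun z' h => D.Aclosed h hz

lemma buildH_connected (D : Setup V) (N : Enum D) (i j k l : Fin 4) :
    (buildH D.G' D.A (N.a i) (N.a j) (N.a k) (N.a l)).Connected := by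
  rw [SimpleGraph.connected_iff]
  refine ⟨?_, ⟨Sum.inr true⟩⟩
  have key : ∀ w, (buildH D.G' D.A (N.a i) (N.a j) (N.a k) (N.a l)).Reachable w
      (Sum.inr true) := by
    intro w
    rcases w with z | t
    · -- inl z reaches inl (a i) reaches inr true
      have hreach : D.G'.Reachable z.val (N.a i) :=
        (SimpleGraph.Reachable.symm z.2).trans (N.ha i)
      obtain ⟨Wk⟩ := hreach
      have hsup : ∀ x ∈ Wk.support, x ∈ D.A := by
        intro x hx
        exact D.reach_mem_A z.2 (reach_support Wk x hx)
      obtain ⟨W', _⟩ := lift_walk (p := N.a i) (q := N.a j) (r := N.a k) (s := N.a l)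
        Wk hsup z.2 (N.ha i)
      refine SimpleGraph.Reachable.trans ⟨W'⟩ ?_
      exact SimpleGraph.Adj.reachable (buildH_adj_inl_inr.mpr (by simp))
    · cases t
      · exact SimpleGraph.Adj.reachable (buildH_adj_inr_inr.mpr (by simp))
      · rfl
  intro w₁ w₂
  exact (key w₁).trans (key w₂).symm

end Stmt15

namespace Stmt15

variable {V : Type} [Fintype V]

lemma buildH_cubic (D : Setup V) (N : Enum D) (i j k l : Fin 4)
    (hij : i ≠ j) (hik : i ≠ k) (hil : i ≠ l) (hjk : j ≠ k) (hjl : j ≠ l) (hkl : k ≠ l) :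
    ∀ w, Nat.card ((buildH D.G' D.A (N.a i) (N.a j) (N.a k) (N.a l)).neighborSet w) = 3 := by
  classical
  intro w
  rw [Nat.card_coe_set_eq]
  set HH := buildH D.G' D.A (N.a i) (N.a j) (N.a k) (N.a l) with hHH
  have himg : ∀ z : {z : V // z ∈ D.A},
      ((Sum.inl '' {y : {z : V // z ∈ D.A} | D.G'.Adj z.val y.val}) :
        Set ({z : V // z ∈ D.A} ⊕ Bool)).ncard = (D.G'.neighborSet z.val).ncard := by
    intro z
    rw [Set.ncard_image_of_injective _ Sum.inl_injective]
    have hval : Subtype.val '' {y : {z : V // z ∈ D.A} | D.G'.Adj z.val y.val}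
        = D.G'.neighborSet z.val := by
      ext z'
      constructor
      · rintro ⟨y, hy, rfl⟩
        exact hy
      · intro h
        exact ⟨⟨z', D.Aclosed h z.2⟩, h, rfl⟩
    rw [← hval, Set.ncard_image_of_injective _ Subtype.val_injective]
  rcases w with z | t
  · by_cases hzb : ∃ m : Fin 4, z.val = N.a m
    · obtain ⟨m, hm⟩ := hzb
      rcases fin4_cover i j k l m hij hik hil hjk hjl hkl with rfl | rfl | rfl | rfl
      · have hset : HH.neighborSet (Sum.inl z) =
            (Sum.inl '' {y : {z : V // z ∈ D.A} | D.G'.Adj z.val y.val}) ∪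
              {(Sum.inr true : {z : V // z ∈ D.A} ⊕ Bool)} := by
          ext zz
          simp only [SimpleGraph.mem_neighborSet]
          rcases zz with aa | t
          · constructor
            · intro h
              exact Or.inl ⟨aa, h, rfl⟩
            · rintro (⟨y, hy, hyy⟩ | hsing)
              · have : y = aa := Sum.inl_injective hyy
                subst this
                exact hy
              · exact absurd (Set.mem_singleton_iff.mp hsing) (by simp)
          · constructor
            · intro h
              have h' := buildH_adj_inl_inr.mp h
              cases t
              · simp only [Bool.false_eq_true, if_false] at h'
                first
                  | exact Or.inr rfl
                  | (exfalso
                     rcases h' with h'' | h''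
                     · rw [hm] at h''
                       first
                         | exact hik (N.hainj h'')
                         | exact hik (N.hainj h'').symm
                     · rw [hm] at h''
                       first
                         | exact hil (N.hainj h'')
                         | exact hil (N.hainj h'').symm)
              · simp only [if_true] at h'
                first
                  | exact Or.inr rfl
                  | (exfalso
                     rcases h' with h'' | h''
                     · rw [hm] at h''
                       first
                         | exact hik (N.hainj h'')
                         | exact hik (N.hainj h'').symm
                     · rw [hm] at h''
                       first
                         | exact hil (N.hainj h'')
                         | exact hil (N.hainj h'').symm)
            · rintro (⟨y, hy, hyy⟩ | hsing)
              · exact absurd hyy (by simp)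
              · have ht : t = true := Sum.inr_injective (Set.mem_singleton_iff.mp hsing)
                subst ht
                apply buildH_adj_inl_inr.mpr
                first
                  | (simp only [if_true]
                     exact Or.inl hm)
                  | (simp only [Bool.false_eq_true, if_false]
                     exact Or.inl hm)
        rw [hset]
        have hdisj : Disjoint
            ((Sum.inl '' {y : {z : V // z ∈ D.A} | D.G'.Adj z.val y.val}) :
              Set ({z : V // z ∈ D.A} ⊕ Bool))
            {(Sum.inr true : {z : V // z ∈ D.A} ⊕ Bool)} := by
          rw [Set.disjoint_right]
          intro x hx
          rw [Set.mem_singleton_iff] at hx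
          subst hx
          rintro ⟨y, hy, hyy⟩
          exact absurd hyy (by simp)
        rw [Set.ncard_union_eq hdisj (Set.toFinite _) (Set.toFinite _), himg z,
          Set.ncard_singleton]
        rw [hm, nbr_boundary D N m]
      · have hset : HH.neighborSet (Sum.inl z) =
            (Sum.inl '' {y : {z : V // z ∈ D.A} | D.G'.Adj z.val y.val}) ∪
              {(Sum.inr true : {z : V // z ∈ D.A} ⊕ Bool)} := by
          ext zz
          simp only [SimpleGraph.mem_neighborSet]
          rcases zz with aa | t
          · constructor
            · intro h
              exact Or.inl ⟨aa, h, rfl⟩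
            · rintro (⟨y, hy, hyy⟩ | hsing)
              · have : y = aa := Sum.inl_injective hyy
                subst this
                exact hy
              · exact absurd (Set.mem_singleton_iff.mp hsing) (by simp)
          · constructor
            · intro h
              have h' := buildH_adj_inl_inr.mp h
              cases t
              · simp only [Bool.false_eq_true, if_false] at h'
                first
                  | exact Or.inr rfl
                  | (exfalso
                     rcases h' with h'' | h''
                     · rw [hm] at h''
                       first
                         | exact hjk (N.hainj h'')
                         | exact hjk (N.hainj h'').symm
                     · rw [hm] at h''
                       first
                         | exact hjl (N.hainj h'')
                         | exact hjl (N.hainj h'').symm)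
              · simp only [if_true] at h'
                first
                  | exact Or.inr rfl
                  | (exfalso
                     rcases h' with h'' | h''
                     · rw [hm] at h''
                       first
                         | exact hjk (N.hainj h'')
                         | exact hjk (N.hainj h'').symm
                     · rw [hm] at h''
                       first
                         | exact hjl (N.hainj h'')
                         | exact hjl (N.hainj h'').symm)
            · rintro (⟨y, hy, hyy⟩ | hsing)
              · exact absurd hyy (by simp)
              · have ht : t = true := Sum.inr_injective (Set.mem_singleton_iff.mp hsing)
                subst ht
                apply buildH_adj_inl_inr.mpr
                first
                  | (simp only [if_true]
                     exact Or.inr hm)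
                  | (simp only [Bool.false_eq_true, if_false]
                     exact Or.inr hm)
        rw [hset]
        have hdisj : Disjoint
            ((Sum.inl '' {y : {z : V // z ∈ D.A} | D.G'.Adj z.val y.val}) :
              Set ({z : V // z ∈ D.A} ⊕ Bool))
            {(Sum.inr true : {z : V // z ∈ D.A} ⊕ Bool)} := by
          rw [Set.disjoint_right]
          intro x hx
          rw [Set.mem_singleton_iff] at hx
          subst hx
          rintro ⟨y, hy, hyy⟩
          exact absurd hyy (by simp)
        rw [Set.ncard_union_eq hdisj (Set.toFinite _) (Set.toFinite _), himg z,
          Set.ncard_singleton]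
        rw [hm, nbr_boundary D N m]
      · have hset : HH.neighborSet (Sum.inl z) =
            (Sum.inl '' {y : {z : V // z ∈ D.A} | D.G'.Adj z.val y.val}) ∪
              {(Sum.inr false : {z : V // z ∈ D.A} ⊕ Bool)} := by
          ext zz
          simp only [SimpleGraph.mem_neighborSet]
          rcases zz with aa | t
          · constructor
            · intro h
              exact Or.inl ⟨aa, h, rfl⟩
            · rintro (⟨y, hy, hyy⟩ | hsing)
              · have : y = aa := Sum.inl_injective hyy
                subst this
                exact hy
              · exact absurd (Set.mem_singleton_iff.mp hsing) (by simp)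
          · constructor
            · intro h
              have h' := buildH_adj_inl_inr.mp h
              cases t
              · simp only [Bool.false_eq_true, if_false] at h'
                first
                  | exact Or.inr rfl
                  | (exfalso
                     rcases h' with h'' | h''
                     · rw [hm] at h''
                       first
                         | exact hik (N.hainj h'')
                         | exact hik (N.hainj h'').symm
                     · rw [hm] at h''
                       first
                         | exact hjk (N.hainj h'')
                         | exact hjk (N.hainj h'').symm)
              · simp only [if_true] at h'
                first
                  | exact Or.inr rfl
                  | (exfalso
                     rcases h' with h'' | h''
                     · rw [hm] at h''
                       first
                         | exact hik (N.hainj h'')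
                         | exact hik (N.hainj h'').symm
                     · rw [hm] at h''
                       first
                         | exact hjk (N.hainj h'')
                         | exact hjk (N.hainj h'').symm)
            · rintro (⟨y, hy, hyy⟩ | hsing)
              · exact absurd hyy (by simp)
              · have ht : t = false := Sum.inr_injective (Set.mem_singleton_iff.mp hsing)
                subst ht
                apply buildH_adj_inl_inr.mpr
                first
                  | (simp only [if_true]
                     exact Or.inl hm)
                  | (simp only [Bool.false_eq_true, if_false]
                     exact Or.inl hm)
        rw [hset]
        have hdisj : Disjoint
            ((Sum.inl '' {y : {z : V // z ∈ D.A} | D.G'.Adj z.val y.val}) :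
              Set ({z : V // z ∈ D.A} ⊕ Bool))
            {(Sum.inr false : {z : V // z ∈ D.A} ⊕ Bool)} := by
          rw [Set.disjoint_right]
          intro x hx
          rw [Set.mem_singleton_iff] at hx
          subst hx
          rintro ⟨y, hy, hyy⟩
          exact absurd hyy (by simp)
        rw [Set.ncard_union_eq hdisj (Set.toFinite _) (Set.toFinite _), himg z,
          Set.ncard_singleton]
        rw [hm, nbr_boundary D N m]
      · have hset : HH.neighborSet (Sum.inl z) =
            (Sum.inl '' {y : {z : V // z ∈ D.A} | D.G'.Adj z.val y.val}) ∪
              {(Sum.inr false : {z : V // z ∈ D.A} ⊕ Bool)} := by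
          ext zz
          simp only [SimpleGraph.mem_neighborSet]
          rcases zz with aa | t
          · constructor
            · intro h
              exact Or.inl ⟨aa, h, rfl⟩
            · rintro (⟨y, hy, hyy⟩ | hsing)
              · have : y = aa := Sum.inl_injective hyy
                subst this
                exact hy
              · exact absurd (Set.mem_singleton_iff.mp hsing) (by simp)
          · constructor
            · intro h
              have h' := buildH_adj_inl_inr.mp h
              cases t
              · simp only [Bool.false_eq_true, if_false] at h'
                first
                  | exact Or.inr rfl
                  | (exfalso
                     rcases h' with h'' | h''
                     · rw [hm] at h''
                       first
                         | exact hil (N.hainj h'')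
                         | exact hil (N.hainj h'').symm
                     · rw [hm] at h''
                       first
                         | exact hjl (N.hainj h'')
                         | exact hjl (N.hainj h'').symm)
              · simp only [if_true] at h'
                first
                  | exact Or.inr rfl
                  | (exfalso
                     rcases h' with h'' | h''
                     · rw [hm] at h''
                       first
                         | exact hil (N.hainj h'')
                         | exact hil (N.hainj h'').symm
                     · rw [hm] at h''
                       first
                         | exact hjl (N.hainj h'')
                         | exact hjl (N.hainj h'').symm)
            · rintro (⟨y, hy, hyy⟩ | hsing)
              · exact absurd hyy (by simp)
              · have ht : t = false := Sum.inr_injective (Set.mem_singleton_iff.mp hsing)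
                subst ht
                apply buildH_adj_inl_inr.mpr
                first
                  | (simp only [if_true]
                     exact Or.inr hm)
                  | (simp only [Bool.false_eq_true, if_false]
                     exact Or.inr hm)
        rw [hset]
        have hdisj : Disjoint
            ((Sum.inl '' {y : {z : V // z ∈ D.A} | D.G'.Adj z.val y.val}) :
              Set ({z : V // z ∈ D.A} ⊕ Bool))
            {(Sum.inr false : {z : V // z ∈ D.A} ⊕ Bool)} := by
          rw [Set.disjoint_right]
          intro x hx
          rw [Set.mem_singleton_iff] at hx
          subst hx
          rintro ⟨y, hy, hyy⟩
          exact absurd hyy (by simp)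
        rw [Set.ncard_union_eq hdisj (Set.toFinite _) (Set.toFinite _), himg z,
          Set.ncard_singleton]
        rw [hm, nbr_boundary D N m]
    · push_neg at hzb
      have hset : HH.neighborSet (Sum.inl z) =
          Sum.inl '' {y : {z : V // z ∈ D.A} | D.G'.Adj z.val y.val} := by
        ext zz
        simp only [SimpleGraph.mem_neighborSet]
        rcases zz with aa | t
        · constructor
          · intro h
            exact ⟨aa, h, rfl⟩
          · rintro ⟨y, hy, hyy⟩
            have : y = aa := Sum.inl_injective hyy
            subst this
            exact hy
        · constructor
          · intro h
            exfalso
            have h' := buildH_adj_inl_inr.mp h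
            cases t
            · simp only [Bool.false_eq_true, if_false] at h'
              rcases h' with h'' | h''
              · exact hzb k h''
              · exact hzb l h''
            · simp only [if_true] at h'
              rcases h' with h'' | h''
              · exact hzb i h''
              · exact hzb j h''
          · rintro ⟨y, hy, hyy⟩
            exact absurd hyy (by simp)
      rw [hset, himg z]
      exact nbr_inner D N z.val z.2 hzb
  · cases t
    · have hset : HH.neighborSet (Sum.inr false) =
          {Sum.inr true, Sum.inl ⟨N.a k, N.ha k⟩, Sum.inl ⟨N.a l, N.ha l⟩} := by
        ext zz
        simp only [SimpleGraph.mem_neighborSet]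
        rcases zz with aa | t
        · constructor
          · intro h
            have h' := buildH_adj_inr_inl.mp h
            simp only [Bool.false_eq_true, if_false] at h'
            rcases h' with h'' | h''
            · exact Or.inr (Or.inl (congrArg Sum.inl (Subtype.ext h'')))
            · exact Or.inr (Or.inr (congrArg Sum.inl (Subtype.ext h'')))
          · rintro (h | h | h)
            · exact absurd h (by simp)
            · have haa : aa = ⟨N.a k, N.ha k⟩ := Sum.inl_injective h
              subst haa
              apply buildH_adj_inr_inl.mpr
              simp
            · have haa : aa = ⟨N.a l, N.ha l⟩ := Sum.inl_injective (Set.mem_singleton_iff.mp h)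
              subst haa
              apply buildH_adj_inr_inl.mpr
              simp
        · constructor
          · intro h
            have h' := buildH_adj_inr_inr.mp h
            cases t
            · exact absurd rfl h'
            · exact Or.inl rfl
          · rintro (h | h | h)
            · have ht : t = true := Sum.inr_injective h
              subst ht
              exact buildH_adj_inr_inr.mpr (by simp)
            · exact absurd h (by simp)
            · exact absurd (Set.mem_singleton_iff.mp h) (by simp)
      rw [hset]
      have h1 : (Sum.inr true : {z : V // z ∈ D.A} ⊕ Bool) ∉
          ({Sum.inl ⟨N.a k, N.ha k⟩, Sum.inl ⟨N.a l, N.ha l⟩} :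
            Set ({z : V // z ∈ D.A} ⊕ Bool)) := by
        rintro (h | h)
        · exact absurd h (by simp)
        · exact absurd (Set.mem_singleton_iff.mp h) (by simp)
      have h2 : (Sum.inl ⟨N.a k, N.ha k⟩ : {z : V // z ∈ D.A} ⊕ Bool) ∉
          ({Sum.inl ⟨N.a l, N.ha l⟩} : Set ({z : V // z ∈ D.A} ⊕ Bool)) := by
        intro h
        have hh := Sum.inl_injective (Set.mem_singleton_iff.mp h)
        exact hkl (N.hainj (congrArg Subtype.val hh))
      rw [Set.ncard_insert_of_notMem h1 (Set.toFinite _),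
        Set.ncard_insert_of_notMem h2 (Set.toFinite _), Set.ncard_singleton]
    · have hset : HH.neighborSet (Sum.inr true) =
          {Sum.inr false, Sum.inl ⟨N.a i, N.ha i⟩, Sum.inl ⟨N.a j, N.ha j⟩} := by
        ext zz
        simp only [SimpleGraph.mem_neighborSet]
        rcases zz with aa | t
        · constructor
          · intro h
            have h' := buildH_adj_inr_inl.mp h
            simp only [if_true] at h'
            rcases h' with h'' | h''
            · exact Or.inr (Or.inl (congrArg Sum.inl (Subtype.ext h'')))
            · exact Or.inr (Or.inr (congrArg Sum.inl (Subtype.ext h'')))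
          · rintro (h | h | h)
            · exact absurd h (by simp)
            · have haa : aa = ⟨N.a i, N.ha i⟩ := Sum.inl_injective h
              subst haa
              apply buildH_adj_inr_inl.mpr
              simp
            · have haa : aa = ⟨N.a j, N.ha j⟩ := Sum.inl_injective (Set.mem_singleton_iff.mp h)
              subst haa
              apply buildH_adj_inr_inl.mpr
              simp
        · constructor
          · intro h
            have h' := buildH_adj_inr_inr.mp h
            cases t
            · exact Or.inl rfl
            · exact absurd rfl h'
          · rintro (h | h | h)
            · have ht : t = false := Sum.inr_injective h
              subst ht
              exact buildH_adj_inr_inr.mpr (by simp)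
            · exact absurd h (by simp)
            · exact absurd (Set.mem_singleton_iff.mp h) (by simp)
      rw [hset]
      have h1 : (Sum.inr false : {z : V // z ∈ D.A} ⊕ Bool) ∉
          ({Sum.inl ⟨N.a i, N.ha i⟩, Sum.inl ⟨N.a j, N.ha j⟩} :
            Set ({z : V // z ∈ D.A} ⊕ Bool)) := by
        rintro (h | h)
        · exact absurd h (by simp)
        · exact absurd (Set.mem_singleton_iff.mp h) (by simp)
      have h2 : (Sum.inl ⟨N.a i, N.ha i⟩ : {z : V // z ∈ D.A} ⊕ Bool) ∉
          ({Sum.inl ⟨N.a j, N.ha j⟩} : Set ({z : V // z ∈ D.A} ⊕ Bool)) := by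
        intro h
        have hh := Sum.inl_injective (Set.mem_singleton_iff.mp h)
        exact hij (N.hainj (congrArg Subtype.val hh))
      rw [Set.ncard_insert_of_notMem h1 (Set.toFinite _),
        Set.ncard_insert_of_notMem h2 (Set.toFinite _), Set.ncard_singleton]

end Stmt15

namespace Stmt15

variable {V : Type} [Fintype V]

def extract {α : Type _} : ∀ (w : α ⊕ Bool), (w ≠ Sum.inr true ∧ w ≠ Sum.inr false) → α
  | Sum.inl a, _ => a
  | Sum.inr true, h => absurd rfl h.1
  | Sum.inr false, h => absurd rfl h.2

lemma buildH_iso (D : Setup V) (N : Enum D) (i j k l : Fin 4) :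
    Nonempty (((buildH D.G' D.A (N.a i) (N.a j) (N.a k) (N.a l)).induce
      {w : {z : V // z ∈ D.A} ⊕ Bool | w ≠ Sum.inr true ∧ w ≠ Sum.inr false}) ≃g
      (D.G'.induce D.A)) := by
  refine ⟨⟨⟨fun w => extract w.1 w.2, fun a => ⟨Sum.inl a,
    fun h => absurd h (by simp), fun h => absurd h (by simp)⟩, ?_, ?_⟩, ?_⟩⟩
  · rintro ⟨w, hw⟩
    rcases w with a | t
    · rfl
    · cases t
      · exact absurd rfl hw.2
      · exact absurd rfl hw.1
  · intro a
    rfl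
  · rintro ⟨w, hw⟩ ⟨w', hw'⟩
    rcases w with a | t
    · rcases w' with a' | t'
      · constructor
        · intro h
          exact h
        · intro h
          exact h
      · cases t'
        · exact absurd rfl hw'.2
        · exact absurd rfl hw'.1
    · cases t
      · exact absurd rfl hw.2
      · exact absurd rfl hw.1

lemma exists_good (D : Setup V) (N : Enum D) :
    ∃ i j k l : Fin 4, i ≠ j ∧ i ≠ k ∧ i ≠ l ∧ j ≠ k ∧ j ≠ l ∧ k ≠ l ∧
      CyclicallyEdgeConnected (buildH D.G' D.A (N.a i) (N.a j) (N.a k) (N.a l)) 4 := by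
  rcases Classical.em (CyclicallyEdgeConnected
      (buildH D.G' D.A (N.a 0) (N.a 1) (N.a 2) (N.a 3)) 4) with h1 | h1
  · exact ⟨0, 1, 2, 3, by decide, by decide, by decide, by decide, by decide, by decide, h1⟩
  rcases Classical.em (CyclicallyEdgeConnected
      (buildH D.G' D.A (N.a 0) (N.a 2) (N.a 1) (N.a 3)) 4) with h2 | h2
  · exact ⟨0, 2, 1, 3, by decide, by decide, by decide, by decide, by decide, by decide, h2⟩
  rcases Classical.em (CyclicallyEdgeConnected
      (buildH D.G' D.A (N.a 0) (N.a 3) (N.a 1) (N.a 2)) 4) with h3 | h3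
  · exact ⟨0, 3, 1, 2, by decide, by decide, by decide, by decide, by decide, by decide, h3⟩
  exfalso
  obtain ⟨T1, hc1, hs1⟩ := not_c4ec_elim h1
  obtain ⟨T2, hc2, hs2⟩ := not_c4ec_elim h2
  obtain ⟨T3, hc3, hs3⟩ := not_c4ec_elim h3
  obtain ⟨U1, hn1, R1a, R1b, R1c⟩ := extraction D N 0 1 2 3
    (by decide) (by decide) (by decide) (by decide) (by decide) (by decide) T1 hc1 hs1
  obtain ⟨U2, hn2, R2a, R2b, R2c⟩ := extraction D N 0 2 1 3
    (by decide) (by decide) (by decide) (by decide) (by decide) (by decide) T2 hc2 hs2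
  obtain ⟨U3, hn3, R3a, R3b, R3c⟩ := extraction D N 0 3 1 2
    (by decide) (by decide) (by decide) (by decide) (by decide) (by decide) T3 hc3 hs3
  exact threeBad hn1 hn2 R1a R1b R1c R2a R2b R2c R3a R3b R3c

lemma side (D : Setup V) :
    ∃ (W : Type) (_ : Fintype W) (H : SimpleGraph W) (x₁ x₂ : W),
      H.Adj x₁ x₂ ∧ H.Connected ∧ (∀ w, Nat.card (H.neighborSet w) = 3) ∧
      CyclicallyEdgeConnected H 4 ∧
      Nonempty ((H.induce {w : W | w ≠ x₁ ∧ w ≠ x₂}) ≃g (D.G'.induce D.A)) := by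
  obtain ⟨N⟩ := exists_enum D
  obtain ⟨i, j, k, l, hij, hik, hil, hjk, hjl, hkl, hc4⟩ := exists_good D N
  refine ⟨{z : V // z ∈ D.A} ⊕ Bool, Fintype.ofFinite _,
    buildH D.G' D.A (N.a i) (N.a j) (N.a k) (N.a l),
    Sum.inr true, Sum.inr false, ?_, ?_, ?_, hc4, ?_⟩
  · exact buildH_adj_inr_inr.mpr (by simp)
  · exact buildH_connected D N i j k l
  · exact buildH_cubic D N i j k l hij hik hil hjk hjl hkl
  · exact buildH_iso D N i j k l

end Stmt15

theorem stmt_15' {V : Type} [Fintype V] (G : SimpleGraph V)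
    (hconn : G.Connected) (hcubic : ∀ v, Nat.card (G.neighborSet v) = 3)
    (h4 : CyclicallyEdgeConnected G 4)
    (S : Set (Sym2 V)) (hS : CycleSeparating G S) (hcard : Nat.card S = 4) :
    ∀ c : (G.deleteEdges S).ConnectedComponent,
      ∃ (W : Type) (_ : Fintype W) (H : SimpleGraph W) (x₁ x₂ : W),
        H.Adj x₁ x₂ ∧ H.Connected ∧ (∀ w, Nat.card (H.neighborSet w) = 3) ∧
        CyclicallyEdgeConnected H 4 ∧
        Nonempty ((H.induce {w : W | w ≠ x₁ ∧ w ≠ x₂}) ≃g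
          ((G.deleteEdges S).induce c.supp)) := by
  intro c
  obtain ⟨hsub, u, v, p, q, hp, hq, hnr⟩ := hS
  have hScard : S.ncard = 4 := by
    rw [← Nat.card_coe_set_eq]
    exact hcard
  set D : Stmt15.Setup V :=
    ⟨G, S, u, v, p, q, hconn, hcubic, h4, hsub, hp, hq, hnr, hScard⟩ with hD
  induction c using SimpleGraph.ConnectedComponent.ind with
  | _ w =>
    have hcov := D.cover w
    rcases hcov with hw | hw
    · have hsupp : ((G.deleteEdges S).connectedComponentMk w).supp = D.A := by
        ext z
        rw [SimpleGraph.ConnectedComponent.mem_supp_iff, SimpleGraph.ConnectedComponent.eq]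
        constructor
        · intro h
          exact hw.trans h.symm
        · intro h
          exact h.symm.trans hw
      rw [hsupp]
      exact Stmt15.side D
    · have hsupp : ((G.deleteEdges S).connectedComponentMk w).supp = D.B := by
        ext z
        rw [SimpleGraph.ConnectedComponent.mem_supp_iff, SimpleGraph.ConnectedComponent.eq]
        constructor
        · intro h
          exact hw.trans h.symm
        · intro h
          exact h.symm.trans hw
      rw [hsupp]
      exact Stmt15.side D.mirror

/-- Let `G` be a cyclically 4-edge-connected cubic graph with a
cycle-separating 4-edge-cut `S`. Then each component of `G - S` can be extended to a
cyclically 4-edge-connected cubic graph by adding two adjacent vertices: there is a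
cyclically 4-edge-connected cubic graph `H` with adjacent vertices `x₁, x₂` such that
deleting `x₁` and `x₂` from `H` yields a graph isomorphic to the component. -/
theorem stmt_15 {V : Type} [Fintype V] (G : SimpleGraph V)
    (hconn : G.Connected) (hcubic : IsCubic G) (h4 : CyclicallyEdgeConnected G 4)
    (S : Set (Sym2 V)) (hS : CycleSeparating G S) (hcard : Nat.card S = 4) :
    ∀ c : (G.deleteEdges S).ConnectedComponent,
      ∃ (W : Type) (_ : Fintype W) (H : SimpleGraph W) (x₁ x₂ : W),
        H.Adj x₁ x₂ ∧ H.Connected ∧ IsCubic H ∧ CyclicallyEdgeConnected H 4 ∧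
        Nonempty ((H.induce {w : W | w ≠ x₁ ∧ w ≠ x₂}) ≃g
          ((G.deleteEdges S).induce c.supp)) :=
  stmt_15' G hconn hcubic h4 S hS hcard
end

section
/- Let G be a bridgeless cubic graph with a cycle-separating 4-edge-cut S whose removal leaves components G_1 and G_2. Suppose that for each i ∈ {1,2} there is an assignment of colours from a 3-element set to the edges of G having at least one endpoint in G_i (these are the edges of G_i together with the four edges of S) such that any two such edges sharing a vertex of G_i receive distinct colours. Then ω(G) ≤ 2, i.e., G has a 2-factor with at most two components having an odd number of vertices. -/
open SimpleGraph

/-- The set of edges of `G` having at least one endpoint in `A`. -/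
def touchingEdges {V : Type} (G : SimpleGraph V) (A : Set V) : Set (Sym2 V) :=
  {e | e ∈ G.edgeSet ∧ ∃ v ∈ A, v ∈ e}


open SimpleGraph Finset

attribute [local instance] Classical.propDecidable

namespace Stmt16Aux

/-- An involution without fixed points on a finset gives an even cardinality. -/
lemma even_card_invol {α : Type} [DecidableEq α] (s : Finset α) (f : α → α)
    (h1 : ∀ v ∈ s, f v ∈ s) (h2 : ∀ v ∈ s, f (f v) = v) (h3 : ∀ v ∈ s, f v ≠ v) :
    Even s.card := by
  classical
  revert h1 h2 h3
  induction s using Finset.strongInductionOn with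
  | _ s ih =>
    intro h1 h2 h3
    rcases s.eq_empty_or_nonempty with rfl | ⟨x, hx⟩
    · simp
    · have hfx := h1 x hx
      have hxne := h3 x hx
      set t := s \ {x, f x} with ht
      have htsub : t ⊆ s := Finset.sdiff_subset
      have hxt : x ∉ t := by simp [ht]
      have hts : t ⊂ s := Finset.ssubset_iff_of_subset htsub |>.mpr ⟨x, hx, hxt⟩
      have ht1 : ∀ v ∈ t, f v ∈ t := by
        intro v hv
        have hvs : v ∈ s := htsub hv
        have hvx : v ≠ x := by intro h; subst h; exact hxt hv
        have hvfx : v ≠ f x := by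
          intro h
          have : f v = f (f x) := by rw [h]
          rw [h2 x hx] at this
          have hm := Finset.mem_sdiff.mp hv
          exact hm.2 (by simp only [Finset.mem_insert, Finset.mem_singleton]; right; exact h)
        refine Finset.mem_sdiff.mpr ⟨h1 v hvs, ?_⟩
        simp only [Finset.mem_insert, Finset.mem_singleton]
        push_neg
        constructor
        · intro h
          apply hvfx
          have : f (f v) = f x := by rw [h]
          rwa [h2 v hvs] at this
        · intro h
          have : f (f v) = f (f x) := by rw [h]
          rw [h2 v hvs, h2 x hx] at this
          exact hvx this
      have ht2 : ∀ v ∈ t, f (f v) = v := fun v hv => h2 v (htsub hv)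
      have ht3 : ∀ v ∈ t, f v ≠ v := fun v hv => h3 v (htsub hv)
      have heven := ih t hts ht1 ht2 ht3
      have hcardsub : ({x, f x} : Finset α) ⊆ s := by
        intro y hy
        rcases Finset.mem_insert.mp hy with rfl | hy
        · exact hx
        · rw [Finset.mem_singleton.mp hy]; exact hfx
      have hpair : ({x, f x} : Finset α).card = 2 := by
        rw [Finset.card_insert_of_notMem (by simp [Ne.symm hxne]), Finset.card_singleton]
      have : t.card = s.card - 2 := by
        rw [ht, Finset.card_sdiff_of_subset hcardsub, hpair]
      have h2le : 2 ≤ s.card := by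
        calc 2 = ({x, f x} : Finset α).card := hpair.symm
        _ ≤ s.card := Finset.card_le_card hcardsub
      have : s.card = t.card + 2 := by omega
      rw [this]
      exact heven.add (Even.add_self 1)

lemma pair_cases {V : Type} {u w x y : V} (h : s(u, w) = s(x, y)) :
    (u = x ∧ w = y) ∨ (u = y ∧ w = x) := Sym2.eq_iff.mp h

/-- Bundled hypotheses for the proof of statement 16. -/
structure Setup (V : Type) [Fintype V] where
  G : SimpleGraph V
  S : Set (Sym2 V)
  χ : (G.deleteEdges S).ConnectedComponent → Sym2 V → Fin 3
  hcubic : ∀ v, Nat.card (G.neighborSet v) = 3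
  hSsub : S ⊆ G.edgeSet
  hScard : Nat.card S = 4
  hχ : ∀ (v w w' : V), G.Adj v w → G.Adj v w' → w ≠ w' →
    χ ((G.deleteEdges S).connectedComponentMk v) s(v, w) ≠
      χ ((G.deleteEdges S).connectedComponentMk v) s(v, w')

namespace Setup

variable {V : Type} [Fintype V] (X : Setup V)

/-- The type of components of `G - S`. -/
abbrev Comp := (X.G.deleteEdges X.S).ConnectedComponent

/-- The component of a vertex. -/
def comp (v : V) : X.Comp := (X.G.deleteEdges X.S).connectedComponentMk v

lemma comp_eq_of_adj {u w : V} (h : X.G.Adj u w) (hS : s(u, w) ∉ X.S) :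
    X.comp u = X.comp w :=
  SimpleGraph.ConnectedComponent.connectedComponentMk_eq_of_adj
    (by rw [SimpleGraph.deleteEdges_adj]; exact ⟨h, hS⟩)

lemma mem_S_of_cross {u w : V} (h : X.G.Adj u w) (hc : X.comp u ≠ X.comp w) :
    s(u, w) ∈ X.S := by
  by_contra hS
  exact hc (X.comp_eq_of_adj h hS)

lemma degree_eq (v : V) : X.G.degree v = 3 := by
  have := X.hcubic v
  rwa [Nat.card_eq_fintype_card, SimpleGraph.card_neighborSet_eq_degree] at this

lemma col_inj {v w w' : V} (h : X.G.Adj v w) (h' : X.G.Adj v w') (hne : w ≠ w') :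
    X.χ (X.comp v) s(v, w) ≠ X.χ (X.comp v) s(v, w') :=
  X.hχ v w w' h h' hne

lemma exists_unique_nb (v : V) (i : Fin 3) :
    ∃! w, X.G.Adj v w ∧ X.χ (X.comp v) s(v, w) = i := by
  classical
  have hcard : (X.G.neighborFinset v).card = 3 := X.degree_eq v
  set F : V → Fin 3 := fun w => X.χ (X.comp v) s(v, w) with hF
  have hinj : Set.InjOn F (X.G.neighborFinset v) := by
    intro w hw w' hw' hEq
    simp only [Finset.coe_sort_coe, Finset.mem_coe, SimpleGraph.mem_neighborFinset] at hw hw'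
    by_contra hne
    exact X.col_inj hw hw' hne hEq
  have himg : ((X.G.neighborFinset v).image F).card = 3 := by
    rw [Finset.card_image_of_injOn hinj, hcard]
  have huniv : (X.G.neighborFinset v).image F = Finset.univ := by
    apply Finset.eq_univ_of_card
    rw [himg]; rfl
  have : i ∈ (X.G.neighborFinset v).image F := by rw [huniv]; exact Finset.mem_univ i
  obtain ⟨w, hw, hwi⟩ := Finset.mem_image.mp this
  rw [SimpleGraph.mem_neighborFinset] at hw
  refine ⟨w, ⟨hw, hwi⟩, ?_⟩
  intro y ⟨hy, hyi⟩
  by_contra hne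
  exact X.col_inj hy hw hne (by rw [hyi]; exact hwi.symm)

/-- The unique neighbour of `v` along an edge of colour `i`. -/
noncomputable def nb (v : V) (i : Fin 3) : V := (X.exists_unique_nb v i).exists.choose

lemma nb_adj (v : V) (i : Fin 3) : X.G.Adj v (X.nb v i) :=
  (X.exists_unique_nb v i).exists.choose_spec.1

lemma nb_col (v : V) (i : Fin 3) : X.χ (X.comp v) s(v, X.nb v i) = i :=
  (X.exists_unique_nb v i).exists.choose_spec.2

lemma nb_eq (v : V) (i : Fin 3) {w : V} (h : X.G.Adj v w)
    (hc : X.χ (X.comp v) s(v, w) = i) : w = X.nb v i := by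
  obtain ⟨y, _, hy⟩ := X.exists_unique_nb v i
  rw [hy w ⟨h, hc⟩, hy (X.nb v i) ⟨X.nb_adj v i, X.nb_col v i⟩]

/-- `S` as a finset. -/
noncomputable def Sfin : Finset (Sym2 V) := Set.toFinset X.S

lemma Sfin_card : X.Sfin.card = 4 := by
  rw [Sfin, Set.toFinset_card, ← Nat.card_eq_fintype_card]
  exact X.hScard

lemma mem_Sfin {e : Sym2 V} : e ∈ X.Sfin ↔ e ∈ X.S := Set.mem_toFinset

/-- The boundary edges of a component `c`: edges of `S` with exactly one endpoint in `c`. -/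
noncomputable def Bd (c : X.Comp) : Finset (Sym2 V) :=
  X.Sfin.filter fun e => ∃ u w, e = s(u, w) ∧ X.G.Adj u w ∧ X.comp u = c ∧ X.comp w ≠ c

lemma mem_Bd {c : X.Comp} {e : Sym2 V} :
    e ∈ X.Bd c ↔ ∃ u w, e = s(u, w) ∧ X.G.Adj u w ∧ X.comp u = c ∧ X.comp w ≠ c := by
  constructor
  · intro h; exact (Finset.mem_filter.mp h).2
  · intro h
    refine Finset.mem_filter.mpr ⟨?_, h⟩
    obtain ⟨u, w, rfl, hadj, hu, hw⟩ := h
    exact X.mem_Sfin.mpr (X.mem_S_of_cross hadj (by rw [hu]; exact fun hh => hw hh.symm))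

lemma mem_Bd_of_adj {u w : V} (h : X.G.Adj u w) (hc : X.comp u ≠ X.comp w) :
    s(u, w) ∈ X.Bd (X.comp u) :=
  X.mem_Bd.mpr ⟨u, w, rfl, h, rfl, fun hh => hc hh.symm⟩

/-- Boundary edges of colour `i`. -/
noncomputable def Bdi (c : X.Comp) (i : Fin 3) : Finset (Sym2 V) :=
  (X.Bd c).filter fun e => X.χ c e = i

/-- The vertex set of a component as a finset. -/
noncomputable def suppF (c : X.Comp) : Finset V := Finset.univ.filter fun v => X.comp v = c

/-- An edge joining two distinct components. -/
lemma joins {c d : X.Comp} (hcd : c ≠ d) {e : Sym2 V} (hc : e ∈ X.Bd c) (hd : e ∈ X.Bd d) :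
    ∃ u w, e = s(u, w) ∧ X.G.Adj u w ∧ X.comp u = c ∧ X.comp w = d := by
  obtain ⟨u, w, rfl, hadj, hu, hw⟩ := X.mem_Bd.mp hc
  obtain ⟨u', w', he', hadj', hu', hw'⟩ := X.mem_Bd.mp hd
  rcases pair_cases he' with ⟨rfl, rfl⟩ | ⟨rfl, rfl⟩
  · rw [hu] at hu'; exact absurd hu' hcd
  · exact ⟨u, w, rfl, hadj, hu, hu'⟩

/-- The key parity lemma: the number of boundary edges of colour `i` of a component has
the same parity as the number of vertices of the component. -/
lemma parity (c : X.Comp) (i : Fin 3) :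
    (X.Bdi c i).card % 2 = (X.suppF c).card % 2 := by
  classical
  set A := X.suppF c with hA
  set g : V → Sym2 V := fun v => s(v, X.nb v i) with hg
  have hmem : ∀ v ∈ A, v ∈ A := fun v h => h
  have hcompA : ∀ v ∈ A, X.comp v = c := by
    intro v hv; exact (Finset.mem_filter.mp hv).2
  have hAmem : ∀ v, X.comp v = c → v ∈ A := by
    intro v hv; exact Finset.mem_filter.mpr ⟨Finset.mem_univ v, hv⟩
  set img := A.image g with himg
  have hcard : A.card = ∑ e ∈ img, (A.filter fun v => g v = e).card :=
    Finset.card_eq_sum_card_fiberwise fun v hv => Finset.mem_image_of_mem g hv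
  -- each fiber has card 1 (cross edge, in Bdi) or card 2 (internal edge, not in Bdi)
  have hfiber : ∀ e ∈ img, (A.filter fun v => g v = e).card
      = if e ∈ X.Bdi c i then 1 else 2 := by
    intro e he
    obtain ⟨v0, hv0A, hv0⟩ := Finset.mem_image.mp he
    set w0 := X.nb v0 i with hw0
    have hadj0 : X.G.Adj v0 w0 := X.nb_adj v0 i
    have hcol0 : X.χ (X.comp v0) s(v0, w0) = i := X.nb_col v0 i
    have hcv0 : X.comp v0 = c := hcompA v0 hv0A
    by_cases hcross : X.comp w0 = c
    · -- internal: fiber = {v0, w0}, e ∉ Bdi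
      have hnotB : e ∉ X.Bdi c i := by
        intro hB
        have hBd := (Finset.mem_filter.mp hB).1
        obtain ⟨u, w, he', hadj, hu, hw⟩ := X.mem_Bd.mp hBd
        rw [← hv0, hg] at he'
        rcases pair_cases he' with ⟨h1, h2⟩ | ⟨h1, h2⟩
        · exact hw (by rw [← h2]; exact hcross)
        · exact hw (by rw [← h1]; exact hcv0)
      rw [if_neg hnotB]
      have hnbw0 : X.nb w0 i = v0 := by
        symm
        apply X.nb_eq w0 i hadj0.symm
        rw [Sym2.eq_swap, hcross, ← hcv0]
        exact hcol0
      have hfe : A.filter (fun v => g v = e) = {v0, w0} := by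
        ext u
        simp only [Finset.mem_filter, Finset.mem_insert, Finset.mem_singleton]
        constructor
        · rintro ⟨huA, hue⟩
          rw [← hv0, hg] at hue
          rcases pair_cases hue with ⟨h1, _⟩ | ⟨h1, h2⟩
          · exact Or.inl h1
          · exact Or.inr (h1.trans hw0.symm)
        · rintro (rfl | rfl)
          · exact ⟨hv0A, hv0⟩
          · refine ⟨hAmem w0 hcross, ?_⟩
            rw [hg]
            show s(w0, X.nb w0 i) = e
            rw [hnbw0, Sym2.eq_swap, ← hv0]
        
      rw [hfe, Finset.card_insert_of_notMem (by simp [hadj0.ne]), Finset.card_singleton]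
    · -- cross: fiber = {v0}, e ∈ Bdi
      have hB : e ∈ X.Bdi c i := by
        refine Finset.mem_filter.mpr ⟨?_, ?_⟩
        · rw [← hv0]
          exact hcv0 ▸ X.mem_Bd_of_adj hadj0 (by rw [hcv0]; exact fun hh => hcross hh.symm)
        · rw [← hv0, hg, ← hcv0]; exact hcol0
      rw [if_pos hB]
      have hfe : A.filter (fun v => g v = e) = {v0} := by
        ext u
        simp only [Finset.mem_filter, Finset.mem_singleton]
        constructor
        · rintro ⟨huA, hue⟩
          rw [← hv0, hg] at hue
          rcases pair_cases hue with ⟨h1, _⟩ | ⟨h1, _⟩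
          · exact h1
          · exfalso
            apply hcross
            rw [hw0, ← h1]
            exact hcompA u huA
        · rintro rfl
          exact ⟨hv0A, hv0⟩
      rw [hfe, Finset.card_singleton]
  -- the Bdi edges are exactly the image edges in Bdi
  have himgB : img.filter (fun e => e ∈ X.Bdi c i) = X.Bdi c i := by
    ext e
    simp only [Finset.mem_filter]
    constructor
    · rintro ⟨_, h⟩; exact h
    · intro h
      refine ⟨?_, h⟩
      have hBd := (Finset.mem_filter.mp h).1
      have hcol := (Finset.mem_filter.mp h).2
      obtain ⟨u, w, rfl, hadj, hu, hw⟩ := X.mem_Bd.mp hBd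
      have huA : u ∈ A := hAmem u hu
      have hnbu : w = X.nb u i := X.nb_eq u i hadj (by rw [hu]; exact hcol)
      refine Finset.mem_image.mpr ⟨u, huA, ?_⟩
      show s(u, X.nb u i) = s(u, w)
      rw [← hnbu]
  have hsum : A.card = (X.Bdi c i).card + 2 * (img.filter (fun e => e ∉ X.Bdi c i)).card := by
    rw [hcard, Finset.sum_congr rfl hfiber, Finset.sum_ite, himgB]
    simp only [Finset.sum_const, smul_eq_mul, mul_one]
    ring
  omega

lemma Bd_card_split (c : X.Comp) :
    (X.Bd c).card = (X.Bdi c 0).card + (X.Bdi c 1).card + (X.Bdi c 2).card := by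
  classical
  have h : (X.Bd c).card = ∑ i : Fin 3, ((X.Bd c).filter fun e => X.χ c e = i).card :=
    Finset.card_eq_sum_card_fiberwise fun e _ => Finset.mem_univ _
  rw [h, Fin.sum_univ_three]
  rfl

lemma Bd_card_le (c : X.Comp) : (X.Bd c).card ≤ 4 := by
  calc (X.Bd c).card ≤ X.Sfin.card := Finset.card_le_card (Finset.filter_subset _ _)
  _ = 4 := X.Sfin_card

lemma Bd_parity (c : X.Comp) : (X.Bd c).card % 2 = (X.suppF c).card % 2 := by
  have h0 := X.parity c 0
  have h1 := X.parity c 1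
  have h2 := X.parity c 2
  have := X.Bd_card_split c
  omega

/-- The set of "bad" components: those whose boundary uses all three colours. -/
noncomputable def badSet : Finset X.Comp :=
  Finset.univ.filter fun c => ∀ i, (X.Bdi c i).Nonempty

lemma bad_card_one {c : X.Comp} (hc : c ∈ X.badSet) (i : Fin 3) : (X.Bdi c i).card = 1 := by
  have hne : ∀ j, 1 ≤ (X.Bdi c j).card := by
    intro j
    exact Finset.card_pos.mpr (((Finset.mem_filter.mp hc).2) j)
  have h0 := X.parity c 0
  have h1 := X.parity c 1
  have h2 := X.parity c 2
  have hs := X.Bd_card_split c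
  have hle := X.Bd_card_le c
  have e0 := hne 0
  have e1 := hne 1
  have e2 := hne 2
  have hpar := Nat.even_or_odd ((X.suppF c).card)
  have k0 : (X.Bdi c 0).card = 1 := by
    rcases hpar with hp | hp
    · rw [Nat.even_iff] at hp; omega
    · rw [Nat.odd_iff] at hp; omega
  have k1 : (X.Bdi c 1).card = 1 := by
    rcases hpar with hp | hp
    · rw [Nat.even_iff] at hp; omega
    · rw [Nat.odd_iff] at hp; omega
  have k2 : (X.Bdi c 2).card = 1 := by
    rcases hpar with hp | hp
    · rw [Nat.even_iff] at hp; omega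
    · rw [Nat.odd_iff] at hp; omega
  fin_cases i
  · exact k0
  · exact k1
  · exact k2

lemma bad_Bd_card {c : X.Comp} (hc : c ∈ X.badSet) : (X.Bd c).card = 3 := by
  rw [X.Bd_card_split c, X.bad_card_one hc 0, X.bad_card_one hc 1, X.bad_card_one hc 2]

lemma bad_inj {c : X.Comp} (hc : c ∈ X.badSet) {e f : Sym2 V}
    (he : e ∈ X.Bd c) (hf : f ∈ X.Bd c) (hcol : X.χ c e = X.χ c f) : e = f := by
  have h1 : e ∈ X.Bdi c (X.χ c f) := Finset.mem_filter.mpr ⟨he, hcol⟩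
  have h2 : f ∈ X.Bdi c (X.χ c f) := Finset.mem_filter.mpr ⟨hf, rfl⟩
  have := X.bad_card_one hc (X.χ c f)
  exact Finset.card_le_one.mp (le_of_eq this) e h1 f h2

lemma bad_iff_odd {c : X.Comp} : c ∈ X.badSet ↔ Odd (X.Bd c).card := by
  constructor
  · intro hc
    rw [X.bad_Bd_card hc]
    exact ⟨1, rfl⟩
  · intro hodd
    have h0 := X.parity c 0
    have h1 := X.parity c 1
    have h2 := X.parity c 2
    have hs := X.Bd_card_split c
    rw [Nat.odd_iff] at hodd
    refine Finset.mem_filter.mpr ⟨Finset.mem_univ _, fun i => Finset.card_pos.mp ?_⟩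
    have hi := X.parity c i
    omega

lemma even_card_V : Even (Fintype.card V) ∧ X.badSet = X.badSet := by
  classical
  refine ⟨?_, rfl⟩
  have h := SimpleGraph.sum_degrees_eq_twice_card_edges (G := X.G)
  have hdeg : ∀ v ∈ (Finset.univ : Finset V), X.G.degree v = 3 := fun v _ => X.degree_eq v
  rw [Finset.sum_congr rfl hdeg, Finset.sum_const, smul_eq_mul, mul_comm] at h
  simp only [Finset.card_univ] at h
  rw [Nat.even_iff]
  omega

lemma sum_supp : ∑ c : X.Comp, (X.suppF c).card = Fintype.card V := by
  classical
  rw [← Finset.card_univ]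
  simp only [suppF]
  exact (Finset.card_eq_sum_card_fiberwise (f := X.comp) (t := Finset.univ)
    (fun v _ => Finset.mem_univ _)).symm

lemma even_badSet : Even (X.badSet).card := by
  classical
  have hsum : Even (∑ c : X.Comp, (X.Bd c).card) := by
    have hmod : (∑ c : X.Comp, (X.Bd c).card) % 2
        = (∑ c : X.Comp, (X.suppF c).card) % 2 := by
      rw [Finset.sum_nat_mod, Finset.sum_congr rfl fun c _ => X.Bd_parity c,
        ← Finset.sum_nat_mod]
    rw [Nat.even_iff, hmod, ← Nat.even_iff, X.sum_supp]
    exact X.even_card_V.1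
  rw [Finset.even_sum_iff_even_card_odd] at hsum
  have : (Finset.univ.filter fun c : X.Comp => Odd (X.Bd c).card) = X.badSet := by
    ext c
    simp only [Finset.mem_filter, Finset.mem_univ, true_and]
    exact Iff.symm X.bad_iff_odd
  rwa [this] at hsum

lemma no_three {c d w : X.Comp} (hc : c ∈ X.badSet) (hd : d ∈ X.badSet) (hw : w ∈ X.badSet)
    (hcd : c ≠ d) (hcw : c ≠ w) (hdw : d ≠ w) : False := by
  classical
  have hint : ∀ {x y : X.Comp}, x ∈ X.badSet → y ∈ X.badSet → x ≠ y →
      2 ≤ ((X.Bd x) ∩ (X.Bd y)).card := by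
    intro x y hx hy hxy
    have hu : ((X.Bd x) ∪ (X.Bd y)) ⊆ X.Sfin :=
      Finset.union_subset (Finset.filter_subset _ _) (Finset.filter_subset _ _)
    have hcu : ((X.Bd x) ∪ (X.Bd y)).card ≤ 4 := by
      calc _ ≤ X.Sfin.card := Finset.card_le_card hu
      _ = 4 := X.Sfin_card
    have := Finset.card_union_add_card_inter (X.Bd x) (X.Bd y)
    rw [X.bad_Bd_card hx, X.bad_Bd_card hy] at this
    omega
  have h1 := hint hc hd hcd
  have h2 := hint hc hw hcw
  have hdisj : Disjoint ((X.Bd c) ∩ (X.Bd d)) ((X.Bd c) ∩ (X.Bd w)) := by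
    rw [Finset.disjoint_left]
    intro e he1 he2
    obtain ⟨u1, w1, he1', hadj1, hu1, hw1⟩ :=
      X.joins hcd (Finset.mem_inter.mp he1).1 (Finset.mem_inter.mp he1).2
    obtain ⟨u2, w2, he2', hadj2, hu2, hw2⟩ :=
      X.joins hcw (Finset.mem_inter.mp he2).1 (Finset.mem_inter.mp he2).2
    rw [he1'] at he2'
    rcases pair_cases he2' with ⟨ha2, hb2⟩ | ⟨ha2, hb2⟩
    · apply hdw; rw [← hw1, hb2]; exact hw2
    · apply hcw; rw [← hu1, ha2]; exact hw2
  have hsub : ((X.Bd c) ∩ (X.Bd d)) ∪ ((X.Bd c) ∩ (X.Bd w)) ⊆ X.Bd c :=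
    Finset.union_subset Finset.inter_subset_left Finset.inter_subset_left
  have hcard := Finset.card_union_of_disjoint hdisj
  have hle : ((X.Bd c) ∩ (X.Bd d) ∪ (X.Bd c) ∩ (X.Bd w)).card ≤ (X.Bd c).card :=
    Finset.card_le_card hsub
  have := X.bad_Bd_card hc
  omega

/-- A colour unused on the boundary of a good component. -/
noncomputable def goodColour (c : X.Comp) : Fin 3 :=
  if h : ∃ i, X.Bdi c i = ∅ then h.choose else 0

lemma goodColour_spec {c : X.Comp} (hc : c ∉ X.badSet) {e : Sym2 V} (he : e ∈ X.Bd c) :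
    X.χ c e ≠ X.goodColour c := by
  have hex : ∃ i, X.Bdi c i = ∅ := by
    simp only [badSet, Finset.mem_filter, Finset.mem_univ, true_and, not_forall] at hc
    obtain ⟨i, hi⟩ := hc
    exact ⟨i, Finset.not_nonempty_iff_eq_empty.mp hi⟩
  rw [goodColour, dif_pos hex]
  intro hcol
  have : e ∈ X.Bdi c hex.choose := Finset.mem_filter.mpr ⟨he, hcol⟩
  rw [hex.choose_spec] at this
  exact absurd this (Finset.notMem_empty e)

/-- The key existence result: a choice of "deleted colour" for each component which is
consistent across the cut edges. -/
lemma exists_consistent : ∃ a : X.Comp → Fin 3,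
    ∀ u w, X.G.Adj u w →
      (X.χ (X.comp u) s(u, w) = a (X.comp u) ↔ X.χ (X.comp w) s(u, w) = a (X.comp w)) := by
  classical
  -- first produce `a` together with a global "out" edge set description
  have main : ∃ (a : X.Comp → Fin 3) (E0 : Set (Sym2 V)),
      ∀ u w, X.G.Adj u w → X.comp u ≠ X.comp w →
        (X.χ (X.comp u) s(u, w) = a (X.comp u) ↔ s(u, w) ∈ E0) := by
    by_cases hT : X.badSet = ∅
    · refine ⟨X.goodColour, ∅, fun u w hadj hne => ?_⟩
      have hgood : X.comp u ∉ X.badSet := by rw [hT]; exact Finset.notMem_empty _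
      have hBd := X.mem_Bd_of_adj hadj hne
      simp only [Set.mem_empty_iff_false, iff_false]
      exact X.goodColour_spec hgood hBd
    · obtain ⟨c0, hc0⟩ := Finset.nonempty_iff_ne_empty.mpr hT
      have h2le : 2 ≤ X.badSet.card := by
        have heven := X.even_badSet
        have h1le : 1 ≤ X.badSet.card := Finset.card_pos.mpr ⟨c0, hc0⟩
        rw [Nat.even_iff] at heven
        omega
      obtain ⟨d0, hd0, hd0ne⟩ := Finset.exists_mem_ne (s := X.badSet) (by omega) c0
      have honly : ∀ x ∈ X.badSet, x = c0 ∨ x = d0 := by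
        intro x hx
        by_contra hcon
        push_neg at hcon
        exact X.no_three hx hc0 hd0 hcon.1 hcon.2 (Ne.symm hd0ne)
      -- a common boundary edge
      have hint : 2 ≤ ((X.Bd c0) ∩ (X.Bd d0)).card := by
        have hu : ((X.Bd c0) ∪ (X.Bd d0)) ⊆ X.Sfin :=
          Finset.union_subset (Finset.filter_subset _ _) (Finset.filter_subset _ _)
        have hcu : ((X.Bd c0) ∪ (X.Bd d0)).card ≤ 4 := by
          calc _ ≤ X.Sfin.card := Finset.card_le_card hu
          _ = 4 := X.Sfin_card
        have := Finset.card_union_add_card_inter (X.Bd c0) (X.Bd d0)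
        rw [X.bad_Bd_card hc0, X.bad_Bd_card hd0] at this
        omega
      obtain ⟨estar, hestar⟩ := Finset.card_pos.mp (by omega : 0 < ((X.Bd c0) ∩ (X.Bd d0)).card)
      have hec0 : estar ∈ X.Bd c0 := (Finset.mem_inter.mp hestar).1
      have hed0 : estar ∈ X.Bd d0 := (Finset.mem_inter.mp hestar).2
      obtain ⟨ustar, wstar, hestareq, hadjstar, hustar, hwstar⟩ :=
        X.joins (Ne.symm hd0ne) hec0 hed0
      classical
      set a : X.Comp → Fin 3 := fun c =>
        if c = c0 then X.χ c0 estar else if c = d0 then X.χ d0 estar else X.goodColour c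
        with ha
      have hac0 : a c0 = X.χ c0 estar := by simp [ha]
      have had0 : a d0 = X.χ d0 estar := by simp [ha, hd0ne]
      have haother : ∀ c, c ≠ c0 → c ≠ d0 → a c = X.goodColour c := by
        intro c h1 h2; simp [ha, h1, h2]
      refine ⟨a, {estar}, fun u w hadj hne => ?_⟩
      have hBd : s(u, w) ∈ X.Bd (X.comp u) := X.mem_Bd_of_adj hadj hne
      simp only [Set.mem_singleton_iff]
      by_cases huc : X.comp u = c0
      · rw [huc] at hBd ⊢
        rw [hac0]
        constructor
        · intro h; exact X.bad_inj hc0 hBd hec0 h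
        · intro h; rw [h]
      · by_cases hud : X.comp u = d0
        · rw [hud] at hBd ⊢
          rw [had0]
          constructor
          · intro h; exact X.bad_inj hd0 hBd hed0 h
          · intro h; rw [h]
        · have hgood : X.comp u ∉ X.badSet := by
            intro hmem
            rcases honly _ hmem with h | h
            · exact huc h
            · exact hud h
          rw [haother _ huc hud]
          constructor
          · intro h; exact absurd h (X.goodColour_spec hgood hBd)
          · intro h
            exfalso
            rw [hestareq] at h
            rcases pair_cases h with ⟨ha1, _⟩ | ⟨ha1, _⟩
            · exact huc (by rw [ha1]; exact hustar)
            · exact hud (by rw [ha1]; exact hwstar)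
  obtain ⟨a, E0, hmain⟩ := main
  refine ⟨a, fun u w hadj => ?_⟩
  by_cases hcc : X.comp u = X.comp w
  · rw [hcc]
  · rw [hmain u w hadj hcc, Sym2.eq_swap]
    exact (hmain w u hadj.symm (Ne.symm hcc)).symm

/-- The candidate 2-factor: delete at each vertex the edge whose colour is the chosen
colour of its component. -/
noncomputable def Hgr (a : X.Comp → Fin 3) : SimpleGraph V where
  Adj v w := X.G.Adj v w ∧ X.χ (X.comp v) s(v, w) ≠ a (X.comp v) ∧
    X.χ (X.comp w) s(v, w) ≠ a (X.comp w)
  symm := by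
    constructor
    rintro v w ⟨h1, h2, h3⟩
    refine ⟨h1.symm, ?_, ?_⟩ <;> rw [Sym2.eq_swap]
    · exact h3
    · exact h2
  loopless := ⟨fun v h => X.G.loopless.irrefl v h.1⟩

lemma Hgr_le (a : X.Comp → Fin 3) : X.Hgr a ≤ X.G := by
  intro v w h
  exact h.1

lemma Hgr_adj_iff (a : X.Comp → Fin 3)
    (hcons : ∀ u w, X.G.Adj u w →
      (X.χ (X.comp u) s(u, w) = a (X.comp u) ↔ X.χ (X.comp w) s(u, w) = a (X.comp w)))
    {v w : V} :
    (X.Hgr a).Adj v w ↔ X.G.Adj v w ∧ X.χ (X.comp v) s(v, w) ≠ a (X.comp v) := by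
  constructor
  · rintro ⟨h1, h2, _⟩; exact ⟨h1, h2⟩
  · rintro ⟨h1, h2⟩
    exact ⟨h1, h2, fun hh => h2 ((hcons v w h1).mpr hh)⟩

lemma Hgr_nbhd (a : X.Comp → Fin 3)
    (hcons : ∀ u w, X.G.Adj u w →
      (X.χ (X.comp u) s(u, w) = a (X.comp u) ↔ X.χ (X.comp w) s(u, w) = a (X.comp w)))
    (v : V) :
    (X.Hgr a).neighborSet v = X.G.neighborSet v \ {X.nb v (a (X.comp v))} := by
  ext w
  simp only [SimpleGraph.mem_neighborSet, Set.mem_diff, Set.mem_singleton_iff]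
  rw [X.Hgr_adj_iff a hcons]
  constructor
  · rintro ⟨h1, h2⟩
    refine ⟨h1, fun hw => h2 ?_⟩
    rw [hw]
    exact X.nb_col v (a (X.comp v))
  · rintro ⟨h1, h2⟩
    exact ⟨h1, fun hcol => h2 (X.nb_eq v (a (X.comp v)) h1 hcol)⟩

lemma Hgr_card (a : X.Comp → Fin 3)
    (hcons : ∀ u w, X.G.Adj u w →
      (X.χ (X.comp u) s(u, w) = a (X.comp u) ↔ X.χ (X.comp w) s(u, w) = a (X.comp w)))
    (v : V) : Nat.card ((X.Hgr a).neighborSet v) = 2 := by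
  have hmem : X.nb v (a (X.comp v)) ∈ X.G.neighborSet v := X.nb_adj v _
  have h3 : (X.G.neighborSet v).ncard = 3 := by
    rw [← Nat.card_coe_set_eq]; exact X.hcubic v
  rw [X.Hgr_nbhd a hcons v, Nat.card_coe_set_eq]
  rw [Set.ncard_diff_singleton_of_mem hmem, h3]

/-- Cross edges of `S` leaving component `c` with colour `p` and both endpoints in the
`H`-component `C`. -/
noncomputable def XE (a : X.Comp → Fin 3) (C : (X.Hgr a).ConnectedComponent)
    (c : X.Comp) (p : Fin 3) : Finset (Sym2 V) :=
  X.Sfin.filter fun e => ∃ u w, e = s(u, w) ∧ X.G.Adj u w ∧ X.comp u = c ∧ X.comp w ≠ c ∧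
    X.χ c e = p ∧ u ∈ C.supp ∧ w ∈ C.supp

lemma cross_parity (a : X.Comp → Fin 3)
    (hcons : ∀ u w, X.G.Adj u w →
      (X.χ (X.comp u) s(u, w) = a (X.comp u) ↔ X.χ (X.comp w) s(u, w) = a (X.comp w)))
    (C : (X.Hgr a).ConnectedComponent) (c : X.Comp) (p : Fin 3) (hp : p ≠ a c) :
    (C.supp.toFinset.filter fun v => X.comp v = c).card % 2 = (X.XE a C c p).card % 2 := by
  classical
  set A := C.supp.toFinset.filter fun v => X.comp v = c with hA
  have hAc : ∀ v ∈ A, X.comp v = c := fun v hv => (Finset.mem_filter.mp hv).2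
  have hAC : ∀ v ∈ A, v ∈ C.supp := fun v hv => Set.mem_toFinset.mp (Finset.mem_filter.mp hv).1
  have hAmem : ∀ v, v ∈ C.supp → X.comp v = c → v ∈ A := fun v h1 h2 =>
    Finset.mem_filter.mpr ⟨Set.mem_toFinset.mpr h1, h2⟩
  set m : V → V := fun v => X.nb v p with hm
  have hmH : ∀ v, X.comp v = c → (X.Hgr a).Adj v (m v) := by
    intro v hv
    have hadj := X.nb_adj v p
    have hvp : X.χ (X.comp v) s(v, m v) ≠ a (X.comp v) := by
      rw [X.nb_col v p, hv]
      exact hp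
    exact ⟨hadj, hvp, fun hh => hvp ((hcons v (m v) hadj).mpr hh)⟩
  have hmC : ∀ v ∈ A, (m v) ∈ C.supp := by
    intro v hv
    have h2 := SimpleGraph.ConnectedComponent.connectedComponentMk_eq_of_adj (hmH v (hAc v hv))
    have h3 := (SimpleGraph.ConnectedComponent.mem_supp_iff C v).mp (hAC v hv)
    exact (SimpleGraph.ConnectedComponent.mem_supp_iff C (m v)).mpr (h2.symm.trans h3)
  have hminv : ∀ v, X.comp v = c → X.comp (m v) = c → m (m v) = v := by
    intro v hv hmv
    have hcol : X.χ (X.comp (m v)) s(m v, v) = p := by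
      rw [Sym2.eq_swap, hmv, ← hv]
      exact X.nb_col v p
    exact (X.nb_eq (m v) p (X.nb_adj v p).symm hcol).symm
  set A0 := A.filter (fun v => X.comp (m v) = c) with hA0
  set A1 := A.filter (fun v => ¬ X.comp (m v) = c) with hA1
  have hsplit : A0.card + A1.card = A.card :=
    Finset.card_filter_add_card_filter_not _
  have hev : Even A0.card := by
    apply even_card_invol A0 m
    · intro v hv
      obtain ⟨hvA, hvm⟩ := Finset.mem_filter.mp hv
      refine Finset.mem_filter.mpr ⟨hAmem (m v) (hmC v hvA) hvm, ?_⟩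
      rw [hminv v (hAc v hvA) hvm]
      exact hAc v hvA
    · intro v hv
      obtain ⟨hvA, hvm⟩ := Finset.mem_filter.mp hv
      exact hminv v (hAc v hvA) hvm
    · intro v hv
      exact (X.nb_adj v p).ne'
  have hbij : A1.card = (X.XE a C c p).card := by
    apply Finset.card_bij (fun v _ => s(v, m v))
    · intro v hv
      obtain ⟨hvA, hvm⟩ := Finset.mem_filter.mp hv
      refine Finset.mem_filter.mpr ⟨?_, v, m v, rfl, X.nb_adj v p, hAc v hvA, hvm, ?_,
        hAC v hvA, hmC v hvA⟩
      · exact X.mem_Sfin.mpr (X.mem_S_of_cross (X.nb_adj v p)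
          (by rw [hAc v hvA]; exact fun hh => hvm hh.symm))
      · rw [← hAc v hvA]
        exact X.nb_col v p
    · intro v hv v' hv' heq
      obtain ⟨hvA, hvm⟩ := Finset.mem_filter.mp hv
      obtain ⟨hvA', hvm'⟩ := Finset.mem_filter.mp hv'
      rcases pair_cases heq with ⟨h1, _⟩ | ⟨h1, _⟩
      · exact h1
      · exfalso
        apply hvm'
        rw [← h1]
        exact hAc v hvA
    · intro e he
      obtain ⟨heS, u, w, rfl, hadj, hu, hw, hcol, huC, hwC⟩ := Finset.mem_filter.mp he
      have hmu : m u = w := (X.nb_eq u p hadj (by rw [hu]; exact hcol)).symm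
      refine ⟨u, Finset.mem_filter.mpr ⟨hAmem u huC hu, by rw [hmu]; exact hw⟩, by rw [hmu]⟩
  rw [Nat.even_iff] at hev
  omega

lemma exists_odd_fiber (a : X.Comp → Fin 3) (C : (X.Hgr a).ConnectedComponent)
    (hodd : Odd (Nat.card C.supp)) :
    ∃ c : X.Comp, Odd ((C.supp.toFinset.filter fun v => X.comp v = c).card) := by
  classical
  have hcount : C.supp.toFinset.card
      = ∑ c : X.Comp, (C.supp.toFinset.filter fun v => X.comp v = c).card :=
    Finset.card_eq_sum_card_fiberwise fun v _ => Finset.mem_univ _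
  have hN : Nat.card C.supp = C.supp.toFinset.card := by
    rw [Nat.card_eq_fintype_card, Set.toFinset_card]
  rw [hN, hcount] at hodd
  by_contra hcon
  push_neg at hcon
  simp only [Nat.not_odd_iff_even] at hcon
  exact (Nat.not_even_iff_odd.mpr hodd) (Finset.even_sum _ fun c _ => hcon c)

lemma fin2_cases : ∀ i j : Fin 2, i ≠ j → (i = 0 ∧ j = 1) ∨ (i = 1 ∧ j = 0) := by decide

lemma fin3_facts : ∀ x : Fin 3, x + 1 ≠ x ∧ x + 2 ≠ x ∧ x + 1 ≠ x + 2 := by decide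

/-- The main construction: a 2-regular spanning subgraph with at most two odd components. -/
lemma main : ∃ H : SimpleGraph V,
    (H ≤ X.G ∧ ∀ v, Nat.card (H.neighborSet v) = 2) ∧
    Nat.card {C : H.ConnectedComponent // Odd (Nat.card C.supp)} ≤ 2 := by
  classical
  obtain ⟨a, hcons⟩ := X.exists_consistent
  refine ⟨X.Hgr a, ⟨X.Hgr_le a, fun v => X.Hgr_card a hcons v⟩, ?_⟩
  set OddT := {C : (X.Hgr a).ConnectedComponent // Odd (Nat.card C.supp)} with hOddT
  -- for every odd component there are two distinct S-edges with both endpoints inside it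
  have hpair : ∀ C : OddT, ∃ e f : Sym2 V, e ∈ X.S ∧ f ∈ X.S ∧ e ≠ f ∧
      (∃ u w, e = s(u, w) ∧ u ∈ (C : (X.Hgr a).ConnectedComponent).supp ∧
        w ∈ (C : (X.Hgr a).ConnectedComponent).supp) ∧
      (∃ u w, f = s(u, w) ∧ u ∈ (C : (X.Hgr a).ConnectedComponent).supp ∧
        w ∈ (C : (X.Hgr a).ConnectedComponent).supp) := by
    rintro ⟨C, hC⟩
    obtain ⟨c, hc⟩ := X.exists_odd_fiber a C hC
    have hf3 := fin3_facts (a c)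
    have hp1 := X.cross_parity a hcons C c (a c + 1) hf3.1
    have hp2 := X.cross_parity a hcons C c (a c + 2) hf3.2.1
    rw [Nat.odd_iff] at hc
    have hne1 : (X.XE a C c (a c + 1)).Nonempty := by
      rw [← Finset.card_pos]
      omega
    have hne2 : (X.XE a C c (a c + 2)).Nonempty := by
      rw [← Finset.card_pos]
      omega
    obtain ⟨e1, he1⟩ := hne1
    obtain ⟨e2, he2⟩ := hne2
    obtain ⟨he1S, u1, w1, he1eq, _, _, _, hcol1, hu1C, hw1C⟩ := Finset.mem_filter.mp he1
    obtain ⟨he2S, u2, w2, he2eq, _, _, _, hcol2, hu2C, hw2C⟩ := Finset.mem_filter.mp he2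
    refine ⟨e1, e2, X.mem_Sfin.mp he1S, X.mem_Sfin.mp he2S, ?_, ⟨u1, w1, he1eq, hu1C, hw1C⟩,
      ⟨u2, w2, he2eq, hu2C, hw2C⟩⟩
    intro hEq
    rw [hEq, hcol2] at hcol1
    exact hf3.2.2 hcol1.symm
  choose F1 F2 hF1S hF2S hFne hF1C hF2C using hpair
  set Φ : OddT × Fin 2 → ↥X.S := fun z => if z.2 = 0 then ⟨F1 z.1, hF1S z.1⟩
    else ⟨F2 z.1, hF2S z.1⟩ with hΦ
  -- an S-edge contained in a component determines the component
  have hdet : ∀ (C D : (X.Hgr a).ConnectedComponent) (e : Sym2 V),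
      (∃ u w, e = s(u, w) ∧ u ∈ C.supp ∧ w ∈ C.supp) →
      (∃ u w, e = s(u, w) ∧ u ∈ D.supp ∧ w ∈ D.supp) → C = D := by
    rintro C D e ⟨u, w, rfl, huC, hwC⟩ ⟨u', w', heq, huD, hwD⟩
    rcases pair_cases heq with ⟨h1, h2⟩ | ⟨h1, h2⟩
    · rw [← h1] at huD
      rw [← (SimpleGraph.ConnectedComponent.mem_supp_iff C u).mp huC]
      rw [← (SimpleGraph.ConnectedComponent.mem_supp_iff D u).mp huD]
    · rw [← h2] at huD
      rw [← (SimpleGraph.ConnectedComponent.mem_supp_iff C w).mp hwC]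
      rw [← (SimpleGraph.ConnectedComponent.mem_supp_iff D w).mp huD]
  have hinC : ∀ (z : OddT × Fin 2), ∃ u w, (Φ z : Sym2 V) = s(u, w) ∧
      u ∈ (z.1 : (X.Hgr a).ConnectedComponent).supp ∧
      w ∈ (z.1 : (X.Hgr a).ConnectedComponent).supp := by
    rintro ⟨C, i⟩
    by_cases hi : i = 0
    · simp only [hΦ, hi, if_pos rfl]
      exact hF1C C
    · simp only [hΦ, if_neg hi]
      exact hF2C C
  have hv0 : ∀ C : OddT, (Φ (C, 0) : Sym2 V) = F1 C := by
    intro C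
    simp [hΦ]
  have hv1 : ∀ C : OddT, (Φ (C, 1) : Sym2 V) = F2 C := by
    intro C
    simp only [hΦ]
    rw [if_neg (by decide : (1 : Fin 2) ≠ 0)]
  have hinj : Function.Injective Φ := by
    rintro ⟨C, i⟩ ⟨D, j⟩ heq
    have heq' : (Φ (C, i) : Sym2 V) = (Φ (D, j) : Sym2 V) := by rw [heq]
    have hCD : (C : (X.Hgr a).ConnectedComponent) = (D : (X.Hgr a).ConnectedComponent) := by
      apply hdet _ _ (Φ (C, i) : Sym2 V) (hinC (C, i))
      rw [heq']
      exact hinC (D, j)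
    have hCDsub : C = D := Subtype.ext hCD
    subst hCDsub
    by_cases hij : i = j
    · rw [hij]
    · exfalso
      rcases fin2_cases i j hij with ⟨hi, hj⟩ | ⟨hi, hj⟩
      · subst hi; subst hj
        rw [hv0 C, hv1 C] at heq'
        exact hFne C heq'
      · subst hi; subst hj
        rw [hv1 C, hv0 C] at heq'
        exact hFne C heq'.symm
  have hfinS : Finite ↥X.S := Subtype.finite
  have hle := Nat.card_le_card_of_injective Φ hinj
  have hprod : Nat.card (OddT × Fin 2) = Nat.card OddT * 2 := by
    rw [Nat.card_prod]
    congr 1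
    rw [Nat.card_eq_fintype_card, Fintype.card_fin]
  rw [hprod, X.hScard] at hle
  omega

end Setup

end Stmt16Aux

/-- Let `G` be a bridgeless cubic graph with a cycle-separating 4-edge-cut
`S`. If for each component of `G - S` the edges of `G` having at least one endpoint in the
component can be coloured with 3 colours so that any two of them sharing a vertex of the
component get distinct colours, then `G` has a 2-factor with at most two odd components,
i.e. `ω(G) ≤ 2`. -/
theorem stmt_16 {V : Type} [Fintype V] (G : SimpleGraph V)
    (hbridgeless : Bridgeless G) (hcubic : IsCubic G)
    (S : Set (Sym2 V)) (hS : CycleSeparating G S) (hcard : Nat.card S = 4)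
    (hcol : ∀ c : (G.deleteEdges S).ConnectedComponent,
      ∃ ch : Sym2 V → Fin 3, ∀ e ∈ touchingEdges G c.supp, ∀ f ∈ touchingEdges G c.supp,
        e ≠ f → (∃ v ∈ c.supp, v ∈ e ∧ v ∈ f) → ch e ≠ ch f) :
    oddness G ≤ 2 ∧
      ∃ H : SimpleGraph V, IsTwoFactor G H ∧ _root_.oddComponents H ≤ 2 := by
  classical
  obtain ⟨hSsub, -⟩ := hS
  choose χ hχspec using hcol
  have hχ : ∀ (v w w' : V), G.Adj v w → G.Adj v w' → w ≠ w' →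
      χ ((G.deleteEdges S).connectedComponentMk v) s(v, w) ≠
        χ ((G.deleteEdges S).connectedComponentMk v) s(v, w') := by
    intro v w w' hvw hvw' hne
    set c := (G.deleteEdges S).connectedComponentMk v with hc
    have hvsupp : v ∈ c.supp := (SimpleGraph.ConnectedComponent.mem_supp_iff c v).mpr rfl
    have hmem1 : s(v, w) ∈ touchingEdges G c.supp :=
      ⟨(G.mem_edgeSet).mpr hvw, v, hvsupp, Sym2.mem_iff.mpr (Or.inl rfl)⟩
    have hmem2 : s(v, w') ∈ touchingEdges G c.supp :=
      ⟨(G.mem_edgeSet).mpr hvw', v, hvsupp, Sym2.mem_iff.mpr (Or.inl rfl)⟩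
    have hneq : s(v, w) ≠ s(v, w') := by
      intro h
      rcases Stmt16Aux.pair_cases h with ⟨-, h2⟩ | ⟨h1, h2⟩
      · exact hne h2
      · exact hvw.ne' h2
    exact hχspec c _ hmem1 _ hmem2 hneq
      ⟨v, hvsupp, Sym2.mem_iff.mpr (Or.inl rfl), Sym2.mem_iff.mpr (Or.inl rfl)⟩
  set X : Stmt16Aux.Setup V := ⟨G, S, χ, hcubic, hSsub, hcard, hχ⟩ with hX
  obtain ⟨H, ⟨hle, hdeg⟩, hodd⟩ := X.main
  have hTF : IsTwoFactor G H := ⟨hle, hdeg⟩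
  have hoc : _root_.oddComponents H ≤ 2 := hodd
  refine ⟨?_, H, hTF, hoc⟩
  calc oddness G ≤ _root_.oddComponents H := Nat.sInf_le ⟨H, hTF, rfl⟩
  _ ≤ 2 := hoc
end
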